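/- arXiv:2401.05316 — 8 statements merged into one kernel-verified Lean document; each statement's English description precedes it below -/
import Mathlib

section
/- The degree-10 real polynomial (X+c2)·(X+c3)·(X+c4)·(X+C2)·(X+C3)·(X+C4)·(X^2 + (A1+C1+C0−A0)·X − C1·(A0−C0))·(X^2 + (a1+c1+c0−a0)·X − c1·(a0−c0)) — the characteristic polynomial of the Jacobian of system (3) at the trivial steady state Ẽ0 = (0,0,0,0,0,0,0,0,0,0) — has a strictly positive real root; in particular Ẽ0 is linearly unstable. -/
/-! The last quadratic factor has constant term `-c1 (a0 - c0) < 0`, so its two real roots have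
negative product and one of them is positive. -/

theorem exists_pos_root_sq_add_mul_sub (p q : ℝ) (hq : 0 < q) :
    ∃ x : ℝ, 0 < x ∧ x ^ 2 + p * x - q = 0 := by
  set s := Real.sqrt (p ^ 2 + 4 * q)
  have hs_sq : s ^ 2 = p ^ 2 + 4 * q := Real.sq_sqrt (by positivity)
  have hp_lt : p < s := by nlinarith [Real.sqrt_nonneg (p ^ 2 + 4 * q)]
  exact ⟨(s - p) / 2, by linarith, by linear_combination hs_sq / 4⟩

theorem stmt0_general (a0 a1 c0 c1 c2 c3 c4 A0 A1 C0 C1 C2 C3 C4 : ℝ)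
    (hc1 : 0 < c1)
    (hac : c0 < a0) :
    ∃ x : ℝ, 0 < x ∧
      (x + c2) * (x + c3) * (x + c4) * (x + C2) * (x + C3) * (x + C4) *
        (x ^ 2 + (A1 + C1 + C0 - A0) * x - C1 * (A0 - C0)) *
        (x ^ 2 + (a1 + c1 + c0 - a0) * x - c1 * (a0 - c0)) = 0 := by
  obtain ⟨x, hx_pos, hx_root⟩ :=
    exists_pos_root_sq_add_mul_sub (a1 + c1 + c0 - a0) (c1 * (a0 - c0)) (mul_pos hc1 (sub_pos.mpr hac))
  exact ⟨x, hx_pos, by rw [hx_root, mul_zero]⟩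

/-- The characteristic polynomial of the Jacobian of system (3) at the trivial
steady state `Ẽ0` has a strictly positive real root; in particular `Ẽ0` is
linearly unstable. -/
theorem stmt0 (a0 a1 a2 a3 a4 c0 c1 c2 c3 c4 A0 A1 A2 A3 A4 C0 C1 C2 C3 C4 b1 b2 B d D : ℝ)
    (ha0 : 0 < a0) (ha1 : 0 < a1) (ha2 : 0 < a2) (ha3 : 0 < a3) (ha4 : 0 < a4)
    (hc0 : 0 < c0) (hc1 : 0 < c1) (hc2 : 0 < c2) (hc3 : 0 < c3) (hc4 : 0 < c4)
    (hA0 : 0 < A0) (hA1 : 0 < A1) (hA2 : 0 < A2) (hA3 : 0 < A3) (hA4 : 0 < A4)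
    (hC0 : 0 < C0) (hC1 : 0 < C1) (hC2 : 0 < C2) (hC3 : 0 < C3) (hC4 : 0 < C4)
    (hb1 : 0 < b1) (hb2 : 0 < b2) (hB : 0 < B)
    (hac : c0 < a0) (hAC : C0 < A0)
    (hd : d = (a0 - c0) / (b1 * c0)) (hD : D = (A0 - C0) / (B * C0)) :
    ∃ x : ℝ, 0 < x ∧
      (x + c2) * (x + c3) * (x + c4) * (x + C2) * (x + C3) * (x + C4) *
        (x ^ 2 + (A1 + C1 + C0 - A0) * x - C1 * (A0 - C0)) *
        (x ^ 2 + (a1 + c1 + c0 - a0) * x - c1 * (a0 - c0)) = 0 :=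
  stmt0_general a0 a1 c0 c1 c2 c3 c4 A0 A1 C0 C1 C2 C3 C4 hc1 hac
end

section
/- Assume in addition b1 > b2 and set x* = (b2/(b1−b2))·((b1/b2)·d − D) and y* = (b1/(b1−b2))·(D−d). Then the point Ẽ3 = (x*, x*·a1/c1, x*·a2/c2, x*·a2·a3/(c2·c3), x*·a2·a3·a4/(c2·c3·c4), y*, y*·A1/C1, y*·A2/C2, y*·A2·A3/(C2·C3), y*·A2·A3·A4/(C2·C3·C4)) is a steady state of system (3), i.e. F(Ẽ3) = 0. -/
/-- The vector field of system (3). Coordinates: `p 0,…,p 4` are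
`x0,…,x4` and `p 5,…,p 9` are `y0,…,y4`. -/
noncomputable def F (a0 a1 a2 a3 a4 c0 c1 c2 c3 c4 A0 A1 A2 A3 A4 C0 C1 C2 C3 C4 b1 b2 B : ℝ)
    (p : Fin 10 → ℝ) : Fin 10 → ℝ :=
  ![(a0 / (1 + b1 * p 0 + b2 * p 5) - a1 - c0) * p 0 + c1 * p 1,
    a1 * p 0 - c1 * p 1,
    a2 * p 0 - c2 * p 2,
    a3 * p 2 - c3 * p 3,
    a4 * p 3 - c4 * p 4,
    (A0 / (1 + B * (p 0 + p 5)) - A1 - C0) * p 5 + C1 * p 6,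
    A1 * p 5 - C1 * p 6,
    A2 * p 5 - C2 * p 7,
    A3 * p 7 - C3 * p 8,
    A4 * p 8 - C4 * p 9]


/-!
At `Ẽ3` every chain equation `a·u - c·v = 0` holds by construction. Substituting `c1·x1 = a1·x0`
into the first equation leaves `(a0 / S - c0)·x0 = 0` with `S = 1 + b1 x0 + b2 y0`, and likewise
`(A0 / T - C0)·y0 = 0` with `T = 1 + B (x0 + y0)`. So it suffices that `S = a0 / c0` and
`T = A0 / C0`, i.e. that `(x*, y*)` solves the linear system `b1 x + b2 y = b1 d`, `x + y = D`,
whose solution is exactly how `x*` and `y*` are defined.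
-/

section SteadyState

variable {b1 b2 d D : ℝ}

theorem coexistence_add (hb : b1 ≠ b2) (hb2 : b2 ≠ 0) :
    b2 / (b1 - b2) * (b1 / b2 * d - D) + b1 / (b1 - b2) * (D - d) = D := by
  have : b1 - b2 ≠ 0 := sub_ne_zero.mpr hb
  field_simp
  ring

theorem coexistence_weighted_add (hb : b1 ≠ b2) (hb2 : b2 ≠ 0) :
    b1 * (b2 / (b1 - b2) * (b1 / b2 * d - D)) + b2 * (b1 / (b1 - b2) * (D - d)) = b1 * d := by
  have : b1 - b2 ≠ 0 := sub_ne_zero.mpr hb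
  field_simp
  ring

end SteadyState

theorem one_add_mul_sub_div_mul {a b c : ℝ} (hb : b ≠ 0) (hc : c ≠ 0) :
    1 + b * ((a - c) / (b * c)) = a / c := by
  field_simp
  ring

theorem stmt3_general (a0 a1 a2 a3 a4 c0 c1 c2 c3 c4 A0 A1 A2 A3 A4 C0 C1 C2 C3 C4 b1 b2 B d D xs ys : ℝ)
    (ha0 : 0 < a0)
    (hc0 : 0 < c0) (hc1 : 0 < c1) (hc2 : 0 < c2) (hc3 : 0 < c3) (hc4 : 0 < c4)
    (hA0 : 0 < A0)
    (hC0 : 0 < C0) (hC1 : 0 < C1) (hC2 : 0 < C2) (hC3 : 0 < C3) (hC4 : 0 < C4)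
    (hb1 : 0 < b1) (hb2 : 0 < b2) (hB : 0 < B)
    (hd : d = (a0 - c0) / (b1 * c0)) (hD : D = (A0 - C0) / (B * C0))
    (hb : b2 < b1)
    (hxs : xs = b2 / (b1 - b2) * (b1 / b2 * d - D))
    (hys : ys = b1 / (b1 - b2) * (D - d)) :
    F a0 a1 a2 a3 a4 c0 c1 c2 c3 c4 A0 A1 A2 A3 A4 C0 C1 C2 C3 C4 b1 b2 B
      ![xs, xs * a1 / c1, xs * a2 / c2, xs * a2 * a3 / (c2 * c3),
        xs * a2 * a3 * a4 / (c2 * c3 * c4),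
        ys, ys * A1 / C1, ys * A2 / C2, ys * A2 * A3 / (C2 * C3),
        ys * A2 * A3 * A4 / (C2 * C3 * C4)] = 0 := by
  have hS : 1 + b1 * xs + b2 * ys = a0 / c0 := by
    rw [add_assoc, hxs, hys, coexistence_weighted_add hb.ne' hb2.ne', hd,
      one_add_mul_sub_div_mul hb1.ne' hc0.ne']
  have hT : 1 + B * (xs + ys) = A0 / C0 := by
    rw [hxs, hys, coexistence_add hb.ne' hb2.ne', hD, one_add_mul_sub_div_mul hB.ne' hC0.ne']
  funext i
  fin_cases i <;> simp [F, hS, hT, ha0.ne', hA0.ne'] <;> field_simp <;> ring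

/-- `Ẽ3` is a steady state of system (3). -/
theorem stmt3 (a0 a1 a2 a3 a4 c0 c1 c2 c3 c4 A0 A1 A2 A3 A4 C0 C1 C2 C3 C4 b1 b2 B d D xs ys : ℝ)
    (ha0 : 0 < a0) (ha1 : 0 < a1) (ha2 : 0 < a2) (ha3 : 0 < a3) (ha4 : 0 < a4)
    (hc0 : 0 < c0) (hc1 : 0 < c1) (hc2 : 0 < c2) (hc3 : 0 < c3) (hc4 : 0 < c4)
    (hA0 : 0 < A0) (hA1 : 0 < A1) (hA2 : 0 < A2) (hA3 : 0 < A3) (hA4 : 0 < A4)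
    (hC0 : 0 < C0) (hC1 : 0 < C1) (hC2 : 0 < C2) (hC3 : 0 < C3) (hC4 : 0 < C4)
    (hb1 : 0 < b1) (hb2 : 0 < b2) (hB : 0 < B)
    (hac : c0 < a0) (hAC : C0 < A0)
    (hd : d = (a0 - c0) / (b1 * c0)) (hD : D = (A0 - C0) / (B * C0))
    (hb : b2 < b1)
    (hxs : xs = b2 / (b1 - b2) * (b1 / b2 * d - D))
    (hys : ys = b1 / (b1 - b2) * (D - d)) :
    F a0 a1 a2 a3 a4 c0 c1 c2 c3 c4 A0 A1 A2 A3 A4 C0 C1 C2 C3 C4 b1 b2 B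
      ![xs, xs * a1 / c1, xs * a2 / c2, xs * a2 * a3 / (c2 * c3),
        xs * a2 * a3 * a4 / (c2 * c3 * c4),
        ys, ys * A1 / C1, ys * A2 / C2, ys * A2 * A3 / (C2 * C3),
        ys * A2 * A3 * A4 / (C2 * C3 * C4)] = 0 :=
  stmt3_general a0 a1 a2 a3 a4 c0 c1 c2 c3 c4 A0 A1 A2 A3 A4 C0 C1 C2 C3 C4 b1 b2 B d D xs ys ha0
    hc0 hc1 hc2 hc3 hc4 hA0 hC0 hC1 hC2 hC3 hC4 hb1 hb2 hB hd hD hb hxs hys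
end

section
/- Every complex root of the polynomial P1(X) = (X+c2)·(X+c3)·(X+c4)·(X+C2)·(X+C3)·(X+C4)·Q1(X)·Q2(X) has strictly negative real part if and only if D < d, where Q1(X) = (B·d+1)·X^2 + (B·(C0+A1+C1)·d − A0 + C0 + A1 + C1)·X + C1·(B·d·C0 − A0 + C0) and Q2(X) = (d·b1+1)^2·X^2 + (b1^2·(a1+c1+c0)·d^2 + 2·b1·(a1+c1+c0)·d + a1 + c1 − a0 + c0)·X + c1·(d^2·b1^2·c0 + 2·d·b1·c0 − a0 + c0). (P1 is, up to a positive scalar factor, the characteristic polynomial of the Jacobian of system (3) at the steady state Ẽ1, so this states that Ẽ1 is linearly asymptotically stable if and only if D < d.) -/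
/-!
Besides six linear factors `z + c` with `c > 0`, `P1` has two real quadratic factors. A real
quadratic with positive coefficients has all its roots in the open left half-plane, while one
with positive leading and nonpositive constant coefficient has a nonnegative real root.
Writing `e = B·d·C0 − A0 + C0 = B·C0·(d − D)`, the factor `Q1` is
`(B·d + 1)·X² + ((A1 + C1)·(B·d + 1) + e)·X + C1·e`, and since `d·b1·c0 = a0 − c0` the
coefficients of `Q2` are `(d·b1 + 1)²`, `(a1 + c1)·(d·b1 + 1)² + c0·(d·b1)² + (a0 − c0)` and
`c1·(c0·(d·b1)² + (a0 − c0))`, all positive. So stability is decided by the sign of `e`.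
-/

namespace Complex

lemma re_neg_of_add_ofReal_eq_zero {c : ℝ} (hc : 0 < c) {z : ℂ} (h : z + c = 0) : z.re < 0 := by
  rw [eq_neg_of_add_eq_zero_left h, neg_re, ofReal_re]
  exact neg_neg_of_pos hc

lemma re_neg_of_quadratic_eq_zero {a b c : ℝ} (ha : 0 < a) (hb : 0 < b) (hc : 0 < c) {z : ℂ}
    (h : (a : ℂ) * z ^ 2 + b * z + c = 0) : z.re < 0 := by
  have hre : a * (z.re ^ 2 - z.im ^ 2) + b * z.re + c = 0 := by
    simpa [pow_two] using congrArg re h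
  have him : z.im * (2 * a * z.re + b) = 0 := by
    have := congrArg im h
    simp only [add_im, mul_im, ofReal_re, ofReal_im, pow_two, mul_re, zero_mul, add_zero,
      zero_im] at this
    linear_combination this
  rcases mul_eq_zero.mp him with hreal | hvertex
  · by_contra! hnonneg
    rw [hreal] at hre
    nlinarith [mul_nonneg (mul_nonneg ha.le hnonneg) hnonneg, mul_nonneg hb.le hnonneg]
  · -- a non-real root lies on the vertical line `re = -b / (2a)`
    nlinarith

lemma exists_quadratic_eq_zero_re_nonneg {a c : ℝ} (ha : 0 < a) (b : ℝ) (hc : c ≤ 0) :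
    ∃ z : ℂ, 0 ≤ z.re ∧ (a : ℂ) * z ^ 2 + b * z + c = 0 := by
  set s := Real.sqrt (b ^ 2 - 4 * a * c)
  have hs : s ^ 2 = b ^ 2 - 4 * a * c := Real.sq_sqrt (by nlinarith)
  have hbs : b ≤ s := (le_abs_self b).trans (Real.abs_le_sqrt (by nlinarith))
  refine ⟨((-b + s) / (2 * a) : ℝ), ?_, ?_⟩
  · rw [ofReal_re]
    exact div_nonneg (by linarith) (by positivity)
  · have hroot : a * ((-b + s) / (2 * a)) ^ 2 + b * ((-b + s) / (2 * a)) + c = 0 := by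
      field_simp
      linear_combination hs
    exact_mod_cast congrArg ofReal hroot

end Complex

theorem stmt6_general (a0 a1 c0 c1 c2 c3 c4 A0 A1 C0 C1 C2 C3 C4 b1 B d D : ℝ)
    (ha1 : 0 < a1)
    (hc0 : 0 < c0) (hc1 : 0 < c1) (hc2 : 0 < c2) (hc3 : 0 < c3) (hc4 : 0 < c4)
    (hA1 : 0 < A1)
    (hC0 : 0 < C0) (hC1 : 0 < C1) (hC2 : 0 < C2) (hC3 : 0 < C3) (hC4 : 0 < C4)
    (hb1 : 0 < b1) (hB : 0 < B)
    (hac : c0 < a0)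
    (hd : d = (a0 - c0) / (b1 * c0)) (hD : D = (A0 - C0) / (B * C0)) :
    (∀ z : ℂ,
        (z + ((c2 : ℝ) : ℂ)) * (z + ((c3 : ℝ) : ℂ)) * (z + ((c4 : ℝ) : ℂ)) * (z + ((C2 : ℝ) : ℂ)) * (z + ((C3 : ℝ) : ℂ)) * (z + ((C4 : ℝ) : ℂ)) *
          (((B * d + 1 : ℝ) : ℂ) * z ^ 2 + ((B * (C0 + A1 + C1) * d - A0 + C0 + A1 + C1 : ℝ) : ℂ) * z + ((C1 * (B * d * C0 - A0 + C0) : ℝ) : ℂ)) *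
          ((((d * b1 + 1) ^ 2 : ℝ) : ℂ) * z ^ 2 + ((b1 ^ 2 * (a1 + c1 + c0) * d ^ 2 + 2 * b1 * (a1 + c1 + c0) * d + a1 + c1 - a0 + c0 : ℝ) : ℂ) * z + ((c1 * (d ^ 2 * b1 ^ 2 * c0 + 2 * d * b1 * c0 - a0 + c0) : ℝ) : ℂ)) = 0 → z.re < 0) ↔ D < d := by
  have hd0 : 0 < d := hd ▸ div_pos (sub_pos.2 hac) (mul_pos hb1 hc0)
  have hdb1c0 : d * b1 * c0 = a0 - c0 := by rw [hd]; field_simp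
  have he : B * d * C0 - A0 + C0 = B * C0 * (d - D) := by rw [hD]; field_simp; ring
  constructor
  · intro hstable
    by_contra! hdD
    have hconst : C1 * (B * d * C0 - A0 + C0) ≤ 0 := by
      rw [he]
      exact mul_nonpos_of_nonneg_of_nonpos hC1.le
        (mul_nonpos_of_nonneg_of_nonpos (by positivity) (sub_nonpos.2 hdD))
    obtain ⟨z, hz, hroot⟩ := Complex.exists_quadratic_eq_zero_re_nonneg
      (by positivity : 0 < B * d + 1) (B * (C0 + A1 + C1) * d - A0 + C0 + A1 + C1) hconst
    exact (hstable z (by rw [hroot, mul_zero, zero_mul])).not_ge hz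
  · intro hDd z hz
    have he_pos : 0 < B * d * C0 - A0 + C0 := by rw [he]; exact mul_pos (by positivity) (sub_pos.2 hDd)
    have hQ2_pos : 0 < c0 * (d * b1) ^ 2 + (a0 - c0) :=
      add_pos_of_nonneg_of_pos (by positivity) (sub_pos.2 hac)
    simp only [mul_eq_zero] at hz
    rcases hz with ((((((h | h) | h) | h) | h) | h) | hQ1) | hQ2root
    · exact Complex.re_neg_of_add_ofReal_eq_zero hc2 h
    · exact Complex.re_neg_of_add_ofReal_eq_zero hc3 h
    · exact Complex.re_neg_of_add_ofReal_eq_zero hc4 h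
    · exact Complex.re_neg_of_add_ofReal_eq_zero hC2 h
    · exact Complex.re_neg_of_add_ofReal_eq_zero hC3 h
    · exact Complex.re_neg_of_add_ofReal_eq_zero hC4 h
    · refine Complex.re_neg_of_quadratic_eq_zero (by positivity) ?_ (mul_pos hC1 he_pos) hQ1
      linear_combination add_pos (by positivity : 0 < (A1 + C1) * (B * d + 1)) he_pos
    · refine Complex.re_neg_of_quadratic_eq_zero (by positivity) ?_ ?_ hQ2root
      · linear_combination add_pos (by positivity : 0 < (a1 + c1) * (d * b1 + 1) ^ 2) hQ2_pos - 2 * hdb1c0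
      · linear_combination mul_pos hc1 hQ2_pos - 2 * c1 * hdb1c0

/-- `Ẽ1` is linearly asymptotically stable iff `D < d`: every complex root of the
characteristic polynomial `P1` of the Jacobian at `Ẽ1` has negative real part
iff `D < d`. -/
theorem stmt6 (a0 a1 a2 a3 a4 c0 c1 c2 c3 c4 A0 A1 A2 A3 A4 C0 C1 C2 C3 C4 b1 b2 B d D : ℝ)
    (ha0 : 0 < a0) (ha1 : 0 < a1) (ha2 : 0 < a2) (ha3 : 0 < a3) (ha4 : 0 < a4)
    (hc0 : 0 < c0) (hc1 : 0 < c1) (hc2 : 0 < c2) (hc3 : 0 < c3) (hc4 : 0 < c4)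
    (hA0 : 0 < A0) (hA1 : 0 < A1) (hA2 : 0 < A2) (hA3 : 0 < A3) (hA4 : 0 < A4)
    (hC0 : 0 < C0) (hC1 : 0 < C1) (hC2 : 0 < C2) (hC3 : 0 < C3) (hC4 : 0 < C4)
    (hb1 : 0 < b1) (hb2 : 0 < b2) (hB : 0 < B)
    (hac : c0 < a0) (hAC : C0 < A0)
    (hd : d = (a0 - c0) / (b1 * c0)) (hD : D = (A0 - C0) / (B * C0)) :
    (∀ z : ℂ,
        (z + ((c2 : ℝ) : ℂ)) * (z + ((c3 : ℝ) : ℂ)) * (z + ((c4 : ℝ) : ℂ)) * (z + ((C2 : ℝ) : ℂ)) * (z + ((C3 : ℝ) : ℂ)) * (z + ((C4 : ℝ) : ℂ)) *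
          (((B * d + 1 : ℝ) : ℂ) * z ^ 2 + ((B * (C0 + A1 + C1) * d - A0 + C0 + A1 + C1 : ℝ) : ℂ) * z + ((C1 * (B * d * C0 - A0 + C0) : ℝ) : ℂ)) *
          ((((d * b1 + 1) ^ 2 : ℝ) : ℂ) * z ^ 2 + ((b1 ^ 2 * (a1 + c1 + c0) * d ^ 2 + 2 * b1 * (a1 + c1 + c0) * d + a1 + c1 - a0 + c0 : ℝ) : ℂ) * z + ((c1 * (d ^ 2 * b1 ^ 2 * c0 + 2 * d * b1 * c0 - a0 + c0) : ℝ) : ℂ)) = 0 → z.re < 0) ↔ D < d :=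
  stmt6_general a0 a1 c0 c1 c2 c3 c4 A0 A1 C0 C1 C2 C3 C4 b1 B d D ha1 hc0 hc1 hc2 hc3 hc4 hA1 hC0
    hC1 hC2 hC3 hC4 hb1 hB hac hd hD
end

section
/- If D > d, then the polynomial P1(X) = (X+c2)·(X+c3)·(X+c4)·(X+C2)·(X+C3)·(X+C4)·Q1(X)·Q2(X) has a strictly positive real root, where Q1(X) = (B·d+1)·X^2 + (B·(C0+A1+C1)·d − A0 + C0 + A1 + C1)·X + C1·(B·d·C0 − A0 + C0) and Q2(X) = (d·b1+1)^2·X^2 + (b1^2·(a1+c1+c0)·d^2 + 2·b1·(a1+c1+c0)·d + a1 + c1 − a0 + c0)·X + c1·(d^2·b1^2·c0 + 2·d·b1·c0 − a0 + c0); in particular the steady state Ẽ1 of system (3) is linearly unstable when D > d. -/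
/-! The quadratic factor `Q1` has positive leading coefficient `B d + 1`, and its constant term
`C1 (B C0 d - (A0 - C0)) = B C0 C1 (d - D)` is negative exactly when `d < D`; hence `Q1`, and
with it `P1`, has a positive root. -/

lemma exists_pos_root_of_quadratic {a c : ℝ} (b : ℝ) (ha : 0 < a) (hc : c < 0) :
    ∃ x : ℝ, 0 < x ∧ a * x ^ 2 + b * x + c = 0 := by
  have hdisc : 0 ≤ discrim a b c := by unfold discrim; nlinarith
  set s := √(discrim a b c)
  have hs : discrim a b c = s * s := (Real.mul_self_sqrt hdisc).symm
  have hbs : b < s := by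
    refine Real.lt_sqrt_of_sq_lt ?_ |>.trans_le' (le_abs_self b)
    rw [sq_abs]; unfold discrim; nlinarith
  refine ⟨(-b + s) / (2 * a), by apply div_pos <;> linarith, ?_⟩
  rw [sq]
  exact (quadratic_eq_zero_iff ha.ne' hs _).2 (Or.inl rfl)

theorem stmt7_general (a0 a1 c0 c1 c2 c3 c4 A0 A1 C0 C1 C2 C3 C4 b1 B d D : ℝ)
    (hc0 : 0 < c0)
    (hC0 : 0 < C0) (hC1 : 0 < C1)
    (hb1 : 0 < b1) (hB : 0 < B)
    (hac : c0 < a0)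
    (hd : d = (a0 - c0) / (b1 * c0)) (hD : D = (A0 - C0) / (B * C0))
    (hDd : d < D) :
    ∃ x : ℝ, 0 < x ∧
      (x + c2) * (x + c3) * (x + c4) * (x + C2) * (x + C3) * (x + C4) *
        ((B * d + 1) * x ^ 2 + (B * (C0 + A1 + C1) * d - A0 + C0 + A1 + C1) * x + C1 * (B * d * C0 - A0 + C0)) *
        ((d * b1 + 1) ^ 2 * x ^ 2 + (b1 ^ 2 * (a1 + c1 + c0) * d ^ 2 + 2 * b1 * (a1 + c1 + c0) * d + a1 + c1 - a0 + c0) * x + c1 * (d ^ 2 * b1 ^ 2 * c0 + 2 * d * b1 * c0 - a0 + c0)) = 0 := by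
  have hd0 : 0 ≤ d := hd ▸ div_nonneg (sub_nonneg.2 hac.le) (by positivity)
  have hBC0 : 0 < B * C0 := mul_pos hB hC0
  have hBC0D : B * C0 * D = A0 - C0 := by rw [hD]; field_simp
  have hconst : B * d * C0 - A0 + C0 < 0 := by
    linarith [mul_lt_mul_of_pos_left hDd hBC0]
  obtain ⟨x, hx, hQ1⟩ := exists_pos_root_of_quadratic (B * (C0 + A1 + C1) * d - A0 + C0 + A1 + C1)
    (by positivity : 0 < B * d + 1) (mul_neg_of_pos_of_neg hC1 hconst)
  exact ⟨x, hx, by rw [hQ1, mul_zero, zero_mul]⟩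

/-- If `D > d`, the characteristic polynomial `P1` of the Jacobian of system (3)
at `Ẽ1` has a strictly positive real root; in particular `Ẽ1` is linearly
unstable when `D > d`. -/
theorem stmt7 (a0 a1 a2 a3 a4 c0 c1 c2 c3 c4 A0 A1 A2 A3 A4 C0 C1 C2 C3 C4 b1 b2 B d D : ℝ)
    (ha0 : 0 < a0) (ha1 : 0 < a1) (ha2 : 0 < a2) (ha3 : 0 < a3) (ha4 : 0 < a4)
    (hc0 : 0 < c0) (hc1 : 0 < c1) (hc2 : 0 < c2) (hc3 : 0 < c3) (hc4 : 0 < c4)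
    (hA0 : 0 < A0) (hA1 : 0 < A1) (hA2 : 0 < A2) (hA3 : 0 < A3) (hA4 : 0 < A4)
    (hC0 : 0 < C0) (hC1 : 0 < C1) (hC2 : 0 < C2) (hC3 : 0 < C3) (hC4 : 0 < C4)
    (hb1 : 0 < b1) (hb2 : 0 < b2) (hB : 0 < B)
    (hac : c0 < a0) (hAC : C0 < A0)
    (hd : d = (a0 - c0) / (b1 * c0)) (hD : D = (A0 - C0) / (B * C0))
    (hDd : d < D) :
    ∃ x : ℝ, 0 < x ∧
      (x + c2) * (x + c3) * (x + c4) * (x + C2) * (x + C3) * (x + C4) *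
        ((B * d + 1) * x ^ 2 + (B * (C0 + A1 + C1) * d - A0 + C0 + A1 + C1) * x + C1 * (B * d * C0 - A0 + C0)) *
        ((d * b1 + 1) ^ 2 * x ^ 2 + (b1 ^ 2 * (a1 + c1 + c0) * d ^ 2 + 2 * b1 * (a1 + c1 + c0) * d + a1 + c1 - a0 + c0) * x + c1 * (d ^ 2 * b1 ^ 2 * c0 + 2 * d * b1 * c0 - a0 + c0)) = 0 :=
  stmt7_general a0 a1 c0 c1 c2 c3 c4 A0 A1 C0 C1 C2 C3 C4 b1 B d D hc0 hC0 hC1 hb1 hB hac hd hD hDd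
end

section
/- Every complex root of the polynomial P2(X) = (X+c2)·(X+c3)·(X+c4)·(X+C2)·(X+C3)·(X+C4)·Q3(X)·Q4(X) has strictly negative real part if and only if D > (b1/b2)·d, where Q3(X) = (b2·D+1)·X^2 + (b2·(c0+a1+c1)·D − a0 + c0 + a1 + c1)·X + c1·(b2·D·c0 − a0 + c0) and Q4(X) = (D·B+1)^2·X^2 + (B^2·(A1+C1+C0)·D^2 + 2·B·(A1+C1+C0)·D + A1 + C1 − A0 + C0)·X + C1·(D^2·B^2·C0 + 2·D·B·C0 − A0 + C0). (P2 is, up to a positive scalar factor, the characteristic polynomial of the Jacobian of system (3) at the steady state Ẽ2, so this states that Ẽ2 is linearly asymptotically stable if and only if D > (b1/b2)·d.) -/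
lemma quad_neg_re (α β γ : ℝ) (hα : 0 < α) (hβ : 0 < β) (hγ : 0 < γ) (z : ℂ)
    (hz : (α : ℂ) * z ^ 2 + (β : ℂ) * z + (γ : ℂ) = 0) : z.re < 0 := by
  by_contra hneg
  push_neg at hneg
  have h1 := congrArg Complex.re hz
  have h2 := congrArg Complex.im hz
  simp [Complex.add_re, Complex.add_im, Complex.mul_re, Complex.mul_im, pow_two] at h1 h2
  set x := z.re; set y := z.im
  have hy : y = 0 := by
    rcases mul_eq_zero.mp (show y * (α * x + α * x + β) = 0 by nlinarith [h2]) with h | h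
    · exact h
    · nlinarith
  rw [hy] at h1
  nlinarith [h1]

lemma quad_nonneg_root (α β γ : ℝ) (hα : 0 < α) (hγ : γ ≤ 0) :
    ∃ x : ℝ, 0 ≤ x ∧ α * x ^ 2 + β * x + γ = 0 := by
  have hdisc : 0 ≤ β ^ 2 - 4 * α * γ := by nlinarith
  set s := Real.sqrt (β ^ 2 - 4 * α * γ) with hs
  have hs2 : s ^ 2 = β ^ 2 - 4 * α * γ := Real.sq_sqrt hdisc
  have hsb : β ≤ s := by
    calc β ≤ |β| := le_abs_self β
    _ = Real.sqrt (β ^ 2) := (Real.sqrt_sq_eq_abs β).symm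
    _ ≤ s := Real.sqrt_le_sqrt (by nlinarith)
  refine ⟨(s - β) / (2 * α), div_nonneg (by linarith) (by linarith), ?_⟩
  field_simp
  nlinarith [hs2]

/-- `Ẽ2` is linearly asymptotically stable iff `D > (b1/b2)·d`: every complex
root of the characteristic polynomial `P2` of the Jacobian at `Ẽ2` has negative
real part iff `D > (b1/b2)·d`. -/
theorem stmt8 (a0 a1 a2 a3 a4 c0 c1 c2 c3 c4 A0 A1 A2 A3 A4 C0 C1 C2 C3 C4 b1 b2 B d D : ℝ)
    (ha0 : 0 < a0) (ha1 : 0 < a1) (ha2 : 0 < a2) (ha3 : 0 < a3) (ha4 : 0 < a4)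
    (hc0 : 0 < c0) (hc1 : 0 < c1) (hc2 : 0 < c2) (hc3 : 0 < c3) (hc4 : 0 < c4)
    (hA0 : 0 < A0) (hA1 : 0 < A1) (hA2 : 0 < A2) (hA3 : 0 < A3) (hA4 : 0 < A4)
    (hC0 : 0 < C0) (hC1 : 0 < C1) (hC2 : 0 < C2) (hC3 : 0 < C3) (hC4 : 0 < C4)
    (hb1 : 0 < b1) (hb2 : 0 < b2) (hB : 0 < B)
    (hac : c0 < a0) (hAC : C0 < A0)
    (hd : d = (a0 - c0) / (b1 * c0)) (hD : D = (A0 - C0) / (B * C0)) :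
    (∀ z : ℂ,
        (z + ((c2 : ℝ) : ℂ)) * (z + ((c3 : ℝ) : ℂ)) * (z + ((c4 : ℝ) : ℂ)) * (z + ((C2 : ℝ) : ℂ)) * (z + ((C3 : ℝ) : ℂ)) * (z + ((C4 : ℝ) : ℂ)) *
          (((b2 * D + 1 : ℝ) : ℂ) * z ^ 2 + ((b2 * (c0 + a1 + c1) * D - a0 + c0 + a1 + c1 : ℝ) : ℂ) * z + ((c1 * (b2 * D * c0 - a0 + c0) : ℝ) : ℂ)) *
          ((((D * B + 1) ^ 2 : ℝ) : ℂ) * z ^ 2 + ((B ^ 2 * (A1 + C1 + C0) * D ^ 2 + 2 * B * (A1 + C1 + C0) * D + A1 + C1 - A0 + C0 : ℝ) : ℂ) * z + ((C1 * (D ^ 2 * B ^ 2 * C0 + 2 * D * B * C0 - A0 + C0) : ℝ) : ℂ)) = 0 → z.re < 0) ↔ b1 / b2 * d < D := by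
  have hDpos : 0 < D := hD ▸ div_pos (by linarith) (mul_pos hB hC0)
  have hDB : D * B * C0 = A0 - C0 := by
    rw [hD]; field_simp
  have hkey : b1 / b2 * d * (b2 * c0) = a0 - c0 := by
    rw [hd]; field_simp
  constructor
  · intro h
    by_contra hlt
    push_neg at hlt
    have hγ : c1 * (b2 * D * c0 - a0 + c0) ≤ 0 := by
      have : D * (b2 * c0) ≤ b1 / b2 * d * (b2 * c0) :=
        mul_le_mul_of_nonneg_right hlt (by positivity)
      nlinarith [hkey]
    obtain ⟨x, hx0, hxeq⟩ := quad_nonneg_root (b2 * D + 1)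
      (b2 * (c0 + a1 + c1) * D - a0 + c0 + a1 + c1)
      (c1 * (b2 * D * c0 - a0 + c0)) (by positivity) hγ
    have hroot := h (x : ℂ)
    have hQ3 : ((b2 * D + 1 : ℝ) : ℂ) * (x : ℂ) ^ 2 +
        ((b2 * (c0 + a1 + c1) * D - a0 + c0 + a1 + c1 : ℝ) : ℂ) * (x : ℂ) +
        ((c1 * (b2 * D * c0 - a0 + c0) : ℝ) : ℂ) = 0 := by
      push_cast
      exact_mod_cast congrArg (fun t : ℝ => (t : ℂ)) hxeq
    have := hroot (by rw [hQ3]; ring)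
    rw [Complex.ofReal_re] at this
    linarith
  · intro hgt z hz
    have hγ3 : 0 < b2 * D * c0 - a0 + c0 := by
      have : b1 / b2 * d * (b2 * c0) < D * (b2 * c0) :=
        mul_lt_mul_of_pos_right hgt (by positivity)
      nlinarith [hkey]
    simp only [mul_eq_zero] at hz
    rcases hz with ((((((h | h) | h) | h) | h) | h) | h) | h
    · rw [eq_neg_of_add_eq_zero_left h]; simp [hc2]
    · rw [eq_neg_of_add_eq_zero_left h]; simp [hc3]
    · rw [eq_neg_of_add_eq_zero_left h]; simp [hc4]
    · rw [eq_neg_of_add_eq_zero_left h]; simp [hC2]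
    · rw [eq_neg_of_add_eq_zero_left h]; simp [hC3]
    · rw [eq_neg_of_add_eq_zero_left h]; simp [hC4]
    · exact quad_neg_re _ _ _ (by positivity)
        (by nlinarith) (by positivity) z h
    · refine quad_neg_re _ _ _ (by positivity) ?_ ?_ z h
      · have he : B ^ 2 * (A1 + C1 + C0) * D ^ 2 + 2 * B * (A1 + C1 + C0) * D + A1 + C1 - A0 + C0
            = B ^ 2 * (A1 + C1 + C0) * D ^ 2 + D * B * (2 * A1 + 2 * C1 + C0) + A1 + C1 := by
          linear_combination hDB
        rw [he]
        have h1 : 0 ≤ B ^ 2 * (A1 + C1 + C0) * D ^ 2 :=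
          mul_nonneg (mul_nonneg (sq_nonneg B) (by linarith)) (sq_nonneg D)
        have h2 : 0 < D * B * (2 * A1 + 2 * C1 + C0) :=
          mul_pos (mul_pos hDpos hB) (by linarith)
        linarith
      · have he : C1 * (D ^ 2 * B ^ 2 * C0 + 2 * D * B * C0 - A0 + C0)
            = C1 * (D ^ 2 * B ^ 2 * C0 + D * B * C0) := by
          linear_combination C1 * hDB
        rw [he]
        exact mul_pos hC1 (add_pos_of_nonneg_of_pos (by positivity)
          (mul_pos (mul_pos hDpos hB) hC0))
end

section
/- If D < (b1/b2)·d, then the polynomial P2(X) = (X+c2)·(X+c3)·(X+c4)·(X+C2)·(X+C3)·(X+C4)·Q3(X)·Q4(X) has a strictly positive real root, where Q3(X) = (b2·D+1)·X^2 + (b2·(c0+a1+c1)·D − a0 + c0 + a1 + c1)·X + c1·(b2·D·c0 − a0 + c0) and Q4(X) = (D·B+1)^2·X^2 + (B^2·(A1+C1+C0)·D^2 + 2·B·(A1+C1+C0)·D + A1 + C1 − A0 + C0)·X + C1·(D^2·B^2·C0 + 2·D·B·C0 − A0 + C0); in particular the steady state Ẽ2 of system (3) is linearly unstable when D < (b1/b2)·d.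 -/
theorem quad_pos_root (a b c : ℝ) (ha : 0 < a) (hc : c < 0) :
    ∃ x : ℝ, 0 < x ∧ a * x ^ 2 + b * x + c = 0 := by
  have hdisc : 0 ≤ b ^ 2 - 4 * a * c := by nlinarith [sq_nonneg b, mul_pos ha (neg_pos.mpr hc)]
  obtain ⟨s, hsnonneg, hs2⟩ : ∃ s : ℝ, 0 ≤ s ∧ s ^ 2 = b ^ 2 - 4 * a * c :=
    ⟨Real.sqrt (b ^ 2 - 4 * a * c), Real.sqrt_nonneg _, Real.sq_sqrt hdisc⟩
  have hs2pos : 0 < s ^ 2 := by nlinarith [mul_pos ha (neg_pos.mpr hc), sq_nonneg b]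
  have hspos : 0 < s := lt_of_le_of_ne hsnonneg (by rintro rfl; simp at hs2pos)
  have hsb : b < s := by
    rcases le_or_gt b 0 with h | h
    · linarith
    · nlinarith
  refine ⟨(s - b) / (2 * a), div_pos (by linarith) (by linarith), ?_⟩
  have hane : a ≠ 0 := ne_of_gt ha
  field_simp
  nlinarith [hs2]

/-- If `D < (b1/b2)·d`, the characteristic polynomial `P2` of the Jacobian of
system (3) at `Ẽ2` has a strictly positive real root; in particular `Ẽ2` is
linearly unstable when `D < (b1/b2)·d`. -/
theorem stmt9 (a0 a1 a2 a3 a4 c0 c1 c2 c3 c4 A0 A1 A2 A3 A4 C0 C1 C2 C3 C4 b1 b2 B d D : ℝ)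
    (ha0 : 0 < a0) (ha1 : 0 < a1) (ha2 : 0 < a2) (ha3 : 0 < a3) (ha4 : 0 < a4)
    (hc0 : 0 < c0) (hc1 : 0 < c1) (hc2 : 0 < c2) (hc3 : 0 < c3) (hc4 : 0 < c4)
    (hA0 : 0 < A0) (hA1 : 0 < A1) (hA2 : 0 < A2) (hA3 : 0 < A3) (hA4 : 0 < A4)
    (hC0 : 0 < C0) (hC1 : 0 < C1) (hC2 : 0 < C2) (hC3 : 0 < C3) (hC4 : 0 < C4)
    (hb1 : 0 < b1) (hb2 : 0 < b2) (hB : 0 < B)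
    (hac : c0 < a0) (hAC : C0 < A0)
    (hd : d = (a0 - c0) / (b1 * c0)) (hD : D = (A0 - C0) / (B * C0))
    (hDd : D < b1 / b2 * d) :
    ∃ x : ℝ, 0 < x ∧
      (x + c2) * (x + c3) * (x + c4) * (x + C2) * (x + C3) * (x + C4) *
        ((b2 * D + 1) * x ^ 2 + (b2 * (c0 + a1 + c1) * D - a0 + c0 + a1 + c1) * x + c1 * (b2 * D * c0 - a0 + c0)) *
        ((D * B + 1) ^ 2 * x ^ 2 + (B ^ 2 * (A1 + C1 + C0) * D ^ 2 + 2 * B * (A1 + C1 + C0) * D + A1 + C1 - A0 + C0) * x + C1 * (D ^ 2 * B ^ 2 * C0 + 2 * D * B * C0 - A0 + C0)) = 0 := by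
  have hDpos : 0 < D := by
    rw [hD]; exact div_pos (by linarith) (by positivity)
  have hkey : b2 * D * c0 < a0 - c0 := by
    have hdval : b1 / b2 * d = (a0 - c0) / (b2 * c0) := by
      rw [hd]; field_simp
    rw [hdval] at hDd
    have h2 := (div_lt_div_iff₀ (by positivity : (0:ℝ) < 1) (by positivity : (0:ℝ) < b2 * c0)).mp
      (by simpa using hDd)
    nlinarith [hDd, mul_pos hb2 hc0]
  have hcneg : c1 * (b2 * D * c0 - a0 + c0) < 0 :=
    mul_neg_of_pos_of_neg hc1 (by linarith)
  obtain ⟨x, hx, hroot⟩ := quad_pos_root (b2 * D + 1)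
    (b2 * (c0 + a1 + c1) * D - a0 + c0 + a1 + c1) (c1 * (b2 * D * c0 - a0 + c0))
    (by positivity) hcneg
  exact ⟨x, hx, by rw [hroot]; ring⟩
end

section
/- (Global stability, case (ii)) Assume r < R < (b1/b2)·r, and set x̄* = (b2/(b1−b2))·((b1/b2)·r − R) and ȳ* = (b1/(b1−b2))·(R−r). Then for every positive solution (x0,...,x4,y0,...,y4) of system (2), as t → +∞: x0(t) → x̄*, x1(t) → x̄*·k2/k3, x2(t) → x̄*·(k4+k5+2k6)/(k9+k10+k14−k7), x3(t) → x̄*·(k4+k5+2k6)·(k8+k9+2k10)/((k9+k10+k14−k7)·(k11+k12+k15)), x4(t) → x̄*·(k4+k5+2k6)·(k8+k9+2k10)·(k11+2k12)/((k9+k10+k14−k7)·(k11+k12+k15)·k16), y0(t) → ȳ*, y1(t) → ȳ*·k18/k19, y2(t) → ȳ*·(k20+k21+2k22)/(k25+k26+k30−k23), y3(t) → ȳ*·(k20+k21+2k22)·(k24+k25+2k26)/((k25+k26+k30−k23)·(k27+k28+k31)), y4(t) → ȳ*·(k20+k21+2k22)·(k24+k25+2k26)·(k27+2k28)/((k25+k26+k30−k23)·(k27+k28+k31)·k32);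 that is, every positive solution converges to the coexistence steady state E3. -/
open Filter Topology Set

lemma barrier_upper {f g : ℝ → ℝ} {T A : ℝ}
    (hd : ∀ s ≥ T, HasDerivAt f (g s) s)
    (hg : ∀ s ≥ T, A ≤ f s → g s < 0)
    (h0 : f T ≤ A) : ∀ t ≥ T, f t ≤ A := by
  intro t ht
  by_contra hc
  push_neg at hc
  set S : Set ℝ := Set.Icc T t ∩ f ⁻¹' (Set.Iic A) with hSdef
  have hclosed : IsClosed S := by
    rw [← isSeqClosed_iff_isClosed]
    intro xs x hxs hx
    have hxIcc : x ∈ Set.Icc T t :=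
      (isClosed_Icc.isSeqClosed : IsSeqClosed (Set.Icc T t)) (fun n => (hxs n).1) hx
    refine ⟨hxIcc, ?_⟩
    have hcx : ContinuousAt f x := (hd x hxIcc.1).continuousAt
    have htend : Tendsto (f ∘ xs) atTop (nhds (f x)) := hcx.tendsto.comp hx
    exact le_of_tendsto htend (Eventually.of_forall fun n => (hxs n).2)
  have hcomp : IsCompact S :=
    IsCompact.of_isClosed_subset isCompact_Icc hclosed Set.inter_subset_left
  have hne : S.Nonempty := ⟨T, ⟨le_refl T, ht⟩, h0⟩
  have hmS : sSup S ∈ S := hcomp.sSup_mem hne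
  set m := sSup S with hmdef
  have hmT : T ≤ m := hmS.1.1
  have hmt : m ≤ t := hmS.1.2
  have hfm : f m ≤ A := hmS.2
  have hmlt : m < t := lt_of_le_of_ne hmt (fun he => (not_le.2 hc) (he ▸ hfm))
  have hanti : StrictAntiOn f (Set.Icc m t) := by
    apply strictAntiOn_of_deriv_neg (convex_Icc m t)
    · exact fun x hx => ((hd x (le_trans hmT hx.1)).continuousAt).continuousWithinAt
    · intro x hx
      rw [interior_Icc] at hx
      have hxT : T ≤ x := le_trans hmT hx.1.le
      rw [(hd x hxT).deriv]
      refine hg x hxT ?_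
      by_contra hfx
      push_neg at hfx
      have hxS : x ∈ S := ⟨⟨hxT, le_trans hx.2.le le_rfl⟩, hfx.le⟩
      exact absurd (le_csSup hcomp.bddAbove hxS) (not_le.2 hx.1)
  have := hanti (Set.left_mem_Icc.2 hmlt.le) (Set.right_mem_Icc.2 hmlt.le) hmlt
  linarith

lemma barrier_above {f g : ℝ → ℝ} {T A : ℝ}
    (hd : ∀ s ≥ T, HasDerivAt f (g s) s)
    (hg : ∀ s ≥ T, A ≤ f s → 0 < g s)
    (h0 : A < f T) : ∀ t ≥ T, A < f t := by
  intro t ht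
  by_contra hc
  push_neg at hc
  set S : Set ℝ := Set.Icc T t ∩ f ⁻¹' (Set.Iic A) with hSdef
  have hclosed : IsClosed S := by
    rw [← isSeqClosed_iff_isClosed]
    intro xs x hxs hx
    have hxIcc : x ∈ Set.Icc T t :=
      (isClosed_Icc.isSeqClosed : IsSeqClosed (Set.Icc T t)) (fun n => (hxs n).1) hx
    refine ⟨hxIcc, ?_⟩
    have hcx : ContinuousAt f x := (hd x hxIcc.1).continuousAt
    have htend : Tendsto (f ∘ xs) atTop (nhds (f x)) := hcx.tendsto.comp hx
    exact le_of_tendsto htend (Eventually.of_forall fun n => (hxs n).2)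
  have hcomp : IsCompact S :=
    IsCompact.of_isClosed_subset isCompact_Icc hclosed Set.inter_subset_left
  have hne : S.Nonempty := ⟨t, ⟨ht, le_refl t⟩, hc⟩
  have hmS : sInf S ∈ S := hcomp.sInf_mem hne
  set m := sInf S with hmdef
  have hmT : T ≤ m := hmS.1.1
  have hmt : m ≤ t := hmS.1.2
  have hfm : f m ≤ A := hmS.2
  have hTm : T < m := lt_of_le_of_ne hmT (fun he => (not_le.2 h0) (he ▸ hfm))
  have hmono : StrictMonoOn f (Set.Icc T m) := by
    apply strictMonoOn_of_deriv_pos (convex_Icc T m)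
    · exact fun x hx => ((hd x hx.1).continuousAt).continuousWithinAt
    · intro x hx
      rw [interior_Icc] at hx
      have hxT : T ≤ x := hx.1.le
      rw [(hd x hxT).deriv]
      refine hg x hxT ?_
      by_contra hfx
      push_neg at hfx
      have hxS : x ∈ S := ⟨⟨hxT, le_trans hx.2.le hmt⟩, hfx.le⟩
      exact absurd (csInf_le hcomp.bddBelow hxS) (not_le.2 hx.2)
  have := hmono (Set.left_mem_Icc.2 hTm.le) (Set.right_mem_Icc.2 hTm.le) hTm
  linarith

lemma barrier_lower {f g : ℝ → ℝ} {T A : ℝ}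
    (hd : ∀ s ≥ T, HasDerivAt f (g s) s)
    (hg : ∀ s ≥ T, f s ≤ A → 0 < g s)
    (h0 : A ≤ f T) : ∀ t ≥ T, A ≤ f t := by
  intro t ht
  have := barrier_upper (f := fun s => -f s) (g := fun s => -g s) (T := T) (A := -A)
    (fun s hs => (hd s hs).neg)
    (fun s hs h => by
      have h' : f s ≤ A := by simpa using h
      simpa using hg s hs h')
    (by simpa using h0) t ht
  simpa using this

lemma barrier_below {f g : ℝ → ℝ} {T A : ℝ}
    (hd : ∀ s ≥ T, HasDerivAt f (g s) s)
    (hg : ∀ s ≥ T, f s ≤ A → g s < 0)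
    (h0 : f T < A) : ∀ t ≥ T, f t < A := by
  intro t ht
  have := barrier_above (f := fun s => -f s) (g := fun s => -g s) (T := T) (A := -A)
    (fun s hs => (hd s hs).neg)
    (fun s hs h => by
      have h' : f s ≤ A := by simpa using h
      simpa using hg s hs h')
    (by simpa using h0) t ht
  have h2 : -A < -f t := this
  linarith

section
variable {f g : ℝ → ℝ} {T A δ : ℝ}

lemma reach_below (hδ : 0 < δ)
    (hd : ∀ s ≥ T, HasDerivAt f (g s) s)
    (hg : ∀ s ≥ T, A ≤ f s → g s ≤ -δ) : ∃ t ≥ T, f t ≤ A := by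
  by_contra h
  push_neg at h
  have hAll : ∀ t ≥ T, A < f t := fun t ht => h t ht
  have hg' : ∀ s ≥ T, g s ≤ -δ := fun s hs => hg s hs (hAll s hs).le
  set t1 := T + (f T - A) / δ + 1 with ht1def
  have hfTA : 0 < f T - A := by linarith [hAll T (le_refl T)]
  have hdivpos : 0 < (f T - A) / δ := div_pos hfTA hδ
  have ht1 : T ≤ t1 := by rw [ht1def]; linarith
  have hDer : ∀ x ≥ T, HasDerivAt (fun s => f s + δ * s) (g x + δ) x := by
    intro x hx
    exact ((hd x hx).add ((hasDerivAt_id x).const_mul δ)).congr_deriv (by simp)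
  have hanti : AntitoneOn (fun s => f s + δ * s) (Set.Icc T t1) := by
    apply antitoneOn_of_deriv_nonpos (convex_Icc _ _)
    · exact fun x hx => ((hDer x hx.1).continuousAt).continuousWithinAt
    · intro x hx
      rw [interior_Icc] at hx
      exact (hDer x hx.1.le).differentiableAt.differentiableWithinAt
    · intro x hx
      rw [interior_Icc] at hx
      rw [(hDer x hx.1.le).deriv]
      linarith [hg' x hx.1.le]
  have hA := hanti (Set.left_mem_Icc.2 ht1) (Set.right_mem_Icc.2 ht1) ht1
  simp only at hA
  have hmul : δ * ((f T - A) / δ) = f T - A := by field_simp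
  have := hAll t1 ht1
  rw [ht1def] at hA
  nlinarith [hA, this, hmul]

lemma reach_above (hδ : 0 < δ)
    (hd : ∀ s ≥ T, HasDerivAt f (g s) s)
    (hg : ∀ s ≥ T, f s ≤ A → δ ≤ g s) : ∃ t ≥ T, A ≤ f t := by
  obtain ⟨t, ht, hft⟩ := reach_below (f := fun s => -f s) (g := fun s => -g s) (A := -A) hδ
    (fun s hs => (hd s hs).neg)
    (fun s hs h => by
      have h' : f s ≤ A := by simpa using h
      simpa using hg s hs h')
  exact ⟨t, ht, by simpa using hft⟩

lemma eventually_le_of_deriv (hδ : 0 < δ)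
    (hd : ∀ s ≥ T, HasDerivAt f (g s) s)
    (hg : ∀ s ≥ T, A ≤ f s → g s ≤ -δ) : ∀ᶠ t in atTop, f t ≤ A := by
  obtain ⟨t1, ht1, hft1⟩ := reach_below hδ hd hg
  have hb := barrier_upper (T := t1) (fun s hs => hd s (le_trans ht1 hs))
    (fun s hs h => lt_of_le_of_lt (hg s (le_trans ht1 hs) h) (by linarith)) hft1
  exact eventually_atTop.2 ⟨t1, hb⟩

lemma eventually_ge_of_deriv (hδ : 0 < δ)
    (hd : ∀ s ≥ T, HasDerivAt f (g s) s)
    (hg : ∀ s ≥ T, f s ≤ A → δ ≤ g s) : ∀ᶠ t in atTop, A ≤ f t := by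
  obtain ⟨t1, ht1, hft1⟩ := reach_above hδ hd hg
  have hb := barrier_lower (T := t1) (fun s hs => hd s (le_trans ht1 hs))
    (fun s hs h => lt_of_lt_of_le (by linarith) (hg s (le_trans ht1 hs) h)) hft1
  exact eventually_atTop.2 ⟨t1, hb⟩

lemma slope_lt (hδ : 0 < δ)
    (hd : ∀ s ≥ T, HasDerivAt f (g s) s)
    (hg : ∀ s ≥ T, δ ≤ g s) : ∀ t > T, f T + δ * (t - T) / 2 ≤ f t := by
  intro t ht
  have hDer : ∀ x ≥ T, HasDerivAt (fun s => f s - δ / 2 * s) (g x - δ / 2) x := by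
    intro x hx
    exact ((hd x hx).sub ((hasDerivAt_id x).const_mul (δ / 2))).congr_deriv (by simp)
  have hmono : StrictMonoOn (fun s => f s - δ / 2 * s) (Set.Icc T t) := by
    apply strictMonoOn_of_deriv_pos (convex_Icc _ _)
    · exact fun x hx => ((hDer x hx.1).continuousAt).continuousWithinAt
    · intro x hx
      rw [interior_Icc] at hx
      rw [(hDer x hx.1.le).deriv]
      linarith [hg x hx.1.le]
  have := hmono (Set.left_mem_Icc.2 ht.le) (Set.right_mem_Icc.2 ht.le) ht
  simp only at this
  nlinarith

lemma le_of_forall_small {A B K ε0 : ℝ} (hε0 : 0 < ε0) (hK : 0 ≤ K)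
    (h : ∀ ε, 0 < ε → ε < ε0 → A ≤ B + K * ε) : A ≤ B := by
  refine le_of_forall_pos_le_add fun η hη => ?_
  have hK1 : 0 < K + 1 := by linarith
  have hε : 0 < min (ε0 / 2) (η / (K + 1)) := lt_min (by linarith) (by positivity)
  have h1 := h _ hε (lt_of_le_of_lt (min_le_left _ _) (by linarith))
  have h2 : min (ε0 / 2) (η / (K + 1)) ≤ η / (K + 1) := min_le_right _ _
  have h3 : K * min (ε0 / 2) (η / (K + 1)) ≤ K * (η / (K + 1)) :=
    mul_le_mul_of_nonneg_left h2 hK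
  have h4 : K * (η / (K + 1)) ≤ η := by
    rw [mul_div_assoc', div_le_iff₀ hK1]
    nlinarith
  linarith
end
section
variable {f g : ℝ → ℝ} {M m : ℝ}

lemma bdd_above_of_ev (hub : ∀ᶠ t in atTop, f t ≤ M) :
    IsBoundedUnder (· ≤ ·) atTop f := ⟨M, eventually_map.mpr hub⟩

lemma bdd_below_of_ev (hlb : ∀ᶠ t in atTop, m ≤ f t) :
    IsBoundedUnder (· ≥ ·) atTop f := ⟨m, eventually_map.mpr hlb⟩

/-- S1: points near the limsup where the derivative is ≤ ε. -/
lemma fluct_sup_le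
    (hd : ∀ t ≥ (0:ℝ), HasDerivAt f (g t) t)
    (hub : ∀ᶠ t in atTop, f t ≤ M)
    (hlb : ∀ᶠ t in atTop, m ≤ f t)
    {ε : ℝ} (hε : 0 < ε) :
    ∃ᶠ t in atTop, 0 ≤ t ∧ limsup f atTop - ε ≤ f t ∧ g t ≤ ε := by
  have hcb : IsCoboundedUnder (· ≤ ·) atTop f := (bdd_below_of_ev hlb).isCoboundedUnder_flip
  set L := limsup f atTop with hL
  have hfreq : ∃ᶠ t in atTop, L - ε < f t :=
    frequently_lt_of_lt_limsup hcb (by linarith [sub_lt_self L hε])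
  by_contra hcon
  rw [not_frequently] at hcon
  obtain ⟨T, hT⟩ := eventually_atTop.1 ((hcon.and hub).and (eventually_ge_atTop 0))
  -- hT : ∀ t ≥ T, (¬(0 ≤ t ∧ L - ε ≤ f t ∧ g t ≤ ε) ∧ f t ≤ M) ∧ 0 ≤ t
  have hkey : ∀ t ≥ T, L - ε ≤ f t → ε < g t := by
    intro t ht hft
    have h1 := hT t ht
    by_contra hgt
    push_neg at hgt
    exact h1.1.1 ⟨h1.2, hft, hgt⟩
  obtain ⟨t0, hft0, ht0⟩ := (hfreq.and_eventually (eventually_ge_atTop T)).exists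
  have habove : ∀ t ≥ t0, L - ε < f t :=
    barrier_above (fun s hs => hd s (le_trans (hT t0 ht0).2 hs))
      (fun s hs h => lt_trans hε (hkey s (le_trans ht0 hs) h)) hft0
  have hgs : ∀ s ≥ t0, ε ≤ g s := fun s hs =>
    (hkey s (le_trans ht0 hs) (habove s hs).le).le
  obtain ⟨t2, ht2, hft2⟩ := reach_above (A := M + 1) hε
    (fun s hs => hd s (le_trans (hT t0 ht0).2 hs)) (fun s hs _ => hgs s hs)
  have := (hT t2 (le_trans ht0 ht2)).1.2
  linarith

/-- S2: points near the limsup where the derivative is ≥ -ε. -/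
lemma fluct_sup_ge
    (hd : ∀ t ≥ (0:ℝ), HasDerivAt f (g t) t)
    (hub : ∀ᶠ t in atTop, f t ≤ M)
    (hlb : ∀ᶠ t in atTop, m ≤ f t)
    {ε : ℝ} (hε : 0 < ε) :
    ∃ᶠ t in atTop, 0 ≤ t ∧ limsup f atTop - ε ≤ f t ∧ -ε ≤ g t := by
  have hcb : IsCoboundedUnder (· ≤ ·) atTop f := (bdd_below_of_ev hlb).isCoboundedUnder_flip
  set L := limsup f atTop with hL
  have hfreq : ∃ᶠ t in atTop, L - ε < f t :=
    frequently_lt_of_lt_limsup hcb (by linarith [sub_lt_self L hε])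
  by_contra hcon
  rw [not_frequently] at hcon
  obtain ⟨T, hT⟩ := eventually_atTop.1 (hcon.and (eventually_ge_atTop 0))
  have hkey : ∀ t ≥ T, L - ε ≤ f t → g t ≤ -ε := by
    intro t ht hft
    have h1 := hT t ht
    by_contra hgt
    push_neg at hgt
    exact h1.1 ⟨h1.2, hft, hgt.le⟩
  have hev : ∀ᶠ t in atTop, f t ≤ L - ε :=
    eventually_le_of_deriv hε (fun s hs => hd s (le_trans (hT T le_rfl).2 hs)) hkey
  obtain ⟨t, hft, hft2⟩ := (hfreq.and_eventually hev).exists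
  linarith

/-- S3: points near the liminf where the derivative is ≥ -ε. -/
lemma fluct_inf_ge
    (hd : ∀ t ≥ (0:ℝ), HasDerivAt f (g t) t)
    (hub : ∀ᶠ t in atTop, f t ≤ M)
    (hlb : ∀ᶠ t in atTop, m ≤ f t)
    {ε : ℝ} (hε : 0 < ε) :
    ∃ᶠ t in atTop, 0 ≤ t ∧ f t ≤ liminf f atTop + ε ∧ -ε ≤ g t := by
  have hcb : IsCoboundedUnder (· ≥ ·) atTop f := (bdd_above_of_ev hub).isCoboundedUnder_flip
  set L := liminf f atTop with hL
  have hfreq : ∃ᶠ t in atTop, f t < L + ε :=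
    frequently_lt_of_liminf_lt hcb (by linarith [lt_add_of_pos_right L hε])
  by_contra hcon
  rw [not_frequently] at hcon
  obtain ⟨T, hT⟩ := eventually_atTop.1 ((hcon.and hlb).and (eventually_ge_atTop 0))
  have hkey : ∀ t ≥ T, f t ≤ L + ε → g t < -ε := by
    intro t ht hft
    have h1 := hT t ht
    by_contra hgt
    push_neg at hgt
    exact h1.1.1 ⟨h1.2, hft, hgt⟩
  obtain ⟨t0, hft0, ht0⟩ := (hfreq.and_eventually (eventually_ge_atTop T)).exists
  have hbelow : ∀ t ≥ t0, f t < L + ε :=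
    barrier_below (fun s hs => hd s (le_trans (hT t0 ht0).2 hs))
      (fun s hs h => hkey s (le_trans ht0 hs) h |>.trans_le (by linarith)) hft0
  have hgs : ∀ s ≥ t0, g s ≤ -ε := fun s hs =>
    (hkey s (le_trans ht0 hs) (hbelow s hs).le).le
  obtain ⟨t2, ht2, hft2⟩ := reach_below (A := m - 1) hε
    (fun s hs => hd s (le_trans (hT t0 ht0).2 hs)) (fun s hs _ => hgs s hs)
  have := (hT t2 (le_trans ht0 ht2)).1.2
  linarith

/-- S4: points near the liminf where the derivative is ≤ ε. -/
lemma fluct_inf_le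
    (hd : ∀ t ≥ (0:ℝ), HasDerivAt f (g t) t)
    (hub : ∀ᶠ t in atTop, f t ≤ M)
    (hlb : ∀ᶠ t in atTop, m ≤ f t)
    {ε : ℝ} (hε : 0 < ε) :
    ∃ᶠ t in atTop, 0 ≤ t ∧ f t ≤ liminf f atTop + ε ∧ g t ≤ ε := by
  have hcb : IsCoboundedUnder (· ≥ ·) atTop f := (bdd_above_of_ev hub).isCoboundedUnder_flip
  set L := liminf f atTop with hL
  have hfreq : ∃ᶠ t in atTop, f t < L + ε :=
    frequently_lt_of_liminf_lt hcb (by linarith [lt_add_of_pos_right L hε])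
  by_contra hcon
  rw [not_frequently] at hcon
  obtain ⟨T, hT⟩ := eventually_atTop.1 (hcon.and (eventually_ge_atTop 0))
  have hkey : ∀ t ≥ T, f t ≤ L + ε → ε ≤ g t := by
    intro t ht hft
    have h1 := hT t ht
    by_contra hgt
    push_neg at hgt
    exact h1.1 ⟨h1.2, hft, hgt.le⟩
  have hev : ∀ᶠ t in atTop, L + ε ≤ f t :=
    eventually_ge_of_deriv hε (fun s hs => hd s (le_trans (hT T le_rfl).2 hs)) hkey
  obtain ⟨t, hft, hft2⟩ := (hfreq.and_eventually hev).exists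
  linarith

end

section
variable {w z : ℝ → ℝ} {c d Mw L : ℝ}

lemma lin_bound (hc : 0 < c) (hd0 : 0 < d)
    (hz : ∀ t ≥ (0:ℝ), HasDerivAt z (c * w t - d * z t) t)
    (hwub : ∀ᶠ t in atTop, w t ≤ Mw) :
    ∀ᶠ t in atTop, z t ≤ (c * Mw + 1) / d := by
  obtain ⟨Tw, hTw⟩ := eventually_atTop.1 (hwub.and (eventually_ge_atTop 0))
  refine eventually_le_of_deriv (T := max Tw 0) (δ := 1) one_pos
    (fun s hs => hz s (le_trans (le_max_right _ _) hs)) ?_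
  intro s hs hA
  have hws : w s ≤ Mw := (hTw s (le_trans (le_max_left _ _) hs)).1
  have : d * ((c * Mw + 1) / d) = c * Mw + 1 := by field_simp
  nlinarith [mul_le_mul_of_nonneg_left hA hd0.le, mul_le_mul_of_nonneg_left hws hc.le]

lemma lin_limsup_le (hc : 0 < c) (hd0 : 0 < d)
    (hz : ∀ t ≥ (0:ℝ), HasDerivAt z (c * w t - d * z t) t)
    (hzpos : ∀ t ≥ (0:ℝ), 0 < z t)
    (hwub : ∀ᶠ t in atTop, w t ≤ Mw)
    (hwlb : ∀ᶠ t in atTop, 0 ≤ w t) :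
    d * limsup z atTop ≤ c * limsup w atTop := by
  have hzub := lin_bound hc hd0 hz hwub
  have hzlb : ∀ᶠ t in atTop, 0 ≤ z t := eventually_atTop.2 ⟨0, fun t ht => (hzpos t ht).le⟩
  have hWb : IsBoundedUnder (· ≤ ·) atTop w := bdd_above_of_ev hwub
  refine le_of_forall_small one_pos (by positivity : (0:ℝ) ≤ c + d + 1) ?_
  intro ε hε hε1
  have hev1 : ∀ᶠ t in atTop, w t < limsup w atTop + ε :=
    eventually_lt_of_limsup_lt (by linarith [lt_add_of_pos_right (limsup w atTop) hε]) hWb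
  obtain ⟨t, ⟨ht0, hzt, hgt⟩, hwt⟩ :=
    ((fluct_sup_ge hz hzub hzlb hε).and_eventually hev1).exists
  nlinarith [mul_le_mul_of_nonneg_left hzt hd0.le, mul_le_mul_of_nonneg_left hwt.le hc.le]

lemma lin_liminf_ge (hc : 0 < c) (hd0 : 0 < d)
    (hz : ∀ t ≥ (0:ℝ), HasDerivAt z (c * w t - d * z t) t)
    (hzpos : ∀ t ≥ (0:ℝ), 0 < z t)
    (hwub : ∀ᶠ t in atTop, w t ≤ Mw)
    (hwlb : ∀ᶠ t in atTop, 0 ≤ w t) :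
    c * liminf w atTop ≤ d * liminf z atTop := by
  have hzub := lin_bound hc hd0 hz hwub
  have hzlb : ∀ᶠ t in atTop, 0 ≤ z t := eventually_atTop.2 ⟨0, fun t ht => (hzpos t ht).le⟩
  have hWb : IsBoundedUnder (· ≥ ·) atTop w := bdd_below_of_ev hwlb
  refine le_of_forall_small one_pos (by positivity : (0:ℝ) ≤ c + d + 1) ?_
  intro ε hε hε1
  have hev1 : ∀ᶠ t in atTop, liminf w atTop - ε < w t :=
    eventually_lt_of_lt_liminf (by linarith [sub_lt_self (liminf w atTop) hε]) hWb
  obtain ⟨t, ⟨ht0, hzt, hgt⟩, hwt⟩ :=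
    ((fluct_inf_le hz hzub hzlb hε).and_eventually hev1).exists
  nlinarith [mul_le_mul_of_nonneg_left hzt hd0.le, mul_le_mul_of_nonneg_left hwt.le hc.le]

lemma lin_tendsto (hc : 0 < c) (hd0 : 0 < d)
    (hz : ∀ t ≥ (0:ℝ), HasDerivAt z (c * w t - d * z t) t)
    (hzpos : ∀ t ≥ (0:ℝ), 0 < z t)
    (hwpos : ∀ t ≥ (0:ℝ), 0 < w t)
    (hw : Tendsto w atTop (nhds L)) : Tendsto z atTop (nhds (c * L / d)) := by
  have hwub : ∀ᶠ t in atTop, w t ≤ L + 1 := hw.eventually (eventually_le_nhds (by linarith))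
  have hwlb : ∀ᶠ t in atTop, 0 ≤ w t := eventually_atTop.2 ⟨0, fun t ht => (hwpos t ht).le⟩
  have h1 := lin_limsup_le hc hd0 hz hzpos hwub hwlb
  have h2 := lin_liminf_ge hc hd0 hz hzpos hwub hwlb
  rw [hw.limsup_eq] at h1
  rw [hw.liminf_eq] at h2
  have hzub := lin_bound hc hd0 hz hwub
  have hzlb : ∀ᶠ t in atTop, 0 ≤ z t := eventually_atTop.2 ⟨0, fun t ht => (hzpos t ht).le⟩
  refine tendsto_of_le_liminf_of_limsup_le ?_ ?_ (bdd_above_of_ev hzub) (bdd_below_of_ev hzlb)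
  · rw [div_le_iff₀ hd0]
    linarith [h2]
  · rw [le_div_iff₀ hd0]
    linarith [h1]
end

section
variable {u v p : ℝ → ℝ} {K A κ l c1 c2 : ℝ}

lemma core_bound
    (hK : 0 < K) (hA : 0 < A) (hκ : 0 < κ) (hl : 0 < l) (hc1 : 0 < c1) (hc2 : 0 ≤ c2)
    (hu : ∀ t ≥ (0:ℝ), HasDerivAt u
      ((K / (1 + c1 * u t + c2 * v t) - A) * u t - κ * u t + l * p t) t)
    (hp : ∀ t ≥ (0:ℝ), HasDerivAt p (κ * u t - l * p t) t)
    (hpos : ∀ t ≥ (0:ℝ), 0 < u t ∧ 0 < p t ∧ 0 < v t) :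
    ∃ M, 0 < M ∧ (∀ᶠ t in atTop, u t ≤ M) ∧ (∀ᶠ t in atTop, p t ≤ M) := by
  set mm := min κ l with hmm
  have hmm0 : 0 < mm := lt_min hκ hl
  set C : ℝ := 2 * κ * K / c1 with hC
  have hC0 : 0 < C := by positivity
  set AW : ℝ := (C + 1) * (2 * κ + A) / (A * mm) with hAW
  have hAW0 : 0 < AW := by positivity
  have hW : ∀ t ≥ (0:ℝ), HasDerivAt (fun s => 2 * κ * u s + (2 * κ + A) * p s)
      (2 * κ * ((K / (1 + c1 * u t + c2 * v t) - A) * u t - κ * u t + l * p t)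
        + (2 * κ + A) * (κ * u t - l * p t)) t :=
    fun t ht => ((hu t ht).const_mul (2 * κ)).add ((hp t ht).const_mul (2 * κ + A))
  have hkey : ∀ s ≥ (0:ℝ), AW ≤ 2 * κ * u s + (2 * κ + A) * p s →
      (2 * κ * ((K / (1 + c1 * u s + c2 * v s) - A) * u s - κ * u s + l * p s)
        + (2 * κ + A) * (κ * u s - l * p s)) ≤ -1 := by
    intro s hs hWs
    obtain ⟨hu0, hp0, hv0⟩ := hpos s hs
    set D := 1 + c1 * u s + c2 * v s with hD
    have hD0 : 0 < D := by nlinarith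
    have hFu : K / D * u s ≤ K / c1 := by
      rw [div_mul_eq_mul_div, div_le_div_iff₀ hD0 hc1]
      have h2 : K * D = K * (1 + c1 * u s + c2 * v s) := by rw [hD]
      have h1 : 0 ≤ K * (1 + c2 * v s) := by positivity
      nlinarith [h1, h2]
    have hsum : AW / (2 * κ + A) ≤ u s + p s := by
      rw [div_le_iff₀ (by linarith)]
      nlinarith
    have h7 : mm * (u s + p s) ≤ κ * u s + l * p s := by
      nlinarith [min_le_left κ l, min_le_right κ l]
    have h8 : mm * (AW / (2 * κ + A)) ≤ mm * (u s + p s) :=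
      mul_le_mul_of_nonneg_left hsum hmm0.le
    have h9 : mm * (AW / (2 * κ + A)) = (C + 1) / A := by
      rw [hAW]; field_simp
    have h10 : (C + 1) / A ≤ κ * u s + l * p s := by
      rw [h9] at h8; linarith
    have h11 : C + 1 ≤ A * (κ * u s + l * p s) := by
      rw [div_le_iff₀ hA] at h10; linarith [h10]
    have hexp : 2 * κ * ((K / D - A) * u s - κ * u s + l * p s)
        + (2 * κ + A) * (κ * u s - l * p s)
        = 2 * κ * (K / D * u s) - A * (κ * u s + l * p s) := by ring
    rw [hexp]
    have h12 : 2 * κ * (K / D * u s) ≤ 2 * κ * (K / c1) :=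
      mul_le_mul_of_nonneg_left hFu (by positivity)
    have h13 : 2 * κ * (K / c1) = C := by rw [hC]; ring
    linarith
  have hevW : ∀ᶠ t in atTop, 2 * κ * u t + (2 * κ + A) * p t ≤ AW :=
    eventually_le_of_deriv (T := 0) one_pos hW (fun s hs h => hkey s hs h)
  refine ⟨AW / (2 * κ) + AW / (2 * κ + A) + 1, by positivity, ?_, ?_⟩
  · refine (hevW.and (eventually_ge_atTop 0)).mono ?_
    rintro t ⟨h1, h2⟩
    obtain ⟨hu0, hp0, hv0⟩ := hpos t h2
    have : u t ≤ AW / (2 * κ) := by rw [le_div_iff₀ (by positivity)]; nlinarith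
    have h4 : 0 < AW / (2 * κ + A) := by positivity
    linarith
  · refine (hevW.and (eventually_ge_atTop 0)).mono ?_
    rintro t ⟨h1, h2⟩
    obtain ⟨hu0, hp0, hv0⟩ := hpos t h2
    have : p t ≤ AW / (2 * κ + A) := by rw [le_div_iff₀ (by positivity)]; nlinarith
    have h4 : 0 < AW / (2 * κ) := by positivity
    linarith
end

set_option maxHeartbeats 1000000
section
variable {u v p : ℝ → ℝ} {K A κ l c1 c2 Mu Mp Mv : ℝ}

lemma core_up
    (hK : 0 < K) (hA : 0 < A) (hκ : 0 < κ) (hl : 0 < l) (hc1 : 0 < c1) (hc2 : 0 ≤ c2)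
    (hu : ∀ t ≥ (0:ℝ), HasDerivAt u
      ((K / (1 + c1 * u t + c2 * v t) - A) * u t - κ * u t + l * p t) t)
    (hp : ∀ t ≥ (0:ℝ), HasDerivAt p (κ * u t - l * p t) t)
    (hpos : ∀ t ≥ (0:ℝ), 0 < u t ∧ 0 < p t ∧ 0 < v t)
    (hbu : ∀ᶠ t in atTop, u t ≤ Mu) (hbp : ∀ᶠ t in atTop, p t ≤ Mp)
    (hbv : ∀ᶠ t in atTop, v t ≤ Mv)
    (hX : 0 < limsup u atTop) :
    A * (1 + c1 * limsup u atTop + c2 * liminf v atTop) ≤ K := by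
  have hupos : ∀ᶠ t in atTop, 0 ≤ u t := eventually_atTop.2 ⟨0, fun t ht => (hpos t ht).1.le⟩
  have hppos : ∀ᶠ t in atTop, 0 ≤ p t := eventually_atTop.2 ⟨0, fun t ht => (hpos t ht).2.1.le⟩
  have hvpos : ∀ᶠ t in atTop, 0 ≤ v t := eventually_atTop.2 ⟨0, fun t ht => (hpos t ht).2.2.le⟩
  set X := limsup u atTop with hXdef
  set P := limsup p atTop with hPdef
  set m := liminf v atTop with hmdef
  have hPX : l * P ≤ κ * X :=
    lin_limsup_le hκ hl hp (fun t ht => (hpos t ht).2.1) hbu hupos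
  have hm0 : 0 ≤ m :=
    le_liminf_of_le ((bdd_above_of_ev hbv).isCoboundedUnder_flip) hvpos
  set C1 : ℝ := 1 + κ + l with hC1def
  have hC10 : 0 < C1 := by positivity
  set D0 : ℝ := 1 + c1 * X + c2 * m with hD0def
  have hD00 : 0 < D0 := by nlinarith [mul_pos hc1 hX, mul_nonneg hc2 hm0]
  set Kc : ℝ := 2 * C1 / X * D0 + A * (c1 + c2) with hKcdef
  have hKc0 : 0 ≤ Kc := by
    rw [hKcdef]
    have h1 : 0 ≤ 2 * C1 / X * D0 := by positivity
    have h2 : 0 ≤ A * (c1 + c2) := mul_nonneg hA.le (by linarith)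
    linarith
  have hε00 : 0 < min (X / 2) (1 / (2 * (c2 + 1))) := lt_min (by linarith) (by positivity)
  refine le_of_forall_small hε00 hKc0 ?_
  intro ε hε hεlt
  have hεX : ε < X / 2 := lt_of_lt_of_le hεlt (min_le_left _ _)
  have hεc : ε < 1 / (2 * (c2 + 1)) := lt_of_lt_of_le hεlt (min_le_right _ _)
  have hc2e : c2 * ε ≤ 1 / 2 := by
    have h1 : c2 * ε ≤ c2 * (1 / (2 * (c2 + 1))) := mul_le_mul_of_nonneg_left hεc.le hc2
    have h2 : c2 * (1 / (2 * (c2 + 1))) ≤ 1 / 2 := by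
      rw [mul_one_div, div_le_div_iff₀ (by positivity) (by norm_num)]
      linarith
    linarith
  have he1 : ∀ᶠ t in atTop, u t < X + ε :=
    eventually_lt_of_limsup_lt (by linarith) (bdd_above_of_ev hbu)
  have he2 : ∀ᶠ t in atTop, p t < P + ε :=
    eventually_lt_of_limsup_lt (by linarith [lt_add_of_pos_right P hε]) (bdd_above_of_ev hbp)
  have he3 : ∀ᶠ t in atTop, m - ε < v t :=
    eventually_lt_of_lt_liminf (by linarith [sub_lt_self m hε]) (bdd_below_of_ev hvpos)
  obtain ⟨t, ⟨ht0, hut, hgt⟩, ⟨hut2, hpt⟩, hvt⟩ :=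
    ((fluct_sup_ge hu hbu hupos hε).and_eventually ((he1.and he2).and he3)).exists
  obtain ⟨hu0, hp0, hv0⟩ := hpos t ht0
  set D := 1 + c1 * u t + c2 * v t with hDdef
  set Dh : ℝ := 1 + c1 * (X - ε) + c2 * (m - ε) with hDhdef
  have hDh0 : 0 < Dh := by
    nlinarith [mul_nonneg hc1.le (by linarith : (0:ℝ) ≤ X - ε), mul_nonneg hc2 hm0]
  have hDhD : Dh ≤ D := by
    have h1 : c1 * (X - ε) ≤ c1 * u t := mul_le_mul_of_nonneg_left hut hc1.le
    have h2 : c2 * (m - ε) ≤ c2 * v t := mul_le_mul_of_nonneg_left hvt.le hc2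
    rw [hDhdef, hDdef]; linarith
  have hD0' : 0 < D := lt_of_lt_of_le hDh0 hDhD
  have hF : K / D ≤ K / Dh := div_le_div_of_nonneg_left hK.le hDh0 hDhD
  -- from the fluctuation point
  have hstep : (A - K / D) * u t ≤ C1 * ε := by
    have h1 : κ * (X - ε) ≤ κ * u t := mul_le_mul_of_nonneg_left hut hκ.le
    have h2 : l * p t ≤ l * (P + ε) := mul_le_mul_of_nonneg_left hpt.le hl.le
    nlinarith [hgt]
  have hstep2 : (A - K / Dh) * u t ≤ C1 * ε := by
    have : (A - K / Dh) * u t ≤ (A - K / D) * u t :=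
      mul_le_mul_of_nonneg_right (by linarith) hu0.le
    linarith
  have hkey : A ≤ K / Dh + 2 * C1 / X * ε := by
    rcases le_or_gt (A - K / Dh) 0 with hcase | hcase
    · have : 0 ≤ 2 * C1 / X * ε := by positivity
      linarith
    · have hXu : X / 2 ≤ u t := by linarith
      have h3 : (A - K / Dh) * (X / 2) ≤ (A - K / Dh) * u t :=
        mul_le_mul_of_nonneg_left hXu hcase.le
      have h4 : (A - K / Dh) * (X / 2) ≤ C1 * ε := by linarith
      have h5 : A - K / Dh ≤ 2 * C1 / X * ε := by
        rw [show 2 * C1 / X * ε = C1 * ε / (X / 2) by field_simp,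
          le_div_iff₀ (by linarith : (0:ℝ) < X / 2)]
        linarith
      linarith
  -- multiply by Dh
  have hmul : A * Dh ≤ K + 2 * C1 / X * ε * Dh := by
    have := mul_le_mul_of_nonneg_right hkey hDh0.le
    rwa [add_mul, div_mul_cancel₀ _ (ne_of_gt hDh0)] at this
  have hDhD0 : Dh ≤ D0 := by
    rw [hDhdef, hD0def]
    nlinarith [mul_nonneg hc1.le hε.le, mul_nonneg hc2 hε.le]
  have hfin : A * D0 ≤ K + Kc * ε := by
    have h6 : A * D0 = A * Dh + A * (c1 + c2) * ε := by rw [hDhdef, hD0def]; ring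
    have h7 : 2 * C1 / X * ε * Dh ≤ 2 * C1 / X * ε * D0 :=
      mul_le_mul_of_nonneg_left hDhD0 (by positivity)
    rw [hKcdef]
    nlinarith [h6, h7, hmul]
  exact hfin
end

set_option maxHeartbeats 1000000
section
variable {u v p : ℝ → ℝ} {K A κ l c1 c2 Mu Mp Mv : ℝ}

lemma core_down
    (hK : 0 < K) (hA : 0 < A) (hκ : 0 < κ) (hl : 0 < l) (hc1 : 0 < c1) (hc2 : 0 ≤ c2)
    (hu : ∀ t ≥ (0:ℝ), HasDerivAt u
      ((K / (1 + c1 * u t + c2 * v t) - A) * u t - κ * u t + l * p t) t)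
    (hp : ∀ t ≥ (0:ℝ), HasDerivAt p (κ * u t - l * p t) t)
    (hpos : ∀ t ≥ (0:ℝ), 0 < u t ∧ 0 < p t ∧ 0 < v t)
    (hbu : ∀ᶠ t in atTop, u t ≤ Mu) (hbp : ∀ᶠ t in atTop, p t ≤ Mp)
    (hbv : ∀ᶠ t in atTop, v t ≤ Mv)
    (hx : 0 < liminf u atTop) :
    K ≤ A * (1 + c1 * liminf u atTop + c2 * limsup v atTop) := by
  have hupos : ∀ᶠ t in atTop, 0 ≤ u t := eventually_atTop.2 ⟨0, fun t ht => (hpos t ht).1.le⟩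
  have hppos : ∀ᶠ t in atTop, 0 ≤ p t := eventually_atTop.2 ⟨0, fun t ht => (hpos t ht).2.1.le⟩
  have hvpos : ∀ᶠ t in atTop, 0 ≤ v t := eventually_atTop.2 ⟨0, fun t ht => (hpos t ht).2.2.le⟩
  set x' := liminf u atTop with hxdef
  set P' := liminf p atTop with hPdef
  set V := limsup v atTop with hVdef
  have hPx : κ * x' ≤ l * P' :=
    lin_liminf_ge hκ hl hp (fun t ht => (hpos t ht).2.1) hbu hupos
  have hV0 : 0 ≤ V := by
    have h1 : (0:ℝ) ≤ liminf v atTop :=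
      le_liminf_of_le ((bdd_above_of_ev hbv).isCoboundedUnder_flip) hvpos
    have h2 : liminf v atTop ≤ V :=
      liminf_le_limsup (bdd_above_of_ev hbv) (bdd_below_of_ev hvpos)
    linarith
  set C1 : ℝ := 1 + κ + l with hC1def
  have hC10 : 0 < C1 := by positivity
  set D1 : ℝ := 1 + c1 * (x' + 1) + c2 * (V + 1) with hD1def
  have hD10 : 0 < D1 := by
    rw [hD1def]
    have h1 : 0 < c1 * (x' + 1) := mul_pos hc1 (by linarith)
    have h2 : 0 ≤ c2 * (V + 1) := mul_nonneg hc2 (by linarith)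
    linarith
  set Kc : ℝ := A * (c1 + c2) + 2 * C1 / x' * D1 with hKcdef
  have hKc0 : 0 ≤ Kc := by
    rw [hKcdef]
    have h1 : 0 ≤ 2 * C1 / x' * D1 := by positivity
    have h2 : 0 ≤ A * (c1 + c2) := mul_nonneg hA.le (by linarith)
    linarith
  have hε00 : 0 < min (x' / 2) 1 := lt_min (by linarith) one_pos
  refine le_of_forall_small hε00 hKc0 ?_
  intro ε hε hεlt
  have hεx : ε < x' / 2 := lt_of_lt_of_le hεlt (min_le_left _ _)
  have hε1 : ε < 1 := lt_of_lt_of_le hεlt (min_le_right _ _)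
  have he1 : ∀ᶠ t in atTop, x' - ε < u t :=
    eventually_lt_of_lt_liminf (by linarith) (bdd_below_of_ev hupos)
  have he2 : ∀ᶠ t in atTop, P' - ε < p t :=
    eventually_lt_of_lt_liminf (by linarith [sub_lt_self P' hε]) (bdd_below_of_ev hppos)
  have he3 : ∀ᶠ t in atTop, v t < V + ε :=
    eventually_lt_of_limsup_lt (by linarith [lt_add_of_pos_right V hε]) (bdd_above_of_ev hbv)
  obtain ⟨t, ⟨ht0, hut, hgt⟩, ⟨hut2, hpt⟩, hvt⟩ :=
    ((fluct_inf_le hu hbu hupos hε).and_eventually ((he1.and he2).and he3)).exists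
  obtain ⟨hu0, hp0, hv0⟩ := hpos t ht0
  set D := 1 + c1 * u t + c2 * v t with hDdef
  set Dc : ℝ := 1 + c1 * (x' + ε) + c2 * (V + ε) with hDcdef
  have hD0' : 0 < D := by
    rw [hDdef]
    nlinarith [mul_pos hc1 hu0, mul_nonneg hc2 hv0.le]
  have hDDc : D ≤ Dc := by
    have h1 : c1 * u t ≤ c1 * (x' + ε) := mul_le_mul_of_nonneg_left hut hc1.le
    have h2 : c2 * v t ≤ c2 * (V + ε) := mul_le_mul_of_nonneg_left hvt.le hc2
    rw [hDdef, hDcdef]; linarith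
  have hDc0 : 0 < Dc := lt_of_lt_of_le hD0' hDDc
  have hF : K / Dc ≤ K / D := div_le_div_of_nonneg_left hK.le hD0' hDDc
  have hstep : (K / D - A) * u t ≤ C1 * ε := by
    have h1 : κ * u t ≤ κ * (x' + ε) := mul_le_mul_of_nonneg_left hut hκ.le
    have h2 : l * (P' - ε) ≤ l * p t := mul_le_mul_of_nonneg_left hpt.le hl.le
    nlinarith [hgt]
  have hstep2 : (K / Dc - A) * u t ≤ C1 * ε := by
    have : (K / Dc - A) * u t ≤ (K / D - A) * u t :=
      mul_le_mul_of_nonneg_right (by linarith) hu0.le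
    linarith
  have hkey : K / Dc ≤ A + 2 * C1 / x' * ε := by
    rcases le_or_gt (K / Dc - A) 0 with hcase | hcase
    · have : 0 ≤ 2 * C1 / x' * ε := by positivity
      linarith
    · have hxu : x' / 2 ≤ u t := by linarith
      have h3 : (K / Dc - A) * (x' / 2) ≤ (K / Dc - A) * u t :=
        mul_le_mul_of_nonneg_left hxu hcase.le
      have h5 : K / Dc - A ≤ 2 * C1 / x' * ε := by
        rw [show 2 * C1 / x' * ε = C1 * ε / (x' / 2) by field_simp,
          le_div_iff₀ (by linarith : (0:ℝ) < x' / 2)]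
        linarith
      linarith
  have hmul : K ≤ A * Dc + 2 * C1 / x' * ε * Dc := by
    have := mul_le_mul_of_nonneg_right hkey hDc0.le
    rwa [div_mul_cancel₀ _ (ne_of_gt hDc0), add_mul] at this
  have hDcD1 : Dc ≤ D1 := by
    rw [hDcdef, hD1def]
    have h1 : c1 * (x' + ε) ≤ c1 * (x' + 1) := mul_le_mul_of_nonneg_left (by linarith) hc1.le
    have h2 : c2 * (V + ε) ≤ c2 * (V + 1) := mul_le_mul_of_nonneg_left (by linarith) hc2
    linarith
  have h7 : 2 * C1 / x' * ε * Dc ≤ 2 * C1 / x' * ε * D1 :=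
    mul_le_mul_of_nonneg_left hDcD1 (by positivity)
  have h6 : A * Dc = A * (1 + c1 * x' + c2 * V) + A * (c1 + c2) * ε := by
    rw [hDcdef]; ring
  rw [hKcdef]
  nlinarith [hmul, h7, h6]
end

section
variable {u v p : ℝ → ℝ} {K A κ l c1 c2 Mu Mv V0 : ℝ}

lemma core_persist
    (hK : 0 < K) (hA : 0 < A) (hκ : 0 < κ) (hl : 0 < l) (hc1 : 0 < c1) (hc2 : 0 ≤ c2)
    (hu : ∀ t ≥ (0:ℝ), HasDerivAt u
      ((K / (1 + c1 * u t + c2 * v t) - A) * u t - κ * u t + l * p t) t)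
    (hp : ∀ t ≥ (0:ℝ), HasDerivAt p (κ * u t - l * p t) t)
    (hpos : ∀ t ≥ (0:ℝ), 0 < u t ∧ 0 < p t ∧ 0 < v t)
    (hbu : ∀ᶠ t in atTop, u t ≤ Mu)
    (hbv : ∀ᶠ t in atTop, v t ≤ Mv)
    (hV0 : 0 ≤ V0) (hVle : limsup v atTop ≤ V0)
    (hgap : A * (1 + c2 * V0) < K) :
    0 < liminf u atTop := by
  set ε1 : ℝ := (K - A * (1 + c2 * V0)) / (2 * A * (c1 + c2 + 1)) with hε1def
  clear_value ε1
  have hε1 : 0 < ε1 := by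
    rw [hε1def]
    exact div_pos (by linarith) (mul_pos (by linarith) (by linarith))
  set Dm : ℝ := 1 + c1 * ε1 + c2 * (V0 + ε1) with hDmdef
  clear_value Dm
  have hDm0 : 0 < Dm := by
    rw [hDmdef]
    have h1 : 0 < c1 * ε1 := mul_pos hc1 hε1
    have h2 : 0 ≤ c2 * (V0 + ε1) := mul_nonneg hc2 (by linarith)
    linarith
  have hhalf : A * (c1 + c2 + 1) * ε1 = (K - A * (1 + c2 * V0)) / 2 := by
    rw [hε1def]; field_simp
  have hADm : A * Dm < K := by
    have h1 : A * (c1 + c2) * ε1 ≤ A * (c1 + c2 + 1) * ε1 := by nlinarith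
    have h2 : A * Dm = A * (1 + c2 * V0) + A * (c1 + c2) * ε1 := by rw [hDmdef]; ring
    linarith
  set δ : ℝ := K / Dm - A with hδdef
  clear_value δ
  have hδ0 : 0 < δ := by
    rw [hδdef, sub_pos, lt_div_iff₀ hDm0]
    linarith
  set p0 : ℝ := 1 + δ / (2 * κ) with hp0def
  clear_value p0
  have hp01 : 1 < p0 := by
    have h : 0 < δ / (2 * κ) := by positivity
    rw [hp0def]; linarith
  have hp00 : 0 < p0 := by linarith
  have hvev : ∀ᶠ t in atTop, v t < V0 + ε1 :=
    eventually_lt_of_limsup_lt (by linarith : limsup v atTop < V0 + ε1) (bdd_above_of_ev hbv)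
  obtain ⟨T, hT⟩ := eventually_atTop.1 (hvev.and (eventually_ge_atTop 0))
  have hT0 : (0:ℝ) ≤ T := (hT T le_rfl).2
  have hWd : ∀ s ≥ T, HasDerivAt (fun r => p0 * u r + p r)
      (p0 * ((K / (1 + c1 * u s + c2 * v s) - A) * u s - κ * u s + l * p s)
        + (κ * u s - l * p s)) s :=
    fun s hs => ((hu s (le_trans hT0 hs)).const_mul p0).add (hp s (le_trans hT0 hs))
  set A1 : ℝ := min (p0 * u T + p T) (p0 * ε1) with hA1def
  clear_value A1
  have hA10 : 0 < A1 := by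
    obtain ⟨hu0, hp0', hv0⟩ := hpos T hT0
    rw [hA1def]
    exact lt_min (by nlinarith [mul_pos hp00 hu0]) (mul_pos hp00 hε1)
  have hkey : ∀ s ≥ T, p0 * u s + p s ≤ A1 →
      0 < p0 * ((K / (1 + c1 * u s + c2 * v s) - A) * u s - κ * u s + l * p s)
        + (κ * u s - l * p s) := by
    intro s hs hWs
    have hs0 : (0:ℝ) ≤ s := le_trans hT0 hs
    obtain ⟨hu0, hps, hv0⟩ := hpos s hs0
    have hus : u s ≤ ε1 := by
      have h1 : p0 * u s ≤ p0 * ε1 := by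
        have := min_le_right (p0 * u T + p T) (p0 * ε1)
        rw [← hA1def] at this
        linarith
      exact le_of_mul_le_mul_left (by linarith) hp00
    have hvs : v s ≤ V0 + ε1 := (hT s hs).1.le
    set D := 1 + c1 * u s + c2 * v s with hDdef
    clear_value D
    have hDDm : D ≤ Dm := by
      rw [hDdef, hDmdef]
      have h1 : c1 * u s ≤ c1 * ε1 := mul_le_mul_of_nonneg_left hus hc1.le
      have h2 : c2 * v s ≤ c2 * (V0 + ε1) := mul_le_mul_of_nonneg_left hvs hc2
      linarith
    have hD0 : 0 < D := by
      rw [hDdef]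
      nlinarith [mul_pos hc1 hu0, mul_nonneg hc2 hv0.le]
    have hFδ : A + δ ≤ K / D := by
      have h1 : K / Dm ≤ K / D := div_le_div_of_nonneg_left hK.le hD0 hDDm
      rw [hδdef]; linarith
    have hq : δ ≤ K / D - A := by linarith
    have hp0κ : (p0 - 1) * κ = δ / 2 := by rw [hp0def]; field_simp; ring
    have e1 : p0 * ((K / D - A) * u s - κ * u s + l * p s) + (κ * u s - l * p s)
        = p0 * ((K / D - A) * u s) - (p0 - 1) * (κ * u s) + (p0 - 1) * (l * p s) := by ring
    rw [e1]
    have h3 : (p0 - 1) * (κ * u s) = δ / 2 * u s := by rw [← mul_assoc, hp0κ]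
    have h4 : 0 < (p0 - 1) * (l * p s) := mul_pos (by linarith) (mul_pos hl hps)
    have h5 : δ * u s ≤ p0 * ((K / D - A) * u s) := by
      have h6 : δ * u s ≤ (K / D - A) * u s := mul_le_mul_of_nonneg_right hq hu0.le
      have h7 : (K / D - A) * u s ≤ p0 * ((K / D - A) * u s) := by
        nlinarith [mul_nonneg (sub_pos.2 hp01).le (le_trans (mul_pos hδ0 hu0).le h6)]
      linarith
    rw [h3]
    have h8 : 0 < δ / 2 * u s := mul_pos (by linarith) hu0
    nlinarith [mul_pos hδ0 hu0, h8, h4, h5]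
  have hWlb : ∀ t ≥ T, A1 ≤ p0 * u t + p t :=
    barrier_lower hWd hkey (by rw [hA1def]; exact min_le_left _ _)
  -- second barrier for u itself
  set η : ℝ := min (A1 / (2 * p0)) (l * A1 / (4 * (A + κ))) with hηdef
  clear_value η
  have hη0 : 0 < η := by
    rw [hηdef]
    exact lt_min (div_pos hA10 (by linarith)) (div_pos (mul_pos hl hA10) (by linarith))
  set A2 : ℝ := min (u T) η with hA2def
  clear_value A2
  have hA20 : 0 < A2 := by rw [hA2def]; exact lt_min (hpos T hT0).1 hη0
  have hud : ∀ s ≥ T, HasDerivAt u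
      ((K / (1 + c1 * u s + c2 * v s) - A) * u s - κ * u s + l * p s) s :=
    fun s hs => hu s (le_trans hT0 hs)
  have hkey2 : ∀ s ≥ T, u s ≤ A2 →
      0 < (K / (1 + c1 * u s + c2 * v s) - A) * u s - κ * u s + l * p s := by
    intro s hs hus
    have hs0 : (0:ℝ) ≤ s := le_trans hT0 hs
    obtain ⟨hu0, hps, hv0⟩ := hpos s hs0
    have husη : u s ≤ η := le_trans hus (by rw [hA2def]; exact min_le_right _ _)
    have hps2 : A1 / 2 ≤ p s := by
      have h1 : A1 ≤ p0 * u s + p s := hWlb s hs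
      have h2 : u s * (2 * p0) ≤ A1 :=
        (le_div_iff₀ (by linarith : (0:ℝ) < 2 * p0)).mp
          (le_trans husη (by rw [hηdef]; exact min_le_left _ _))
      nlinarith [h1, h2]
    set D := 1 + c1 * u s + c2 * v s with hDdef
    clear_value D
    have hD0 : 0 < D := by
      rw [hDdef]
      nlinarith [mul_pos hc1 hu0, mul_nonneg hc2 hv0.le]
    have hKD : 0 ≤ K / D * u s := le_of_lt (mul_pos (div_pos hK hD0) hu0)
    have hη2 : (A + κ) * u s ≤ l * A1 / 4 := by
      have h1 : u s * (4 * (A + κ)) ≤ l * A1 :=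
        (le_div_iff₀ (by linarith : (0:ℝ) < 4 * (A + κ))).mp
          (le_trans husη (by rw [hηdef]; exact min_le_right _ _))
      nlinarith [h1]
    have h4 : l * (A1 / 2) ≤ l * p s := mul_le_mul_of_nonneg_left hps2 hl.le
    nlinarith [hA10, mul_pos hl hA10]
  have hulb : ∀ t ≥ T, A2 ≤ u t :=
    barrier_lower hud hkey2 (by rw [hA2def]; exact min_le_left _ _)
  have : A2 ≤ liminf u atTop :=
    le_liminf_of_le ((bdd_above_of_ev hbu).isCoboundedUnder_flip)
      (eventually_atTop.2 ⟨T, hulb⟩)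
  linarith
end

/-- Global stability, case (ii): if `r < R < (b1/b2)·r`, every positive solution
of system (2) converges to the coexistence steady state `E3`. -/
theorem stmt18
    (k1 k2 k3 k4 k5 k6 k7 k8 k9 k10 k11 k12 k13 k14 k15 k16 k17 k18 k19 k20 k21 k22 k23 k24 k25 k26 k27 k28 k29 k30 k31 k32 b1 b2 B r R : ℝ)
    (hk1 : 0 < k1) (hk2 : 0 < k2) (hk3 : 0 < k3) (hk4 : 0 < k4)
    (hk5 : 0 < k5) (hk6 : 0 < k6) (hk7 : 0 < k7) (hk8 : 0 < k8)
    (hk9 : 0 < k9) (hk10 : 0 < k10) (hk11 : 0 < k11) (hk12 : 0 < k12)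
    (hk13 : 0 < k13) (hk14 : 0 < k14) (hk15 : 0 < k15) (hk16 : 0 < k16)
    (hk17 : 0 < k17) (hk18 : 0 < k18) (hk19 : 0 < k19) (hk20 : 0 < k20)
    (hk21 : 0 < k21) (hk22 : 0 < k22) (hk23 : 0 < k23) (hk24 : 0 < k24)
    (hk25 : 0 < k25) (hk26 : 0 < k26) (hk27 : 0 < k27) (hk28 : 0 < k28)
    (hk29 : 0 < k29) (hk30 : 0 < k30) (hk31 : 0 < k31) (hk32 : 0 < k32)
    (hb1 : 0 < b1) (hb2 : 0 < b2) (hB : 0 < B)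
    (hg1 : k5 + k6 + k13 < k1) (hg2 : k21 + k22 + k29 < k17)
    (hg3 : k7 < k9 + k10 + k14) (hg4 : k23 < k25 + k26 + k30)
    (hbb : b2 < b1) (hbB : B < b2)
    (hr : r = (k1 - k5 - k6 - k13) / (b1 * (k5 + k6 + k13)))
    (hR : R = (k17 - k21 - k22 - k29) / (B * (k21 + k22 + k29)))
    (x0 x1 x2 x3 x4 y0 y1 y2 y3 y4 : ℝ → ℝ)
    (hpos : ∀ t ≥ (0:ℝ), 0 < x0 t ∧ 0 < x1 t ∧ 0 < x2 t ∧ 0 < x3 t ∧ 0 < x4 t ∧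
      0 < y0 t ∧ 0 < y1 t ∧ 0 < y2 t ∧ 0 < y3 t ∧ 0 < y4 t)
    (hx0 : ∀ t ≥ (0:ℝ), HasDerivAt x0
      ((k1 / (1 + b1 * x0 t + b2 * y0 t) - k5 - k6 - k13) * x0 t - k2 * x0 t + k3 * x1 t) t)
    (hx1 : ∀ t ≥ (0:ℝ), HasDerivAt x1 (k2 * x0 t - k3 * x1 t) t)
    (hx2 : ∀ t ≥ (0:ℝ), HasDerivAt x2
      ((k4 + k5 + 2 * k6) * x0 t + k7 * x2 t - (k9 + k10 + k14) * x2 t) t)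
    (hx3 : ∀ t ≥ (0:ℝ), HasDerivAt x3
      ((k8 + k9 + 2 * k10) * x2 t - (k11 + k12 + k15) * x3 t) t)
    (hx4 : ∀ t ≥ (0:ℝ), HasDerivAt x4 ((k11 + 2 * k12) * x3 t - k16 * x4 t) t)
    (hy0 : ∀ t ≥ (0:ℝ), HasDerivAt y0
      ((k17 / (1 + B * (x0 t + y0 t)) - k21 - k22 - k29) * y0 t - k18 * y0 t + k19 * y1 t) t)
    (hy1 : ∀ t ≥ (0:ℝ), HasDerivAt y1 (k18 * y0 t - k19 * y1 t) t)
    (hy2 : ∀ t ≥ (0:ℝ), HasDerivAt y2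
      ((k20 + k21 + 2 * k22) * y0 t + k23 * y2 t - (k25 + k26 + k30) * y2 t) t)
    (hy3 : ∀ t ≥ (0:ℝ), HasDerivAt y3
      ((k24 + k25 + 2 * k26) * y2 t - (k27 + k28 + k31) * y3 t) t)
    (hy4 : ∀ t ≥ (0:ℝ), HasDerivAt y4 ((k27 + 2 * k28) * y3 t - k32 * y4 t) t)
    (xbar ybar : ℝ)
    (hxbar : xbar = b2 / (b1 - b2) * (b1 / b2 * r - R))
    (hybar : ybar = b1 / (b1 - b2) * (R - r))
    (hcase1 : r < R) (hcase2 : R < b1 / b2 * r) :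
    Filter.Tendsto x0 Filter.atTop (nhds (xbar)) ∧
      Filter.Tendsto x1 Filter.atTop (nhds (xbar * k2 / k3)) ∧
      Filter.Tendsto x2 Filter.atTop (nhds (xbar * ((k4 + k5 + 2 * k6) / (k9 + k10 + k14 - k7)))) ∧
      Filter.Tendsto x3 Filter.atTop (nhds (xbar * (((k4 + k5 + 2 * k6) * (k8 + k9 + 2 * k10)) / ((k9 + k10 + k14 - k7) * (k11 + k12 + k15))))) ∧
      Filter.Tendsto x4 Filter.atTop (nhds (xbar * (((k4 + k5 + 2 * k6) * (k8 + k9 + 2 * k10) * (k11 + 2 * k12)) / ((k9 + k10 + k14 - k7) * (k11 + k12 + k15) * k16)))) ∧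
      Filter.Tendsto y0 Filter.atTop (nhds (ybar)) ∧
      Filter.Tendsto y1 Filter.atTop (nhds (ybar * k18 / k19)) ∧
      Filter.Tendsto y2 Filter.atTop (nhds (ybar * ((k20 + k21 + 2 * k22) / (k25 + k26 + k30 - k23)))) ∧
      Filter.Tendsto y3 Filter.atTop (nhds (ybar * (((k20 + k21 + 2 * k22) * (k24 + k25 + 2 * k26)) / ((k25 + k26 + k30 - k23) * (k27 + k28 + k31))))) ∧
      Filter.Tendsto y4 Filter.atTop (nhds (ybar * (((k20 + k21 + 2 * k22) * (k24 + k25 + 2 * k26) * (k27 + 2 * k28)) / ((k25 + k26 + k30 - k23) * (k27 + k28 + k31) * k32)))) := by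
  have hax : 0 < k5 + k6 + k13 := by linarith
  have hay : 0 < k21 + k22 + k29 := by linarith
  -- converted derivative hypotheses
  have hx0g : ∀ t ≥ (0:ℝ), HasDerivAt x0
      ((k1 / (1 + b1 * x0 t + b2 * y0 t) - (k5 + k6 + k13)) * x0 t - k2 * x0 t + k3 * x1 t) t := by
    intro t ht
    have h := hx0 t ht
    have e : (k1 / (1 + b1 * x0 t + b2 * y0 t) - k5 - k6 - k13) * x0 t - k2 * x0 t + k3 * x1 t
        = (k1 / (1 + b1 * x0 t + b2 * y0 t) - (k5 + k6 + k13)) * x0 t - k2 * x0 t + k3 * x1 t := by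
      ring
    exact e ▸ h
  have hy0g : ∀ t ≥ (0:ℝ), HasDerivAt y0
      ((k17 / (1 + B * y0 t + B * x0 t) - (k21 + k22 + k29)) * y0 t - k18 * y0 t + k19 * y1 t) t := by
    intro t ht
    have h := hy0 t ht
    have e : (k17 / (1 + B * (x0 t + y0 t)) - k21 - k22 - k29) * y0 t - k18 * y0 t + k19 * y1 t
        = (k17 / (1 + B * y0 t + B * x0 t) - (k21 + k22 + k29)) * y0 t - k18 * y0 t + k19 * y1 t := by
      have e2 : 1 + B * (x0 t + y0 t) = 1 + B * y0 t + B * x0 t := by ring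
      rw [e2]; ring
    exact e ▸ h
  have hposx : ∀ t ≥ (0:ℝ), 0 < x0 t ∧ 0 < x1 t ∧ 0 < y0 t :=
    fun t ht => ⟨(hpos t ht).1, (hpos t ht).2.1, (hpos t ht).2.2.2.2.2.1⟩
  have hposy : ∀ t ≥ (0:ℝ), 0 < y0 t ∧ 0 < y1 t ∧ 0 < x0 t :=
    fun t ht => ⟨(hpos t ht).2.2.2.2.2.1, (hpos t ht).2.2.2.2.2.2.1, (hpos t ht).1⟩
  -- boundedness
  obtain ⟨Mx, hMx0, hMxu, hMxp⟩ :=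
    core_bound hk1 hax hk2 hk3 hb1 hb2.le hx0g hx1 hposx
  obtain ⟨My, hMy0, hMyu, hMyp⟩ :=
    core_bound hk17 hay hk18 hk19 hB hB.le hy0g hy1 hposy
  have hex0 : ∀ᶠ t in atTop, 0 ≤ x0 t :=
    eventually_atTop.2 ⟨0, fun t ht => (hpos t ht).1.le⟩
  have hey0 : ∀ᶠ t in atTop, 0 ≤ y0 t :=
    eventually_atTop.2 ⟨0, fun t ht => (hpos t ht).2.2.2.2.2.1.le⟩
  -- basic constants
  have hr0 : 0 < r := by rw [hr]; exact div_pos (by linarith) (mul_pos hb1 hax)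
  have hR0 : 0 < R := by rw [hR]; exact div_pos (by linarith) (mul_pos hB hay)
  have hk1eq : (k5 + k6 + k13) * (1 + b1 * r) = k1 := by
    rw [hr]; field_simp; ring
  have hk17eq : (k21 + k22 + k29) * (1 + B * R) = k17 := by
    rw [hR]; field_simp; ring
  have hlx0 : (0:ℝ) ≤ liminf x0 atTop :=
    le_liminf_of_le ((bdd_above_of_ev hMxu).isCoboundedUnder_flip) hex0
  have hly0 : (0:ℝ) ≤ liminf y0 atTop :=
    le_liminf_of_le ((bdd_above_of_ev hMyu).isCoboundedUnder_flip) hey0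
  -- weak upper bounds for limsups
  have hYleR : limsup y0 atTop ≤ R := by
    rcases le_or_gt (limsup y0 atTop) 0 with hY | hY
    · linarith
    · have h := core_up hk17 hay hk18 hk19 hB hB.le hy0g hy1 hposy hMyu hMyp hMxu hY
      have h2 : (k21 + k22 + k29) * (1 + B * limsup y0 atTop)
          ≤ (k21 + k22 + k29) * (1 + B * R) := by
        nlinarith only [h, hk17eq, mul_nonneg hay.le (mul_nonneg hB.le hlx0)]
      have h3 : B * limsup y0 atTop ≤ B * R := by
        have := le_of_mul_le_mul_left h2 hay
        linarith only [this]
      exact le_of_mul_le_mul_left h3 hB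
  have hXler : limsup x0 atTop ≤ r := by
    rcases le_or_gt (limsup x0 atTop) 0 with hX | hX
    · linarith
    · have h := core_up hk1 hax hk2 hk3 hb1 hb2.le hx0g hx1 hposx hMxu hMxp hMyu hX
      have h2 : (k5 + k6 + k13) * (1 + b1 * limsup x0 atTop)
          ≤ (k5 + k6 + k13) * (1 + b1 * r) := by
        nlinarith only [h, hk1eq, mul_nonneg hax.le (mul_nonneg hb2.le hly0)]
      have h3 : b1 * limsup x0 atTop ≤ b1 * r := by
        have := le_of_mul_le_mul_left h2 hax
        linarith only [this]
      exact le_of_mul_le_mul_left h3 hb1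
  -- persistence
  have hb2R : b2 * R < b1 * r := by
    have h1 : b2 * R < b2 * (b1 / b2 * r) := (mul_lt_mul_iff_right₀ hb2).2 hcase2
    have h2 : b2 * (b1 / b2 * r) = b1 * r := by field_simp
    linarith only [h1, h2]
  have hgapx : (k5 + k6 + k13) * (1 + b2 * R) < k1 := by
    calc (k5 + k6 + k13) * (1 + b2 * R) < (k5 + k6 + k13) * (1 + b1 * r) :=
          (mul_lt_mul_iff_right₀ hax).2 (by linarith only [hb2R])
      _ = k1 := hk1eq
  have hgapy : (k21 + k22 + k29) * (1 + B * r) < k17 := by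
    have h1 : B * r < B * R := (mul_lt_mul_iff_right₀ hB).2 hcase1
    calc (k21 + k22 + k29) * (1 + B * r) < (k21 + k22 + k29) * (1 + B * R) :=
          (mul_lt_mul_iff_right₀ hay).2 (by linarith only [h1])
      _ = k17 := hk17eq
  have hlx : 0 < liminf x0 atTop :=
    core_persist hk1 hax hk2 hk3 hb1 hb2.le hx0g hx1 hposx hMxu hMyu hR0.le hYleR hgapx
  have hly : 0 < liminf y0 atTop :=
    core_persist hk17 hay hk18 hk19 hB hB.le hy0g hy1 hposy hMyu hMxu hr0.le hXler hgapy
  have hXpos : 0 < limsup x0 atTop :=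
    lt_of_lt_of_le hlx (liminf_le_limsup (bdd_above_of_ev hMxu) (bdd_below_of_ev hex0))
  have hYpos : 0 < limsup y0 atTop :=
    lt_of_lt_of_le hly (liminf_le_limsup (bdd_above_of_ev hMyu) (bdd_below_of_ev hey0))
  -- strong inequalities
  have i1 := core_up hk1 hax hk2 hk3 hb1 hb2.le hx0g hx1 hposx hMxu hMxp hMyu hXpos
  have i2 := core_up hk17 hay hk18 hk19 hB hB.le hy0g hy1 hposy hMyu hMyp hMxu hYpos
  have i3 := core_down hk1 hax hk2 hk3 hb1 hb2.le hx0g hx1 hposx hMxu hMxp hMyu hlx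
  have i4 := core_down hk17 hay hk18 hk19 hB hB.le hy0g hy1 hposy hMyu hMyp hMxu hly
  set X := limsup x0 atTop with hXdef
  set x_ := liminf x0 atTop with hxdef
  set Y := limsup y0 atTop with hYdef
  set y_ := liminf y0 atTop with hydef
  -- scalar reductions
  have e1 : b1 * X + b2 * y_ ≤ b1 * r := by
    have h2 : (k5 + k6 + k13) * (1 + (b1 * X + b2 * y_))
        ≤ (k5 + k6 + k13) * (1 + b1 * r) := by
      nlinarith only [i1, hk1eq]
    have := le_of_mul_le_mul_left h2 hax
    linarith only [this]
  have e2 : Y + x_ ≤ R := by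
    have h2 : (k21 + k22 + k29) * (1 + B * (Y + x_))
        ≤ (k21 + k22 + k29) * (1 + B * R) := by
      nlinarith only [i2, hk17eq]
    have h3 := le_of_mul_le_mul_left h2 hay
    have h4 : B * (Y + x_) ≤ B * R := by linarith only [h3]
    exact le_of_mul_le_mul_left h4 hB
  have e3 : b1 * r ≤ b1 * x_ + b2 * Y := by
    have h2 : (k5 + k6 + k13) * (1 + b1 * r)
        ≤ (k5 + k6 + k13) * (1 + (b1 * x_ + b2 * Y)) := by
      nlinarith only [i3, hk1eq]
    have := le_of_mul_le_mul_left h2 hax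
    linarith only [this]
  have e4 : R ≤ y_ + X := by
    have h2 : (k21 + k22 + k29) * (1 + B * R)
        ≤ (k21 + k22 + k29) * (1 + B * (y_ + X)) := by
      nlinarith only [i4, hk17eq]
    have h3 := le_of_mul_le_mul_left h2 hay
    have h4 : B * R ≤ B * (y_ + X) := by linarith only [h3]
    exact le_of_mul_le_mul_left h4 hB
  have hne1 : b1 - b2 ≠ 0 := ne_of_gt (by linarith only [hbb])
  have hne2 : b2 ≠ 0 := ne_of_gt hb2
  have hxbar2 : xbar * (b1 - b2) = b1 * r - b2 * R := by
    rw [hxbar]; field_simp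
  have hXxbar : X ≤ xbar := by
    have h1 : X * (b1 - b2) ≤ xbar * (b1 - b2) := by
      nlinarith only [e1, mul_le_mul_of_nonneg_left e4 hb2.le, hxbar2]
    exact le_of_mul_le_mul_right h1 (by linarith only [hbb])
  have hxbarx : xbar ≤ x_ := by
    have h1 : xbar * (b1 - b2) ≤ x_ * (b1 - b2) := by
      nlinarith only [e3, mul_le_mul_of_nonneg_left e2 hb2.le, hxbar2]
    exact le_of_mul_le_mul_right h1 (by linarith only [hbb])
  have hxX : x_ ≤ X := liminf_le_limsup (bdd_above_of_ev hMxu) (bdd_below_of_ev hex0)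
  have htx0 : Tendsto x0 atTop (nhds xbar) :=
    tendsto_of_le_liminf_of_limsup_le (by linarith) (by linarith)
      (bdd_above_of_ev hMxu) (bdd_below_of_ev hex0)
  have hsum : xbar + ybar = R := by
    rw [hxbar, hybar]; field_simp; ring
  have hty0 : Tendsto y0 atTop (nhds ybar) := by
    refine tendsto_of_le_liminf_of_limsup_le (by linarith) (by linarith)
      (bdd_above_of_ev hMyu) (bdd_below_of_ev hey0)
  -- cascades
  have hd2 : 0 < k9 + k10 + k14 - k7 := by linarith
  have hd3 : 0 < k11 + k12 + k15 := by linarith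
  have hd2' : 0 < k25 + k26 + k30 - k23 := by linarith
  have hd3' : 0 < k27 + k28 + k31 := by linarith
  have hx2g : ∀ t ≥ (0:ℝ), HasDerivAt x2
      ((k4 + k5 + 2 * k6) * x0 t - (k9 + k10 + k14 - k7) * x2 t) t := by
    intro t ht
    have h := hx2 t ht
    have e : (k4 + k5 + 2 * k6) * x0 t + k7 * x2 t - (k9 + k10 + k14) * x2 t
        = (k4 + k5 + 2 * k6) * x0 t - (k9 + k10 + k14 - k7) * x2 t := by ring
    exact e ▸ h
  have hy2g : ∀ t ≥ (0:ℝ), HasDerivAt y2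
      ((k20 + k21 + 2 * k22) * y0 t - (k25 + k26 + k30 - k23) * y2 t) t := by
    intro t ht
    have h := hy2 t ht
    have e : (k20 + k21 + 2 * k22) * y0 t + k23 * y2 t - (k25 + k26 + k30) * y2 t
        = (k20 + k21 + 2 * k22) * y0 t - (k25 + k26 + k30 - k23) * y2 t := by ring
    exact e ▸ h
  have htx1 : Tendsto x1 atTop (nhds (xbar * k2 / k3)) := by
    have h := lin_tendsto hk2 hk3 hx1 (fun t ht => (hpos t ht).2.1)
      (fun t ht => (hpos t ht).1) htx0
    convert h using 2
    ring
  have htx2 : Tendsto x2 atTop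
      (nhds (xbar * ((k4 + k5 + 2 * k6) / (k9 + k10 + k14 - k7)))) := by
    have h := lin_tendsto (by linarith : (0:ℝ) < k4 + k5 + 2 * k6) hd2 hx2g
      (fun t ht => (hpos t ht).2.2.1) (fun t ht => (hpos t ht).1) htx0
    convert h using 2
    field_simp
  have htx3 : Tendsto x3 atTop
      (nhds (xbar * (((k4 + k5 + 2 * k6) * (k8 + k9 + 2 * k10)) /
        ((k9 + k10 + k14 - k7) * (k11 + k12 + k15))))) := by
    have h := lin_tendsto (by linarith : (0:ℝ) < k8 + k9 + 2 * k10) hd3 hx3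
      (fun t ht => (hpos t ht).2.2.2.1) (fun t ht => (hpos t ht).2.2.1) htx2
    convert h using 2
    field_simp
  have htx4 : Tendsto x4 atTop
      (nhds (xbar * (((k4 + k5 + 2 * k6) * (k8 + k9 + 2 * k10) * (k11 + 2 * k12)) /
        ((k9 + k10 + k14 - k7) * (k11 + k12 + k15) * k16)))) := by
    have h := lin_tendsto (by linarith : (0:ℝ) < k11 + 2 * k12) hk16 hx4
      (fun t ht => (hpos t ht).2.2.2.2.1) (fun t ht => (hpos t ht).2.2.2.1) htx3
    convert h using 2
    field_simp
  have hty1 : Tendsto y1 atTop (nhds (ybar * k18 / k19)) := by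
    have h := lin_tendsto hk18 hk19 hy1 (fun t ht => (hpos t ht).2.2.2.2.2.2.1)
      (fun t ht => (hpos t ht).2.2.2.2.2.1) hty0
    convert h using 2
    ring
  have hty2 : Tendsto y2 atTop
      (nhds (ybar * ((k20 + k21 + 2 * k22) / (k25 + k26 + k30 - k23)))) := by
    have h := lin_tendsto (by linarith : (0:ℝ) < k20 + k21 + 2 * k22) hd2' hy2g
      (fun t ht => (hpos t ht).2.2.2.2.2.2.2.1) (fun t ht => (hpos t ht).2.2.2.2.2.1) hty0
    convert h using 2
    field_simp
  have hty3 : Tendsto y3 atTop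
      (nhds (ybar * (((k20 + k21 + 2 * k22) * (k24 + k25 + 2 * k26)) /
        ((k25 + k26 + k30 - k23) * (k27 + k28 + k31))))) := by
    have h := lin_tendsto (by linarith : (0:ℝ) < k24 + k25 + 2 * k26) hd3' hy3
      (fun t ht => (hpos t ht).2.2.2.2.2.2.2.2.1) (fun t ht => (hpos t ht).2.2.2.2.2.2.2.1) hty2
    convert h using 2
    field_simp
  have hty4 : Tendsto y4 atTop
      (nhds (ybar * (((k20 + k21 + 2 * k22) * (k24 + k25 + 2 * k26) * (k27 + 2 * k28)) /
        ((k25 + k26 + k30 - k23) * (k27 + k28 + k31) * k32)))) := by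
    have h := lin_tendsto (by linarith : (0:ℝ) < k27 + 2 * k28) hk32 hy4
      (fun t ht => (hpos t ht).2.2.2.2.2.2.2.2.2) (fun t ht => (hpos t ht).2.2.2.2.2.2.2.2.1) hty3
    convert h using 2
    field_simp
  exact ⟨htx0, htx1, htx2, htx3, htx4, hty0, hty1, hty2, hty3, hty4⟩
end

section
/- (Global stability, case (iii)) Assume R > (b1/b2)·r. Then for every positive solution (x0,...,x4,y0,...,y4) of system (2), as t → +∞: x0(t) → 0, x1(t) → 0, x2(t) → 0, x3(t) → 0, x4(t) → 0, and y0(t) → R, y1(t) → R·k18/k19, y2(t) → R·(k20+k21+2k22)/(k25+k26+k30−k23), y3(t) → R·(k20+k21+2k22)·(k24+k25+2k26)/((k25+k26+k30−k23)·(k27+k28+k31)), y4(t) → R·(k20+k21+2k22)·(k24+k25+2k26)·(k27+2k28)/((k25+k26+k30−k23)·(k27+k28+k31)·k32); that is, every positive solution converges to the steady state E2. -/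
open Filter Topology Set

/-- If `g` has nonpositive derivative `ψ` on `[T,∞)` then `g` is antitone there. -/
lemma stmt19_antitone_aux (g ψ : ℝ → ℝ) (T : ℝ)
    (hg : ∀ t ≥ T, HasDerivAt g (ψ t) t) (hψ : ∀ t ≥ T, ψ t ≤ 0) :
    ∀ s t, T ≤ s → s ≤ t → g t ≤ g s := by
  intro s t hs hst
  have H : AntitoneOn g (Set.Ici T) := by
    apply antitoneOn_of_deriv_nonpos (convex_Ici T)
    · intro x hx; exact (hg x hx).continuousAt.continuousWithinAt
    · intro x hx
      rw [interior_Ici] at hx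
      exact (hg x hx.le).differentiableAt.differentiableWithinAt
    · intro x hx
      rw [interior_Ici] at hx
      rw [(hg x hx.le).deriv]; exact hψ x hx.le
  exact H hs (hs.trans hst) hst

lemma stmt19_expUpper (f φ : ℝ → ℝ) (T C K : ℝ) (hK : 0 < K)
    (hf : ∀ t ≥ T, HasDerivAt f (φ t) t)
    (hφ : ∀ t ≥ T, φ t ≤ C - K * f t) :
    ∀ t ≥ T, f t ≤ C / K + (f T - C / K) * Real.exp (-(K * (t - T))) := by
  intro t ht
  set g : ℝ → ℝ := fun s => (f s - C / K) * Real.exp (K * s) with hgdef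
  have hg : ∀ s ≥ T, HasDerivAt g ((φ s - (C - K * f s)) * Real.exp (K * s)) s := by
    intro s hs
    have h1 : HasDerivAt (fun u : ℝ => Real.exp (K * u)) (K * Real.exp (K * s)) s := by
      have h := ((hasDerivAt_id s).const_mul K).exp
      convert h using 1
      · funext x; simp only [id]
      · simp only [id, mul_one]; ring
    have h2 := ((hf s hs).sub_const (C / K)).mul h1
    refine h2.congr_deriv ?_
    have hK' : K ≠ 0 := ne_of_gt hK
    have hCK : C / K * K = C := div_mul_cancel₀ C hK'
    linear_combination (-(Real.exp (K * s))) * hCK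
  have mono := stmt19_antitone_aux g _ T hg
    (fun s hs => mul_nonpos_of_nonpos_of_nonneg (by linarith [hφ s hs]) (Real.exp_pos _).le)
    T t le_rfl ht
  have hexp : (0:ℝ) < Real.exp (K * t) := Real.exp_pos _
  have := mono
  rw [hgdef] at this
  simp only at this
  -- (f t - C/K) * exp (K t) ≤ (f T - C/K) * exp (K T)
  have key : f t - C / K ≤ (f T - C / K) * Real.exp (K * T) / Real.exp (K * t) := by
    rw [le_div_iff₀ hexp]; exact this
  have hre : (f T - C / K) * Real.exp (K * T) / Real.exp (K * t)
      = (f T - C / K) * Real.exp (-(K * (t - T))) := by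
    rw [mul_div_assoc, ← Real.exp_sub]
    ring_nf
  rw [hre] at key
  linarith

lemma stmt19_bounded_of_ode (f φ : ℝ → ℝ) (C K : ℝ) (hK : 0 < K)
    (hf : ∀ t ≥ (0:ℝ), HasDerivAt f (φ t) t)
    (hφ : ∀ t ≥ (0:ℝ), φ t ≤ C - K * f t) :
    ∀ t ≥ (0:ℝ), f t ≤ max (f 0) (C / K) := by
  intro t ht
  have h := stmt19_expUpper f φ 0 C K hK hf hφ t ht
  have he1 : Real.exp (-(K * (t - 0))) ≤ 1 := by
    rw [Real.exp_le_one_iff]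
    nlinarith
  have he0 : (0:ℝ) < Real.exp (-(K * (t - 0))) := Real.exp_pos _
  rcases le_or_gt (f 0) (C / K) with h0 | h0
  · refine le_trans ?_ (le_max_right _ _)
    nlinarith
  · refine le_trans ?_ (le_max_left _ _)
    nlinarith

lemma stmt19_evUpper (f φ : ℝ → ℝ) (C K : ℝ) (hK : 0 < K)
    (hf : ∀ᶠ t in atTop, HasDerivAt f (φ t) t ∧ φ t ≤ C - K * f t) :
    ∀ ε > 0, ∀ᶠ t in atTop, f t ≤ C / K + ε := by
  obtain ⟨T, hT⟩ := eventually_atTop.1 hf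
  have key := stmt19_expUpper f φ T C K hK (fun t ht => (hT t ht).1) (fun t ht => (hT t ht).2)
  intro ε hε
  have h1 : Tendsto (fun t : ℝ => K * (t - T)) atTop atTop := by
    apply Tendsto.const_mul_atTop hK
    exact tendsto_atTop_add_const_right _ (-T) tendsto_id
  have h2 : Tendsto (fun t : ℝ => Real.exp (-(K * (t - T)))) atTop (𝓝 0) := by
    exact Real.tendsto_exp_atBot.comp (tendsto_neg_atTop_atBot.comp h1)
  have h3 : Tendsto (fun t : ℝ => C / K + (f T - C / K) * Real.exp (-(K * (t - T)))) atTop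
      (𝓝 (C / K + (f T - C / K) * 0)) := by
    exact tendsto_const_nhds.add (tendsto_const_nhds.mul h2)
  rw [mul_zero, add_zero] at h3
  have h4 : ∀ᶠ t in atTop,
      C / K + (f T - C / K) * Real.exp (-(K * (t - T))) < C / K + ε :=
    h3.eventually_lt_const (by linarith)
  filter_upwards [h4, eventually_ge_atTop T] with t h4t hTt
  exact le_trans (key t hTt) h4t.le

lemma stmt19_evLower (f φ : ℝ → ℝ) (C K : ℝ) (hK : 0 < K)
    (hf : ∀ᶠ t in atTop, HasDerivAt f (φ t) t ∧ C - K * f t ≤ φ t) :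
    ∀ ε > 0, ∀ᶠ t in atTop, C / K - ε ≤ f t := by
  intro ε hε
  have := stmt19_evUpper (fun t => - f t) (fun t => - φ t) (-C) K hK
    (hf.mono (fun t ht => ⟨ht.1.neg, by
      show -φ t ≤ -C - K * -f t
      linarith [ht.2]⟩)) ε hε
  filter_upwards [this] with t ht
  have : -C / K = -(C / K) := by ring
  rw [this] at ht
  linarith

lemma stmt19_tendsto_ode (f φ : ℝ → ℝ) (L K : ℝ) (hK : 0 < K)
    (hd : ∀ᶠ t in atTop, HasDerivAt f (φ t) t)
    (hup : ∀ ε > 0, ∀ᶠ t in atTop, φ t ≤ (L + ε) - K * f t)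
    (hlo : ∀ ε > 0, ∀ᶠ t in atTop, (L - ε) - K * f t ≤ φ t) :
    Tendsto f atTop (𝓝 (L / K)) := by
  rw [tendsto_order]
  constructor
  · intro a ha
    set d := L / K - a with hd'
    have hdpos : 0 < d := by simp [hd']; linarith
    have h := stmt19_evLower f φ (L - K * d / 4) K hK
      (((hlo (K * d / 4) (by positivity)).and hd).mono (fun t ht => ⟨ht.2, ht.1⟩)) (d / 4)
      (by positivity)
    filter_upwards [h] with t ht
    have : (L - K * d / 4) / K = L / K - d / 4 := by
      rw [div_eq_iff hK.ne']; field_simp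
    rw [this] at ht
    linarith
  · intro a ha
    set d := a - L / K with hd'
    have hdpos : 0 < d := by simp [hd']; linarith
    have h := stmt19_evUpper f φ (L + K * d / 4) K hK
      ((( hup (K * d / 4) (by positivity)).and hd).mono (fun t ht => ⟨ht.2, ht.1⟩)) (d / 4)
      (by positivity)
    filter_upwards [h] with t ht
    have : (L + K * d / 4) / K = L / K + d / 4 := by
      rw [div_eq_iff hK.ne']; field_simp
    rw [this] at ht
    linarith

lemma stmt19_cascade (w f : ℝ → ℝ) (α K W : ℝ) (hα : 0 < α) (hK : 0 < K)
    (hd : ∀ t ≥ (0:ℝ), HasDerivAt f (α * w t - K * f t) t)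
    (hw : Tendsto w atTop (𝓝 W)) :
    Tendsto f atTop (𝓝 (α * W / K)) := by
  apply stmt19_tendsto_ode f (fun t => α * w t - K * f t) (α * W) K hK
  · exact (eventually_ge_atTop 0).mono (fun t ht => hd t ht)
  · intro ε hε
    have h1 : ∀ᶠ t in atTop, w t < W + ε / α := hw.eventually_lt_const (lt_add_of_pos_right W (div_pos hε hα))
    filter_upwards [h1] with t ht
    have : α * w t ≤ α * W + ε := by
      have := mul_lt_mul_of_pos_left ht hα
      rw [mul_add] at this
      have hεα : α * (ε / α) = ε := by field_simp
      linarith [this, hεα]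
    linarith
  · intro ε hε
    have h1 : ∀ᶠ t in atTop, W - ε / α < w t :=
      hw.eventually_const_lt (sub_lt_self W (div_pos hε hα))
    filter_upwards [h1] with t ht
    have : α * W - ε ≤ α * w t := by
      have := mul_lt_mul_of_pos_left ht hα
      rw [mul_sub] at this
      have hεα : α * (ε / α) = ε := by field_simp
      linarith [this, hεα]
    linarith

/-- If `f s < f u` for all `s` in a left neighborhood of `u`, the derivative at `u`
is nonnegative. -/
lemma stmt19_deriv_nonneg_left (f : ℝ → ℝ) (φu u a : ℝ) (ha : a < u)
    (hd : HasDerivAt f φu u)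
    (hlt : ∀ s ∈ Set.Ico a u, f s < f u) : 0 ≤ φu := by
  have h1 : HasDerivWithinAt f φu (Set.Iio u) u := hd.hasDerivWithinAt
  rw [hasDerivWithinAt_iff_tendsto_slope] at h1
  have hne : (Set.Iio u \ {u}) = Set.Iio u := by
    apply Set.diff_singleton_eq_self; simp
  rw [hne] at h1
  refine ge_of_tendsto h1 ?_
  have hmem : Set.Ioo a u ∈ 𝓝[Set.Iio u] u := Ioo_mem_nhdsLT_of_mem ⟨ha, le_rfl⟩
  filter_upwards [hmem] with s hs
  have hflt : f s < f u := hlt s ⟨hs.1.le, hs.2⟩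
  have hsu : s - u < 0 := by linarith [hs.2]
  have : slope f u s = (f s - f u) / (s - u) := by
    rw [slope_def_field]
  rw [this]
  exact le_of_lt (div_pos_of_neg_of_neg (by linarith) hsu)

lemma stmt19_deriv_nonpos_left (f : ℝ → ℝ) (φu u a : ℝ) (ha : a < u)
    (hd : HasDerivAt f φu u)
    (hlt : ∀ s ∈ Set.Ico a u, f u < f s) : φu ≤ 0 := by
  have := stmt19_deriv_nonneg_left (fun s => - f s) (-φu) u a ha hd.neg
    (fun s hs => by simpa using (hlt s hs))
  linarith

/-- Fluctuation lemma, upper version: if `f` is frequently above `S - ε/2`, then there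
are arbitrarily large times where `f` is above `S - ε` and its derivative above `-ε`. -/
lemma stmt19_fluct_sup (f φ : ℝ → ℝ) (S ε T : ℝ) (hε : 0 < ε)
    (hd : ∀ t ≥ (0:ℝ), HasDerivAt f (φ t) t)
    (hfr : ∃ᶠ t in atTop, S - ε / 2 < f t) :
    ∃ t, t ≥ T ∧ S - ε < f t ∧ -ε < φ t := by
  by_contra hcon
  push_neg at hcon
  -- hcon : ∀ t ≥ T, S - ε < f t → φ t ≤ -ε
  obtain ⟨t1, ht1, ht1ge⟩ := (hfr.and_eventually (eventually_ge_atTop (max T 0))).exists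
  have ht1T : T ≤ t1 := le_trans (le_max_left _ _) ht1ge
  have ht10 : (0:ℝ) ≤ t1 := le_trans (le_max_right _ _) ht1ge
  -- Step 2 : find t2 ≥ t1 with f t2 ≤ S - ε
  have hstep2 : ∃ t2, t2 ≥ t1 ∧ f t2 ≤ S - ε := by
    by_contra hno
    push_neg at hno
    have hmono := stmt19_antitone_aux (fun t => f t + ε * t) (fun t => φ t + ε) t1
      (fun t ht => by
        have h1 : HasDerivAt (fun t : ℝ => ε * t) ε t := by
          simpa using (hasDerivAt_id t).const_mul ε
        exact (hd t (ht10.trans ht)).add h1)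
      (fun t ht => by
        have hflt : S - ε < f t := hno t ht
        have := hcon t (ht1T.trans ht) hflt
        linarith)
    set t3 := t1 + (f t1 - (S - ε) + 1) / ε with ht3def
    have hposq : 0 < (f t1 - (S - ε) + 1) / ε := div_pos (by linarith) hε
    have ht3ge : t1 ≤ t3 := by rw [ht3def]; linarith
    have := hmono t1 t3 le_rfl ht3ge
    -- f t3 + ε * t3 ≤ f t1 + ε * t1
    have hf3 : f t3 ≤ f t1 - ε * (t3 - t1) := by linarith
    have hεt : ε * (t3 - t1) = f t1 - (S - ε) + 1 := by
      rw [ht3def]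
      field_simp
      ring
    have : f t3 ≤ S - ε - 1 := by linarith
    have := hno t3 ht3ge
    linarith
  obtain ⟨t2, ht2ge, ht2⟩ := hstep2
  have ht20 : (0:ℝ) ≤ t2 := ht10.trans ht2ge
  -- Step 3 : f stays below S - ε/2 after t2
  have hstep3 : ∀ t ≥ t2, f t < S - ε / 2 := by
    intro t3 ht3
    by_contra hge
    push_neg at hge
    set A := {t ∈ Set.Icc t2 t3 | S - 3 / 4 * ε ≤ f t} with hAdef
    have hcont : ContinuousOn f (Set.Icc t2 t3) := fun x hx =>
      ((hd x (ht20.trans hx.1)).continuousAt).continuousWithinAt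
    have hA : IsClosed A := by
      have : A = Set.Icc t2 t3 ∩ f ⁻¹' (Set.Ici (S - 3 / 4 * ε)) := rfl
      rw [this]
      exact hcont.preimage_isClosed_of_isClosed isClosed_Icc isClosed_Ici
    have hne : A.Nonempty := ⟨t3, ⟨ht3, le_rfl⟩, by linarith⟩
    have hbdd : BddBelow A := ⟨t2, fun x hx => hx.1.1⟩
    have huA : sInf A ∈ A := hA.csInf_mem hne hbdd
    set u := sInf A with hudef
    have huT : t2 ≤ u := huA.1.1
    have hfu : S - 3 / 4 * ε ≤ f u := huA.2
    have hu_gt : t2 < u := by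
      rcases lt_or_eq_of_le huT with h | h
      · exact h
      · exfalso; rw [← h] at hfu; linarith
    have hlt' : ∀ s ∈ Set.Ico t2 u, f s < f u := by
      intro s hs
      by_contra hcon2
      push_neg at hcon2
      have hsA : s ∈ A := ⟨⟨hs.1, hs.2.le.trans huA.1.2⟩, le_trans hfu hcon2⟩
      have := csInf_le hbdd hsA
      rw [← hudef] at this
      exact absurd this (not_le.2 hs.2)
    have hphi_nonneg : 0 ≤ φ u :=
      stmt19_deriv_nonneg_left f (φ u) u t2 hu_gt (hd u (ht20.trans huT)) hlt'
    have hphi_neg : φ u ≤ -ε := hcon u (ht1T.trans (ht2ge.trans huT)) (by linarith)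
    linarith
  have := (hfr.and_eventually (eventually_ge_atTop t2)).exists
  obtain ⟨t4, ht4, ht4ge⟩ := this
  linarith [hstep3 t4 ht4ge]

/-- Fluctuation lemma, lower version. -/
lemma stmt19_fluct_inf (f φ : ℝ → ℝ) (I ε T : ℝ) (hε : 0 < ε)
    (hd : ∀ t ≥ (0:ℝ), HasDerivAt f (φ t) t)
    (hfr : ∃ᶠ t in atTop, f t < I + ε / 2) :
    ∃ t, t ≥ T ∧ f t < I + ε ∧ φ t < ε := by
  obtain ⟨t, ht, h1, h2⟩ := stmt19_fluct_sup (fun s => - f s) (fun s => - φ s) (-I) ε T hε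
    (fun t ht => (hd t ht).neg)
    (hfr.mono (fun t ht => by linarith))
  exact ⟨t, ht, by linarith, by linarith⟩

/-- Persistence lemma: if the derivative is positive whenever `f ≤ θ`,
then `f` stays above `min (f T) θ`. -/
lemma stmt19_persist (f φ : ℝ → ℝ) (T θ : ℝ) (hT : 0 ≤ T) (hθ : 0 < θ)
    (hd : ∀ t ≥ T, HasDerivAt f (φ t) t)
    (hder : ∀ t ≥ T, f t ≤ θ → 0 < φ t) :
    ∀ t ≥ T, min (f T) θ ≤ f t := by
  intro t3 ht3
  by_contra hlt
  push_neg at hlt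
  set m := min (f T) θ with hmdef
  set L := (f t3 + m) / 2 with hLdef
  have hL1 : f t3 < L := by rw [hLdef]; linarith
  have hL2 : L < m := by rw [hLdef]; linarith
  set A := {t ∈ Set.Icc T t3 | f t ≤ L} with hAdef
  have hcont : ContinuousOn f (Set.Icc T t3) := fun x hx =>
    ((hd x hx.1).continuousAt).continuousWithinAt
  have hA : IsClosed A := by
    have : A = Set.Icc T t3 ∩ f ⁻¹' (Set.Iic L) := rfl
    rw [this]
    exact hcont.preimage_isClosed_of_isClosed isClosed_Icc isClosed_Iic
  have hne : A.Nonempty := ⟨t3, ⟨⟨ht3, le_rfl⟩, hL1.le⟩⟩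
  have hbdd : BddBelow A := ⟨T, fun x hx => hx.1.1⟩
  have huA : sInf A ∈ A := hA.csInf_mem hne hbdd
  set u := sInf A with hudef
  have huT : T ≤ u := huA.1.1
  have hfu : f u ≤ L := huA.2
  have hu_gt : T < u := by
    rcases lt_or_eq_of_le huT with h | h
    · exact h
    · exfalso
      rw [← h] at hfu
      have : m ≤ f T := min_le_left _ _
      linarith
  have hlt' : ∀ s ∈ Set.Ico T u, f u < f s := by
    intro s hs
    by_contra hcon2
    push_neg at hcon2
    have hsA : s ∈ A := ⟨⟨hs.1, hs.2.le.trans huA.1.2⟩, hcon2.trans hfu⟩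
    have := csInf_le hbdd hsA
    rw [← hudef] at this
    exact absurd this (not_le.2 hs.2)
  have hphi_nonpos : φ u ≤ 0 :=
    stmt19_deriv_nonpos_left f (φ u) u T hu_gt (hd u huT) hlt'
  have hθ' : f u ≤ θ := le_trans hfu (le_of_lt (lt_of_lt_of_le hL2 (min_le_right _ _)))
  have := hder u huT hθ'
  linarith

set_option maxHeartbeats 1000000

/-- Global stability, case (iii): if `R > (b1/b2)·r`, every positive solution of
system (2) converges to the steady state `E2`. -/
theorem stmt19
    (k1 k2 k3 k4 k5 k6 k7 k8 k9 k10 k11 k12 k13 k14 k15 k16 k17 k18 k19 k20 k21 k22 k23 k24 k25 k26 k27 k28 k29 k30 k31 k32 b1 b2 B r R : ℝ)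
    (hk1 : 0 < k1) (hk2 : 0 < k2) (hk3 : 0 < k3) (hk4 : 0 < k4)
    (hk5 : 0 < k5) (hk6 : 0 < k6) (hk7 : 0 < k7) (hk8 : 0 < k8)
    (hk9 : 0 < k9) (hk10 : 0 < k10) (hk11 : 0 < k11) (hk12 : 0 < k12)
    (hk13 : 0 < k13) (hk14 : 0 < k14) (hk15 : 0 < k15) (hk16 : 0 < k16)
    (hk17 : 0 < k17) (hk18 : 0 < k18) (hk19 : 0 < k19) (hk20 : 0 < k20)
    (hk21 : 0 < k21) (hk22 : 0 < k22) (hk23 : 0 < k23) (hk24 : 0 < k24)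
    (hk25 : 0 < k25) (hk26 : 0 < k26) (hk27 : 0 < k27) (hk28 : 0 < k28)
    (hk29 : 0 < k29) (hk30 : 0 < k30) (hk31 : 0 < k31) (hk32 : 0 < k32)
    (hb1 : 0 < b1) (hb2 : 0 < b2) (hB : 0 < B)
    (hg1 : k5 + k6 + k13 < k1) (hg2 : k21 + k22 + k29 < k17)
    (hg3 : k7 < k9 + k10 + k14) (hg4 : k23 < k25 + k26 + k30)
    (hbb : b2 < b1) (hbB : B < b2)
    (hr : r = (k1 - k5 - k6 - k13) / (b1 * (k5 + k6 + k13)))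
    (hR : R = (k17 - k21 - k22 - k29) / (B * (k21 + k22 + k29)))
    (x0 x1 x2 x3 x4 y0 y1 y2 y3 y4 : ℝ → ℝ)
    (hpos : ∀ t ≥ (0:ℝ), 0 < x0 t ∧ 0 < x1 t ∧ 0 < x2 t ∧ 0 < x3 t ∧ 0 < x4 t ∧
      0 < y0 t ∧ 0 < y1 t ∧ 0 < y2 t ∧ 0 < y3 t ∧ 0 < y4 t)
    (hx0 : ∀ t ≥ (0:ℝ), HasDerivAt x0
      ((k1 / (1 + b1 * x0 t + b2 * y0 t) - k5 - k6 - k13) * x0 t - k2 * x0 t + k3 * x1 t) t)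
    (hx1 : ∀ t ≥ (0:ℝ), HasDerivAt x1 (k2 * x0 t - k3 * x1 t) t)
    (hx2 : ∀ t ≥ (0:ℝ), HasDerivAt x2
      ((k4 + k5 + 2 * k6) * x0 t + k7 * x2 t - (k9 + k10 + k14) * x2 t) t)
    (hx3 : ∀ t ≥ (0:ℝ), HasDerivAt x3
      ((k8 + k9 + 2 * k10) * x2 t - (k11 + k12 + k15) * x3 t) t)
    (hx4 : ∀ t ≥ (0:ℝ), HasDerivAt x4 ((k11 + 2 * k12) * x3 t - k16 * x4 t) t)
    (hy0 : ∀ t ≥ (0:ℝ), HasDerivAt y0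
      ((k17 / (1 + B * (x0 t + y0 t)) - k21 - k22 - k29) * y0 t - k18 * y0 t + k19 * y1 t) t)
    (hy1 : ∀ t ≥ (0:ℝ), HasDerivAt y1 (k18 * y0 t - k19 * y1 t) t)
    (hy2 : ∀ t ≥ (0:ℝ), HasDerivAt y2
      ((k20 + k21 + 2 * k22) * y0 t + k23 * y2 t - (k25 + k26 + k30) * y2 t) t)
    (hy3 : ∀ t ≥ (0:ℝ), HasDerivAt y3
      ((k24 + k25 + 2 * k26) * y2 t - (k27 + k28 + k31) * y3 t) t)
    (hy4 : ∀ t ≥ (0:ℝ), HasDerivAt y4 ((k27 + 2 * k28) * y3 t - k32 * y4 t) t)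
    (hcase : b1 / b2 * r < R) :
    Filter.Tendsto x0 Filter.atTop (nhds (0)) ∧
      Filter.Tendsto x1 Filter.atTop (nhds (0)) ∧
      Filter.Tendsto x2 Filter.atTop (nhds (0)) ∧
      Filter.Tendsto x3 Filter.atTop (nhds (0)) ∧
      Filter.Tendsto x4 Filter.atTop (nhds (0)) ∧
      Filter.Tendsto y0 Filter.atTop (nhds (R)) ∧
      Filter.Tendsto y1 Filter.atTop (nhds (R * k18 / k19)) ∧
      Filter.Tendsto y2 Filter.atTop (nhds (R * ((k20 + k21 + 2 * k22) / (k25 + k26 + k30 - k23)))) ∧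
      Filter.Tendsto y3 Filter.atTop (nhds (R * (((k20 + k21 + 2 * k22) * (k24 + k25 + 2 * k26)) / ((k25 + k26 + k30 - k23) * (k27 + k28 + k31))))) ∧
      Filter.Tendsto y4 Filter.atTop (nhds (R * (((k20 + k21 + 2 * k22) * (k24 + k25 + 2 * k26) * (k27 + 2 * k28)) / ((k25 + k26 + k30 - k23) * (k27 + k28 + k31) * k32)))) := by
  -- positivity of solution components
  have px0 : ∀ t ≥ (0:ℝ), 0 < x0 t := fun t ht => (hpos t ht).1
  have px1 : ∀ t ≥ (0:ℝ), 0 < x1 t := fun t ht => (hpos t ht).2.1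
  have py0 : ∀ t ≥ (0:ℝ), 0 < y0 t := fun t ht => (hpos t ht).2.2.2.2.2.1
  have py1 : ∀ t ≥ (0:ℝ), 0 < y1 t := fun t ht => (hpos t ht).2.2.2.2.2.2.1
  have hs1 : 0 < k5 + k6 + k13 := by linarith
  have hs2 : 0 < k21 + k22 + k29 := by linarith
  have hrpos : 0 < r := by rw [hr]; apply div_pos (by linarith) (by positivity)
  have hRpos : 0 < R := by rw [hR]; apply div_pos (by linarith) (by positivity)
  have hk1r : (k5 + k6 + k13) * (1 + b1 * r) = k1 := by
    rw [hr]; field_simp; ring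
  have hk17R : (k21 + k22 + k29) * (1 + B * R) = k17 := by
    rw [hR]; field_simp; ring
  have hcase2 : b1 * r < b2 * R := by
    have h := mul_lt_mul_of_pos_right hcase hb2
    have he : b1 / b2 * r * b2 = b1 * r := by field_simp
    linarith [he ▸ h]
  have hrR : r < R := by
    by_contra hcon
    push_neg at hcon
    have h1 : b2 * R ≤ b2 * r := mul_le_mul_of_nonneg_left hcon hb2.le
    have h2 : 0 ≤ (b1 - b2) * r := mul_nonneg (by linarith only [hbb]) hrpos.le
    linarith only [h1, h2, hcase2]
  -- boundedness of x0, x1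
  have hboundx : ∃ M : ℝ, 0 < M ∧ (∀ t ≥ (0:ℝ), x0 t ≤ M) ∧ (∀ t ≥ (0:ℝ), x1 t ≤ M) := by
    obtain ⟨β, hβdef⟩ : ∃ β : ℝ, β = 1 + (k5 + k6 + k13) / (2 * k2) := ⟨_, rfl⟩
    have hβ1 : 1 < β := by
      rw [hβdef]
      linarith only [div_pos hs1 (by positivity : (0:ℝ) < 2 * k2)]
    have hβpos : 0 < β := by linarith
    obtain ⟨Kx, hKxdef⟩ : ∃ K : ℝ, K = min ((k5 + k6 + k13) / 2) ((k5 + k6 + k13) * k3 / (2 * k2) / β) := ⟨_, rfl⟩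
    have hKxpos : 0 < Kx := by
      rw [hKxdef]
      exact lt_min (by positivity) (div_pos (by positivity) hβpos)
    have hKx1 : Kx ≤ (k5 + k6 + k13) / 2 := by rw [hKxdef]; exact min_le_left _ _
    have hKx2 : Kx * β ≤ (k5 + k6 + k13) * k3 / (2 * k2) := by
      have h : Kx ≤ (k5 + k6 + k13) * k3 / (2 * k2) / β := by
        rw [hKxdef]; exact min_le_right _ _
      calc Kx * β ≤ ((k5 + k6 + k13) * k3 / (2 * k2) / β) * β := by
            exact mul_le_mul_of_nonneg_right h hβpos.le
        _ = (k5 + k6 + k13) * k3 / (2 * k2) := div_mul_cancel₀ _ hβpos.ne'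
    have hd : ∀ t ≥ (0:ℝ), HasDerivAt (fun t => x0 t + β * x1 t)
        (((k1 / (1 + b1 * x0 t + b2 * y0 t) - k5 - k6 - k13) * x0 t - k2 * x0 t + k3 * x1 t)
          + β * (k2 * x0 t - k3 * x1 t)) t :=
      fun t ht => (hx0 t ht).add ((hx1 t ht).const_mul β)
    have hφ : ∀ t ≥ (0:ℝ), (((k1 / (1 + b1 * x0 t + b2 * y0 t) - k5 - k6 - k13) * x0 t
          - k2 * x0 t + k3 * x1 t) + β * (k2 * x0 t - k3 * x1 t))
          ≤ k1 / b1 - Kx * (x0 t + β * x1 t) := by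
      intro t ht
      have h1 := px0 t ht; have h2 := px1 t ht; have h3 := py0 t ht
      have hD : 0 < 1 + b1 * x0 t + b2 * y0 t := by
        linarith only [mul_pos hb1 h1, mul_pos hb2 h3]
      have h5 : k1 / (1 + b1 * x0 t + b2 * y0 t) * x0 t ≤ k1 / b1 := by
        rw [div_mul_eq_mul_div, div_le_div_iff₀ hD hb1]
        linarith only [mul_pos hk1 (mul_pos hb2 h3), hk1]
      have h6 : Kx * x0 t ≤ (k5 + k6 + k13) / 2 * x0 t := mul_le_mul_of_nonneg_right hKx1 h1.le
      have h7 : Kx * β * x1 t ≤ (k5 + k6 + k13) * k3 / (2 * k2) * x1 t :=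
        mul_le_mul_of_nonneg_right hKx2 h2.le
      have hβexp : β * (k2 * x0 t - k3 * x1 t) = k2 * x0 t - k3 * x1 t
          + (k5 + k6 + k13) / 2 * x0 t - (k5 + k6 + k13) * k3 / (2 * k2) * x1 t := by
        rw [hβdef]; field_simp; ring
      have hKexp : Kx * (x0 t + β * x1 t) = Kx * x0 t + Kx * β * x1 t := by ring
      linarith only [h5, h6, h7, hβexp, hKexp]
    have hb := stmt19_bounded_of_ode (fun t => x0 t + β * x1 t) _ (k1 / b1) Kx hKxpos hd hφ
    refine ⟨max (x0 0 + β * x1 0) (k1 / b1 / Kx) + 1, ?_, ?_, ?_⟩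
    · have : (0:ℝ) < k1 / b1 / Kx := by positivity
      have := le_max_right (x0 0 + β * x1 0) (k1 / b1 / Kx)
      linarith
    · intro t ht
      have := hb t ht
      linarith only [this, mul_pos hβpos (px1 t ht)]
    · intro t ht
      have := hb t ht
      linarith only [this, mul_nonneg (by linarith only [hβ1] : (0:ℝ) ≤ β - 1) (px1 t ht).le,
        px0 t ht]
  have hboundy : ∃ M : ℝ, 0 < M ∧ (∀ t ≥ (0:ℝ), y0 t ≤ M) ∧ (∀ t ≥ (0:ℝ), y1 t ≤ M) := by
    obtain ⟨β, hβdef⟩ : ∃ β : ℝ, β = 1 + (k21 + k22 + k29) / (2 * k18) := ⟨_, rfl⟩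
    have hβ1 : 1 < β := by
      rw [hβdef]
      linarith only [div_pos hs2 (by positivity : (0:ℝ) < 2 * k18)]
    have hβpos : 0 < β := by linarith
    obtain ⟨Ky, hKydef⟩ : ∃ K : ℝ, K = min ((k21 + k22 + k29) / 2) ((k21 + k22 + k29) * k19 / (2 * k18) / β) := ⟨_, rfl⟩
    have hKypos : 0 < Ky := by
      rw [hKydef]
      exact lt_min (by positivity) (div_pos (by positivity) hβpos)
    have hKy1 : Ky ≤ (k21 + k22 + k29) / 2 := by rw [hKydef]; exact min_le_left _ _
    have hKy2 : Ky * β ≤ (k21 + k22 + k29) * k19 / (2 * k18) := by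
      have h : Ky ≤ (k21 + k22 + k29) * k19 / (2 * k18) / β := by
        rw [hKydef]; exact min_le_right _ _
      calc Ky * β ≤ ((k21 + k22 + k29) * k19 / (2 * k18) / β) * β := by
            exact mul_le_mul_of_nonneg_right h hβpos.le
        _ = (k21 + k22 + k29) * k19 / (2 * k18) := div_mul_cancel₀ _ hβpos.ne'
    have hd : ∀ t ≥ (0:ℝ), HasDerivAt (fun t => y0 t + β * y1 t)
        (((k17 / (1 + B * (x0 t + y0 t)) - k21 - k22 - k29) * y0 t - k18 * y0 t + k19 * y1 t)
          + β * (k18 * y0 t - k19 * y1 t)) t :=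
      fun t ht => (hy0 t ht).add ((hy1 t ht).const_mul β)
    have hφ : ∀ t ≥ (0:ℝ), (((k17 / (1 + B * (x0 t + y0 t)) - k21 - k22 - k29) * y0 t
          - k18 * y0 t + k19 * y1 t) + β * (k18 * y0 t - k19 * y1 t))
          ≤ k17 / B - Ky * (y0 t + β * y1 t) := by
      intro t ht
      have h1 := py0 t ht; have h2 := py1 t ht; have h3 := px0 t ht
      have hD : 0 < 1 + B * (x0 t + y0 t) := by
        have := mul_pos hB (by linarith only [h1, h3] : 0 < x0 t + y0 t)
        linarith only [this]
      have h5 : k17 / (1 + B * (x0 t + y0 t)) * y0 t ≤ k17 / B := by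
        rw [div_mul_eq_mul_div, div_le_div_iff₀ hD hB]
        linarith only [mul_pos hk17 (mul_pos hB h3), hk17]
      have h6 : Ky * y0 t ≤ (k21 + k22 + k29) / 2 * y0 t := mul_le_mul_of_nonneg_right hKy1 h1.le
      have h7 : Ky * β * y1 t ≤ (k21 + k22 + k29) * k19 / (2 * k18) * y1 t :=
        mul_le_mul_of_nonneg_right hKy2 h2.le
      have hβexp : β * (k18 * y0 t - k19 * y1 t) = k18 * y0 t - k19 * y1 t
          + (k21 + k22 + k29) / 2 * y0 t - (k21 + k22 + k29) * k19 / (2 * k18) * y1 t := by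
        rw [hβdef]; field_simp; ring
      have hKexp : Ky * (y0 t + β * y1 t) = Ky * y0 t + Ky * β * y1 t := by ring
      linarith only [h5, h6, h7, hβexp, hKexp]
    have hb := stmt19_bounded_of_ode (fun t => y0 t + β * y1 t) _ (k17 / B) Ky hKypos hd hφ
    refine ⟨max (y0 0 + β * y1 0) (k17 / B / Ky) + 1, ?_, ?_, ?_⟩
    · have : (0:ℝ) < k17 / B / Ky := by positivity
      have := le_max_right (y0 0 + β * y1 0) (k17 / B / Ky)
      linarith
    · intro t ht
      have := hb t ht
      linarith only [this, mul_pos hβpos (py1 t ht)]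
    · intro t ht
      have := hb t ht
      linarith only [this, mul_nonneg (by linarith only [hβ1] : (0:ℝ) ≤ β - 1) (py1 t ht).le,
        py0 t ht]
  obtain ⟨Mx, hMxpos, hx0le, hx1le⟩ := hboundx
  obtain ⟨My, hMypos, hy0le, hy1le⟩ := hboundy
  have ev0 : ∀ᶠ t : ℝ in atTop, (0:ℝ) ≤ t := eventually_ge_atTop 0
  have evx0pos : ∀ᶠ t in atTop, 0 < x0 t := ev0.mono (fun t ht => px0 t ht)
  have evx1pos : ∀ᶠ t in atTop, 0 < x1 t := ev0.mono (fun t ht => px1 t ht)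
  have evy0pos : ∀ᶠ t in atTop, 0 < y0 t := ev0.mono (fun t ht => py0 t ht)
  have evy1pos : ∀ᶠ t in atTop, 0 < y1 t := ev0.mono (fun t ht => py1 t ht)
  have evx0le : ∀ᶠ t in atTop, x0 t ≤ Mx := ev0.mono (fun t ht => hx0le t ht)
  have evy0le : ∀ᶠ t in atTop, y0 t ≤ My := ev0.mono (fun t ht => hy0le t ht)
  have bddx0 : Filter.IsBoundedUnder (· ≤ ·) atTop x0 := ⟨Mx, eventually_map.2 evx0le⟩
  have bddy0 : Filter.IsBoundedUnder (· ≤ ·) atTop y0 := ⟨My, eventually_map.2 evy0le⟩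
  have bddgex0 : Filter.IsBoundedUnder (· ≥ ·) atTop x0 :=
    ⟨0, eventually_map.2 (evx0pos.mono (fun t ht => ht.le))⟩
  have bddgey0 : Filter.IsBoundedUnder (· ≥ ·) atTop y0 :=
    ⟨0, eventually_map.2 (evy0pos.mono (fun t ht => ht.le))⟩
  have cobddx0 : Filter.IsCoboundedUnder (· ≤ ·) atTop x0 := bddgex0.isCoboundedUnder_flip
  have cobddy0 : Filter.IsCoboundedUnder (· ≤ ·) atTop y0 := bddgey0.isCoboundedUnder_flip
  have cobddgey0 : Filter.IsCoboundedUnder (· ≥ ·) atTop y0 := bddy0.isCoboundedUnder_flip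
  obtain ⟨X, hXdef⟩ : ∃ X : ℝ, X = limsup x0 atTop := ⟨_, rfl⟩
  obtain ⟨Ylo, hYlodef⟩ : ∃ Y : ℝ, Y = liminf y0 atTop := ⟨_, rfl⟩
  obtain ⟨Ysup, hYsupdef⟩ : ∃ Y : ℝ, Y = limsup y0 atTop := ⟨_, rfl⟩
  have hX0 : 0 ≤ X := by
    rw [hXdef]
    exact le_limsup_of_frequently_le ((evx0pos.mono (fun t ht => ht.le)).frequently) bddx0
  have hYlo0 : 0 ≤ Ylo := by
    rw [hYlodef]
    exact le_liminf_of_le cobddgey0 (evy0pos.mono (fun t ht => ht.le))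
  have hYloYsup : Ylo ≤ Ysup := by
    rw [hYlodef, hYsupdef]
    exact liminf_le_limsup bddy0 bddgey0
  have hYsupMy : Ysup ≤ My := by
    rw [hYsupdef]
    exact limsup_le_of_le cobddy0 evy0le
  have hEx0 : ∀ ε > (0:ℝ), ∀ᶠ t in atTop, x0 t < X + ε := fun ε hε =>
    eventually_lt_of_limsup_lt (by rw [← hXdef]; linarith only [hε]) bddx0
  have hEy0lo : ∀ ε > (0:ℝ), ∀ᶠ t in atTop, Ylo - ε < y0 t := fun ε hε =>
    eventually_lt_of_lt_liminf (by rw [← hYlodef]; linarith only [hε]) bddgey0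
  have hEy0up : ∀ ε > (0:ℝ), ∀ᶠ t in atTop, y0 t < Ysup + ε := fun ε hε =>
    eventually_lt_of_limsup_lt (by rw [← hYsupdef]; linarith only [hε]) bddy0
  have hfrx0 : ∀ ε > (0:ℝ), ∃ᶠ t in atTop, X - ε < x0 t := fun ε hε =>
    frequently_lt_of_lt_limsup cobddx0 (by rw [← hXdef]; linarith only [hε])
  have hfry0lo : ∀ ε > (0:ℝ), ∃ᶠ t in atTop, y0 t < Ylo + ε := fun ε hε =>
    frequently_lt_of_liminf_lt cobddgey0 (by rw [← hYlodef]; linarith only [hε])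
  have hfry0up : ∀ ε > (0:ℝ), ∃ᶠ t in atTop, Ysup - ε < y0 t := fun ε hε =>
    frequently_lt_of_lt_limsup cobddy0 (by rw [← hYsupdef]; linarith only [hε])
  -- eventual bound for x1 in terms of X
  have hEx1 : ∀ ε > (0:ℝ), ∀ᶠ t in atTop, x1 t ≤ k2 * X / k3 + ε := by
    intro ε hε
    obtain ⟨ε', hε'pos, hε'le⟩ : ∃ ε' : ℝ, 0 < ε' ∧ ε' * (k2 + k3) ≤ ε * k3 := by
      refine ⟨ε * k3 / (k2 + k3 + 1), by positivity, ?_⟩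
      rw [div_mul_eq_mul_div, div_le_iff₀ (by positivity)]
      linarith only [mul_pos hε hk3]
    have hev := stmt19_evUpper x1 (fun t => k2 * x0 t - k3 * x1 t) (k2 * (X + ε')) k3 hk3
      (by
        filter_upwards [hEx0 ε' hε'pos, ev0] with t h1 h2
        refine ⟨hx1 t h2, ?_⟩
        have := mul_lt_mul_of_pos_left h1 hk2
        show k2 * x0 t - k3 * x1 t ≤ k2 * (X + ε') - k3 * x1 t
        linarith only [this]) ε' hε'pos
    filter_upwards [hev] with t hgoal
    have h2 : k2 * (X + ε') / k3 = k2 * X / k3 + k2 * ε' / k3 := by ring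
    have h3 : k2 * ε' / k3 ≤ ε - ε' := by
      rw [div_le_iff₀ hk3]
      linarith only [hε'le]
    linarith only [hgoal, h2, h3]
  -- eventual lower bound for y1 in terms of Ylo
  have hEy1lo : ∀ ε > (0:ℝ), ∀ᶠ t in atTop, k18 * Ylo / k19 - ε ≤ y1 t := by
    intro ε hε
    obtain ⟨ε', hε'pos, hε'le⟩ : ∃ ε' : ℝ, 0 < ε' ∧ ε' * (k18 + k19) ≤ ε * k19 := by
      refine ⟨ε * k19 / (k18 + k19 + 1), by positivity, ?_⟩
      rw [div_mul_eq_mul_div, div_le_iff₀ (by positivity)]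
      linarith only [mul_pos hε hk19]
    have hev := stmt19_evLower y1 (fun t => k18 * y0 t - k19 * y1 t) (k18 * (Ylo - ε')) k19 hk19
      (by
        filter_upwards [hEy0lo ε' hε'pos, ev0] with t h1 h2
        refine ⟨hy1 t h2, ?_⟩
        have := mul_lt_mul_of_pos_left h1 hk18
        show k18 * (Ylo - ε') - k19 * y1 t ≤ k18 * y0 t - k19 * y1 t
        linarith only [this]) ε' hε'pos
    filter_upwards [hev] with t hgoal
    have h2 : k18 * (Ylo - ε') / k19 = k18 * Ylo / k19 - k18 * ε' / k19 := by ring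
    have h3 : k18 * ε' / k19 ≤ ε - ε' := by
      rw [div_le_iff₀ hk19]
      linarith only [hε'le]
    linarith only [hgoal, h2, h3]
  -- eventual upper bound for y1 in terms of Ysup
  have hEy1up : ∀ ε > (0:ℝ), ∀ᶠ t in atTop, y1 t ≤ k18 * Ysup / k19 + ε := by
    intro ε hε
    obtain ⟨ε', hε'pos, hε'le⟩ : ∃ ε' : ℝ, 0 < ε' ∧ ε' * (k18 + k19) ≤ ε * k19 := by
      refine ⟨ε * k19 / (k18 + k19 + 1), by positivity, ?_⟩
      rw [div_mul_eq_mul_div, div_le_iff₀ (by positivity)]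
      linarith only [mul_pos hε hk19]
    have hev := stmt19_evUpper y1 (fun t => k18 * y0 t - k19 * y1 t) (k18 * (Ysup + ε')) k19 hk19
      (by
        filter_upwards [hEy0up ε' hε'pos, ev0] with t h1 h2
        refine ⟨hy1 t h2, ?_⟩
        have := mul_lt_mul_of_pos_left h1 hk18
        show k18 * y0 t - k19 * y1 t ≤ k18 * (Ysup + ε') - k19 * y1 t
        linarith only [this]) ε' hε'pos
    filter_upwards [hev] with t hgoal
    have h2 : k18 * (Ysup + ε') / k19 = k18 * Ysup / k19 + k18 * ε' / k19 := by ring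
    have h3 : k18 * ε' / k19 ≤ ε - ε' := by
      rw [div_le_iff₀ hk19]
      linarith only [hε'le]
    linarith only [hgoal, h2, h3]
  -- upper bounds on the saturation denominators
  obtain ⟨Dbar, hDbardef⟩ : ∃ D : ℝ, D = 1 + b1 * Mx + b2 * My := ⟨_, rfl⟩
  have hDbarpos : 0 < Dbar := by
    rw [hDbardef]
    linarith only [mul_pos hb1 hMxpos, mul_pos hb2 hMypos]
  obtain ⟨Dbar2, hDbar2def⟩ : ∃ D : ℝ, D = 1 + B * (Mx + My) := ⟨_, rfl⟩
  have hDbar2pos : 0 < Dbar2 := by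
    rw [hDbar2def]
    linarith only [mul_pos hB (by linarith only [hMxpos, hMypos] : (0:ℝ) < Mx + My)]
  -- Claim (*) : if X > 0 then b1 X + b2 Ylo ≤ b1 r
  have star : 0 < X → b1 * X + b2 * Ylo ≤ b1 * r := by
    intro hXpos
    by_contra hgt
    push_neg at hgt
    obtain ⟨η, hηd2⟩ : ∃ η : ℝ, η * 2 = b1 * X + b2 * Ylo - b1 * r := ⟨_, div_mul_cancel₀ _ two_ne_zero⟩
    have hηpos : 0 < η := by linarith only [hηd2, hgt]
    obtain ⟨c1, hc1def⟩ : ∃ c : ℝ, c = 1 + k2 + k3 := ⟨_, rfl⟩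
    have hc1pos : 0 < c1 := by rw [hc1def]; linarith only [hk2, hk3]
    obtain ⟨coef, hcoefdef⟩ : ∃ c : ℝ,
        c = (b1 + b2) * (k5 + k6 + k13) + 2 * c1 * Dbar / X := ⟨_, rfl⟩
    have hcoefpos : 0 < coef := by
      rw [hcoefdef]
      have h1 : 0 < (b1 + b2) * (k5 + k6 + k13) := mul_pos (by linarith only [hb1, hb2]) hs1
      have h2 : 0 < 2 * c1 * Dbar / X := div_pos (by positivity) hXpos
      linarith only [h1, h2]
    obtain ⟨ε, hεpos, hεX, hεbound⟩ : ∃ ε : ℝ, 0 < ε ∧ ε ≤ X / 2 ∧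
        ε * coef ≤ (k5 + k6 + k13) * η := by
      refine ⟨min (X / 2) ((k5 + k6 + k13) * η / (coef + 1)), ?_, min_le_left _ _, ?_⟩
      · exact lt_min (by linarith only [hXpos]) (div_pos (mul_pos hs1 hηpos) (by linarith only [hcoefpos]))
      · have h1 : min (X / 2) ((k5 + k6 + k13) * η / (coef + 1)) ≤ (k5 + k6 + k13) * η / (coef + 1) :=
          min_le_right _ _
      
        have h2 : (k5 + k6 + k13) * η / (coef + 1) * coef ≤ (k5 + k6 + k13) * η := by
          rw [div_mul_eq_mul_div, div_le_iff₀ (by linarith only [hcoefpos])]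
          linarith only [mul_pos hs1 hηpos]
        have h3 := mul_le_mul_of_nonneg_right h1 hcoefpos.le
        linarith only [h2, h3]
    -- pick a late time from the fluctuation lemma
    obtain ⟨T, hT⟩ := eventually_atTop.1
      ((((hEx0 ε hεpos).and (hEx1 ε hεpos)).and ((hEy0lo ε hεpos).and ev0)))
    obtain ⟨t, htT, hx0t, hφt⟩ := stmt19_fluct_sup x0
      (fun t => (k1 / (1 + b1 * x0 t + b2 * y0 t) - k5 - k6 - k13) * x0 t - k2 * x0 t + k3 * x1 t)
      X ε T hεpos hx0 (by
        have := hfrx0 (ε / 2) (by linarith only [hεpos])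
        exact this.mono (fun t ht => by linarith only [ht]))
    obtain ⟨⟨hx0lt, hx1le'⟩, hy0gt, ht0⟩ := hT t htT
    have hx0pos' : 0 < x0 t := px0 t ht0
    have hy0pos' : 0 < y0 t := py0 t ht0
    have hx0ge : X / 2 ≤ x0 t := by linarith only [hx0t, hεX]
    obtain ⟨D, hDdef⟩ : ∃ D : ℝ, D = 1 + b1 * x0 t + b2 * y0 t := ⟨_, rfl⟩
    have hDpos : 0 < D := by
      rw [hDdef]
      linarith only [mul_pos hb1 hx0pos', mul_pos hb2 hy0pos']
    have hDle : D ≤ Dbar := by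
      rw [hDdef, hDbardef]
      linarith only [mul_le_mul_of_nonneg_left (hx0le t ht0) hb1.le,
        mul_le_mul_of_nonneg_left (hy0le t ht0) hb2.le]
    have hφt' : -ε < (k1 / D - k5 - k6 - k13) * x0 t - k2 * x0 t + k3 * x1 t := by
      rw [hDdef]; exact hφt
    -- step 1 : lower bound for (k1/D - s1) * x0
    have hstep1 : -(c1 * ε) < (k1 / D - k5 - k6 - k13) * x0 t := by
      have h1 : k3 * x1 t ≤ k2 * X + k3 * ε := by
        have h := mul_le_mul_of_nonneg_left hx1le' hk3.le
        have he : k3 * (k2 * X / k3 + ε) = k2 * X + k3 * ε := by field_simp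
        linarith only [h, he]
      have h2 : k2 * (X - ε) < k2 * x0 t := mul_lt_mul_of_pos_left hx0t hk2
      have hc1e : c1 * ε = ε + k2 * ε + k3 * ε := by rw [hc1def]; ring
      linarith only [hφt', h1, h2, hc1e]
    -- step 2 : k1 > (s1 - 2 c1 ε / X) D
    have hstep2 : (k5 + k6 + k13) * D - 2 * c1 * ε / X * D < k1 := by
      have hε₃pos : 0 < 2 * c1 * ε / X := div_pos (by positivity) hXpos
      rcases le_or_gt (k5 + k6 + k13) (k1 / D) with hc | hc
      · have h1 : (k5 + k6 + k13) * D ≤ k1 := by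
          have := mul_le_mul_of_nonneg_right hc hDpos.le
          have he : k1 / D * D = k1 := div_mul_cancel₀ _ hDpos.ne'
          linarith only [this, he]
        linarith only [h1, mul_pos hε₃pos hDpos]
      · have hA : (k1 / D - k5 - k6 - k13) * x0 t ≤ (k1 / D - k5 - k6 - k13) * (X / 2) :=
          mul_le_mul_of_nonpos_left hx0ge (by linarith only [hc])
        have h3 : -(c1 * ε) < (k1 / D - k5 - k6 - k13) * (X / 2) := by
          linarith only [hstep1, hA]
        have h4 := mul_lt_mul_of_pos_right h3 (div_pos two_pos hXpos)
        have e1 : (k1 / D - k5 - k6 - k13) * (X / 2) * (2 / X) = k1 / D - k5 - k6 - k13 := by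
          field_simp
        have e2 : -(c1 * ε) * (2 / X) = -(2 * c1 * ε / X) := by ring
        have h5 : -(2 * c1 * ε / X) < k1 / D - k5 - k6 - k13 := by
          rw [← e1, ← e2]; exact h4
        have h6 := mul_lt_mul_of_pos_right h5 hDpos
        have e3 : (k1 / D - k5 - k6 - k13) * D = k1 - (k5 + k6 + k13) * D := by
          field_simp
          ring
        linarith only [h6, e3]
    -- step 3 : saturate with the limsup/liminf values
    have hstep3 : (k5 + k6 + k13) * (1 + b1 * (X - ε) + b2 * (Ylo - ε))
        < k1 + 2 * c1 * ε / X * Dbar := by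
      have hε₃pos : (0:ℝ) ≤ 2 * c1 * ε / X := (div_pos (by positivity) hXpos).le
      have h5 : 2 * c1 * ε / X * D ≤ 2 * c1 * ε / X * Dbar :=
        mul_le_mul_of_nonneg_left hDle hε₃pos
      have h7 : b1 * (X - ε) ≤ b1 * x0 t := mul_le_mul_of_nonneg_left hx0t.le hb1.le
      have h8 : b2 * (Ylo - ε) ≤ b2 * y0 t := mul_le_mul_of_nonneg_left (by linarith only [hy0gt]) hb2.le
      have h6 : (k5 + k6 + k13) * (1 + b1 * (X - ε) + b2 * (Ylo - ε)) ≤ (k5 + k6 + k13) * D := by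
        rw [hDdef]
        exact mul_le_mul_of_nonneg_left (by linarith only [h7, h8]) hs1.le
      linarith only [hstep2, h5, h6]
    -- final contradiction
    have hfin1 : 2 * c1 * ε / X * Dbar = ε * (2 * c1 * Dbar / X) := by ring
    have hfin2 : ε * coef = ε * ((b1 + b2) * (k5 + k6 + k13)) + ε * (2 * c1 * Dbar / X) := by
      rw [hcoefdef]; ring
    have hfin3 : 0 < (k5 + k6 + k13) * (b1 * X + b2 * Ylo - b1 * r) :=
      mul_pos hs1 (by linarith only [hgt])
    have hfin4 : (k5 + k6 + k13) * η * 2 = (k5 + k6 + k13) * (b1 * X + b2 * Ylo - b1 * r) := by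
      rw [← hηd2]; ring
    linarith only [hstep3, hk1r, hfin1, hfin2, hfin3, hfin4, hεbound]
  have hXler : X ≤ r := by
    rcases le_or_gt X 0 with h | h
    · linarith only [h, hrpos]
    · have hst := star h
      by_contra hcon
      push_neg at hcon
      have h1 := mul_lt_mul_of_pos_left hcon hb1
      have h2 : 0 ≤ b2 * Ylo := mul_nonneg hb2.le hYlo0
      linarith only [hst, h1, h2]
  -- the fraction y0/(y0+y1) has a persistent lower bound
  obtain ⟨Kq, hKqdef⟩ : ∃ K : ℝ, K = k21 + k22 + k29 + k18 + k19 := ⟨_, rfl⟩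
  have hKqpos : 0 < Kq := by rw [hKqdef]; linarith only [hs2, hk18, hk19]
  have hwpos : ∀ t ≥ (0:ℝ), 0 < y0 t + y1 t := fun t ht => by
    linarith only [py0 t ht, py1 t ht]
  have hqlow : ∀ᶠ t in atTop, k19 / Kq / 2 ≤ y0 t / (y0 t + y1 t) := by
    have hev := stmt19_evLower (fun s => y0 s / (y0 s + y1 s))
      (fun s => (((k17 / (1 + B * (x0 s + y0 s)) - k21 - k22 - k29) * y0 s - k18 * y0 s
          + k19 * y1 s) * (y0 s + y1 s)
        - y0 s * (((k17 / (1 + B * (x0 s + y0 s)) - k21 - k22 - k29) * y0 s - k18 * y0 s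
          + k19 * y1 s) + (k18 * y0 s - k19 * y1 s))) / (y0 s + y1 s) ^ 2)
      k19 Kq hKqpos
      (by
        filter_upwards [ev0] with t ht
        have hw := hwpos t ht
        constructor
        · exact (hy0 t ht).div ((hy0 t ht).add (hy1 t ht)) hw.ne'
        · have hy0p := py0 t ht
          have hy1p := py1 t ht
          have hx0p := px0 t ht
          have hD2pos : 0 < 1 + B * (x0 t + y0 t) := by
            linarith only [mul_pos hB (by linarith only [hx0p, hy0p] : 0 < x0 t + y0 t)]
          have hGpos : 0 < k17 / (1 + B * (x0 t + y0 t)) := div_pos hk17 hD2pos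
          rw [le_div_iff₀ (pow_pos hw 2)]
          have hkey : (k19 - Kq * (y0 t / (y0 t + y1 t))) * (y0 t + y1 t) ^ 2
              = k19 * (y0 t + y1 t) ^ 2 - Kq * (y0 t * (y0 t + y1 t)) := by
            field_simp
          rw [hkey]
          have hKqexp : Kq * (y0 t * (y0 t + y1 t))
              = (k21 + k22 + k29 + k18 + k19) * (y0 t * (y0 t + y1 t)) := by rw [hKqdef]
          have p1 : 0 ≤ k17 / (1 + B * (x0 t + y0 t)) * (y0 t * y1 t) :=
            mul_nonneg hGpos.le (mul_nonneg hy0p.le hy1p.le)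
          have p2 : 0 ≤ (k21 + k22 + k29) * (y0 t * y0 t) :=
            mul_nonneg hs2.le (mul_nonneg hy0p.le hy0p.le)
          linarith only [p1, p2, hKqexp])
      (k19 / Kq / 2) (by positivity)
    filter_upwards [hev] with t ht
    have : k19 / Kq - k19 / Kq / 2 = k19 / Kq / 2 := by ring
    linarith only [ht, this]
  -- persistence : liminf y0 > 0
  have hYlopos : 0 < Ylo := by
    obtain ⟨T', hT'⟩ := eventually_atTop.1
      ((hEx0 ((R - r) / 4) (by linarith only [hrR])).and (hqlow.and ev0))
    obtain ⟨T, hTge⟩ : ∃ T, T = max T' 0 := ⟨_, rfl⟩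
    have hT0 : (0:ℝ) ≤ T := by rw [hTge]; exact le_max_right _ _
    have hTfacts : ∀ t ≥ T, x0 t < X + (R - r) / 4 ∧ k19 / Kq / 2 ≤ y0 t / (y0 t + y1 t)
        ∧ (0:ℝ) ≤ t := by
      intro t ht
      have : t ≥ T' := le_trans (by rw [hTge]; exact le_max_left _ _) ht
      exact ⟨(hT' t this).1, (hT' t this).2.1, (hT' t this).2.2⟩
    have hθpos : 0 < (R - r) / 2 := by linarith only [hrR]
    have hpers := stmt19_persist (fun s => y0 s + y1 s)
      (fun s => ((k17 / (1 + B * (x0 s + y0 s)) - k21 - k22 - k29) * y0 s - k18 * y0 s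
          + k19 * y1 s) + (k18 * y0 s - k19 * y1 s)) T ((R - r) / 2) hT0 hθpos
      (fun s hs => (hy0 s (hT0.trans hs)).add (hy1 s (hT0.trans hs)))
      (by
        intro s hs hws
        have hs0 : (0:ℝ) ≤ s := hT0.trans hs
        have hy0p := py0 s hs0
        have hy1p := py1 s hs0
        have hx0p := px0 s hs0
        obtain ⟨hx0lt, _, _⟩ := hTfacts s hs
        have hxy : x0 s + y0 s < R := by
          have h1 : x0 s < r + (R - r) / 4 := by linarith only [hx0lt, hXler]
          have h2 : y0 s ≤ (R - r) / 2 := by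
            have : y0 s + y1 s ≤ (R - r) / 2 := hws
            linarith only [this, hy1p]
          linarith only [h1, h2, hrR]
        have hD2lt : 1 + B * (x0 s + y0 s) < 1 + B * R := by
          linarith only [mul_lt_mul_of_pos_left hxy hB]
        have hD2pos : 0 < 1 + B * (x0 s + y0 s) := by
          linarith only [mul_pos hB (by linarith only [hx0p, hy0p] : 0 < x0 s + y0 s)]
        have hBRpos : (0:ℝ) < 1 + B * R := by linarith only [mul_pos hB hRpos]
        have hGgt : k21 + k22 + k29 < k17 / (1 + B * (x0 s + y0 s)) := by
          have he : k17 / (1 + B * R) = k21 + k22 + k29 := by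
            rw [← hk17R]
            exact mul_div_cancel_right₀ _ hBRpos.ne'
          have := div_lt_div_of_pos_left hk17 hD2pos hD2lt
          linarith only [this, he]
        have he2 : ((k17 / (1 + B * (x0 s + y0 s)) - k21 - k22 - k29) * y0 s - k18 * y0 s
            + k19 * y1 s) + (k18 * y0 s - k19 * y1 s)
            = (k17 / (1 + B * (x0 s + y0 s)) - (k21 + k22 + k29)) * y0 s := by ring
        show 0 < ((k17 / (1 + B * (x0 s + y0 s)) - k21 - k22 - k29) * y0 s - k18 * y0 s
            + k19 * y1 s) + (k18 * y0 s - k19 * y1 s)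
        rw [he2]
        exact mul_pos (by linarith only [hGgt]) hy0p)
    have hwTpos : 0 < y0 T + y1 T := hwpos T hT0
    obtain ⟨mw, hmwdef⟩ : ∃ m : ℝ, m = min (y0 T + y1 T) ((R - r) / 2) := ⟨_, rfl⟩
    have hmwpos : 0 < mw := by rw [hmwdef]; exact lt_min hwTpos hθpos
    have hq0pos : 0 < k19 / Kq / 2 := by positivity
    have hylow : ∀ᶠ t in atTop, k19 / Kq / 2 * mw ≤ y0 t := by
      rw [eventually_atTop]
      refine ⟨T, fun t ht => ?_⟩
      have ht0 : (0:ℝ) ≤ t := hT0.trans ht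
      have hw := hwpos t ht0
      obtain ⟨_, hqt, _⟩ := hTfacts t ht
      have hwt : mw ≤ y0 t + y1 t := by
        have := hpers t ht
        rw [hmwdef]
        exact this
      have hid : y0 t / (y0 t + y1 t) * (y0 t + y1 t) = y0 t :=
        div_mul_cancel₀ _ hw.ne'
      have := mul_le_mul hqt hwt hmwpos.le (div_nonneg (py0 t ht0).le hw.le)
      rw [hid] at this
      exact this
    have : k19 / Kq / 2 * mw ≤ Ylo := by
      rw [hYlodef]
      exact le_liminf_of_le cobddgey0 hylow
    linarith only [this, mul_pos hq0pos hmwpos]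
  -- Claim : R ≤ X + Ylo
  have starY : R ≤ X + Ylo := by
    by_contra hgt
    push_neg at hgt
    obtain ⟨η, hηd2⟩ : ∃ η : ℝ, η * 2 = R - X - Ylo := ⟨_, div_mul_cancel₀ _ two_ne_zero⟩
    have hηpos : 0 < η := by linarith only [hηd2, hgt]
    obtain ⟨c2, hc2def⟩ : ∃ c : ℝ, c = 1 + k18 + k19 := ⟨_, rfl⟩
    have hc2pos : 0 < c2 := by rw [hc2def]; linarith only [hk18, hk19]
    obtain ⟨coef, hcoefdef⟩ : ∃ c : ℝ,
        c = 2 * (k21 + k22 + k29) * B + 2 * c2 * Dbar2 / Ylo := ⟨_, rfl⟩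
    have hcoefpos : 0 < coef := by
      rw [hcoefdef]
      have h1 : 0 < 2 * (k21 + k22 + k29) * B := by positivity
      have h2 : 0 < 2 * c2 * Dbar2 / Ylo := div_pos (by positivity) hYlopos
      linarith only [h1, h2]
    obtain ⟨ε, hεpos, hεY, hεbound⟩ : ∃ ε : ℝ, 0 < ε ∧ ε ≤ Ylo / 2 ∧
        ε * coef ≤ (k21 + k22 + k29) * B * η := by
      refine ⟨min (Ylo / 2) ((k21 + k22 + k29) * B * η / (coef + 1)), ?_, min_le_left _ _, ?_⟩
      · exact lt_min (by linarith only [hYlopos])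
          (div_pos (by positivity) (by linarith only [hcoefpos]))
      · have h1 : min (Ylo / 2) ((k21 + k22 + k29) * B * η / (coef + 1))
            ≤ (k21 + k22 + k29) * B * η / (coef + 1) := min_le_right _ _
        have h2 : (k21 + k22 + k29) * B * η / (coef + 1) * coef ≤ (k21 + k22 + k29) * B * η := by
          rw [div_mul_eq_mul_div, div_le_iff₀ (by linarith only [hcoefpos])]
          linarith only [mul_pos (mul_pos (mul_pos hs2 hB) hηpos) hcoefpos,
            mul_pos (mul_pos hs2 hB) hηpos]
        have h3 := mul_le_mul_of_nonneg_right h1 hcoefpos.le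
        linarith only [h2, h3]
    obtain ⟨T, hT⟩ := eventually_atTop.1
      (((hEy1lo ε hεpos).and (hEy0lo ε hεpos)).and ((hEx0 ε hεpos).and ev0))
    obtain ⟨t, htT, hy0t, hφt⟩ := stmt19_fluct_inf y0
      (fun t => (k17 / (1 + B * (x0 t + y0 t)) - k21 - k22 - k29) * y0 t - k18 * y0 t + k19 * y1 t)
      Ylo ε T hεpos hy0 (by
        have := hfry0lo (ε / 2) (by linarith only [hεpos])
        exact this.mono (fun t ht => by linarith only [ht]))
    obtain ⟨⟨hy1ge, hy0gt⟩, hx0lt, ht0⟩ := hT t htT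
    have hy0pos' : 0 < y0 t := py0 t ht0
    have hx0pos' : 0 < x0 t := px0 t ht0
    have hy0ge : Ylo / 2 ≤ y0 t := by linarith only [hy0gt, hεY]
    obtain ⟨D, hDdef⟩ : ∃ D : ℝ, D = 1 + B * (x0 t + y0 t) := ⟨_, rfl⟩
    have hDpos : 0 < D := by
      rw [hDdef]
      linarith only [mul_pos hB (by linarith only [hx0pos', hy0pos'] : 0 < x0 t + y0 t)]
    have hDle : D ≤ Dbar2 := by
      rw [hDdef, hDbar2def]
      have := mul_le_mul_of_nonneg_left
        (by linarith only [hx0le t ht0, hy0le t ht0] : x0 t + y0 t ≤ Mx + My) hB.le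
      linarith only [this]
    have hφt' : (k17 / D - k21 - k22 - k29) * y0 t - k18 * y0 t + k19 * y1 t < ε := by
      rw [hDdef]; exact hφt
    -- step 1 : upper bound for (k17/D - s2) * y0
    have hstep1 : (k17 / D - k21 - k22 - k29) * y0 t < c2 * ε := by
      have he : k19 * (k18 * Ylo / k19 - ε) = k18 * Ylo - k19 * ε := by field_simp
      have h1 : k18 * Ylo - k19 * ε ≤ k19 * y1 t := by
        have := mul_le_mul_of_nonneg_left hy1ge hk19.le
        linarith only [this, he]
      have h2 : k18 * y0 t < k18 * (Ylo + ε) := mul_lt_mul_of_pos_left hy0t hk18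
      have hc2e : c2 * ε = ε + k18 * ε + k19 * ε := by rw [hc2def]; ring
      linarith only [hφt', h1, h2, hc2e]
    -- step 2 : k17 < (s2 + 2 c2 ε / Ylo) D
    have hstep2 : k17 < (k21 + k22 + k29) * D + 2 * c2 * ε / Ylo * D := by
      have hε₄pos : 0 < 2 * c2 * ε / Ylo := div_pos (by positivity) hYlopos
      rcases le_or_gt (k17 / D) (k21 + k22 + k29) with hc | hc
      · have h1 : k17 ≤ (k21 + k22 + k29) * D := by
          have := mul_le_mul_of_nonneg_right hc hDpos.le
          have he : k17 / D * D = k17 := div_mul_cancel₀ _ hDpos.ne'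
          linarith only [this, he]
        linarith only [h1, mul_pos hε₄pos hDpos]
      · have hA : (k17 / D - k21 - k22 - k29) * (Ylo / 2) ≤ (k17 / D - k21 - k22 - k29) * y0 t :=
          mul_le_mul_of_nonneg_left hy0ge (by linarith only [hc])
        have h3 : (k17 / D - k21 - k22 - k29) * (Ylo / 2) < c2 * ε := by
          linarith only [hstep1, hA]
        have h4 := mul_lt_mul_of_pos_right h3 (div_pos two_pos hYlopos)
        have e1 : (k17 / D - k21 - k22 - k29) * (Ylo / 2) * (2 / Ylo)
            = k17 / D - k21 - k22 - k29 := by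
          field_simp
        have e2 : c2 * ε * (2 / Ylo) = 2 * c2 * ε / Ylo := by ring
        have h5 : k17 / D - k21 - k22 - k29 < 2 * c2 * ε / Ylo := by
          rw [← e1, ← e2]; exact h4
        have h6 := mul_lt_mul_of_pos_right h5 hDpos
        have e3 : (k17 / D - k21 - k22 - k29) * D = k17 - (k21 + k22 + k29) * D := by
          field_simp
          ring
        linarith only [h6, e3]
    -- step 3 : saturate
    have hstep3 : (k21 + k22 + k29) * (1 + B * R)
        < (k21 + k22 + k29) * (1 + B * (X + Ylo + 2 * ε)) + 2 * c2 * ε / Ylo * Dbar2 := by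
      have hε₄pos : (0:ℝ) ≤ 2 * c2 * ε / Ylo := (div_pos (by positivity) hYlopos).le
      have h5 : 2 * c2 * ε / Ylo * D ≤ 2 * c2 * ε / Ylo * Dbar2 :=
        mul_le_mul_of_nonneg_left hDle hε₄pos
      have h7 : x0 t + y0 t < X + Ylo + 2 * ε := by linarith only [hx0lt, hy0t]
      have h6 : (k21 + k22 + k29) * D ≤ (k21 + k22 + k29) * (1 + B * (X + Ylo + 2 * ε)) := by
        rw [hDdef]
        exact mul_le_mul_of_nonneg_left
          (by linarith only [mul_le_mul_of_nonneg_left h7.le hB.le]) hs2.le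
      linarith only [hstep2, hk17R, h5, h6]
    -- final contradiction
    have hfin2 : ε * coef = ε * (2 * (k21 + k22 + k29) * B) + ε * (2 * c2 * Dbar2 / Ylo) := by
      rw [hcoefdef]; ring
    have hfin3 : 0 < (k21 + k22 + k29) * B * (R - X - Ylo) :=
      mul_pos (mul_pos hs2 hB) (by linarith only [hgt])
    have hfin4 : (k21 + k22 + k29) * B * η * 2 = (k21 + k22 + k29) * B * (R - X - Ylo) := by
      rw [← hηd2]; ring
    have hfin5 : 2 * c2 * ε / Ylo * Dbar2 = ε * (2 * c2 * Dbar2 / Ylo) := by ring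
    linarith only [hstep3, hfin2, hfin3, hfin4, hfin5, hεbound]
  -- Conclusion : X = 0
  have hXzero : X = 0 := by
    rcases lt_or_eq_of_le hX0 with h | h
    · exfalso
      have h1 := star h
      have h2 : b2 * (R - X) ≤ b2 * Ylo :=
        mul_le_mul_of_nonneg_left (by linarith only [starY]) hb2.le
      have h3 : 0 < (b1 - b2) * X := mul_pos (by linarith only [hbb]) h
      linarith only [h1, h2, h3, hcase2]
    · exact h.symm
  have hYsuppos : 0 < Ysup := lt_of_lt_of_le hYlopos hYloYsup
  -- Claim : Ysup ≤ R
  have hsupY : Ysup ≤ R := by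
    by_contra hgt
    push_neg at hgt
    obtain ⟨η, hηd2⟩ : ∃ η : ℝ, η * 2 = Ysup - R := ⟨_, div_mul_cancel₀ _ two_ne_zero⟩
    have hηpos : 0 < η := by linarith only [hηd2, hgt]
    obtain ⟨c2, hc2def⟩ : ∃ c : ℝ, c = 1 + k18 + k19 := ⟨_, rfl⟩
    have hc2pos : 0 < c2 := by rw [hc2def]; linarith only [hk18, hk19]
    obtain ⟨coef, hcoefdef⟩ : ∃ c : ℝ,
        c = (k21 + k22 + k29) * B + 2 * c2 * Dbar2 / Ysup := ⟨_, rfl⟩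
    have hcoefpos : 0 < coef := by
      rw [hcoefdef]
      have h1 : 0 < (k21 + k22 + k29) * B := by positivity
      have h2 : 0 < 2 * c2 * Dbar2 / Ysup := div_pos (by positivity) hYsuppos
      linarith only [h1, h2]
    obtain ⟨ε, hεpos, hεY, hεbound⟩ : ∃ ε : ℝ, 0 < ε ∧ ε ≤ Ysup / 2 ∧
        ε * coef ≤ (k21 + k22 + k29) * B * η := by
      refine ⟨min (Ysup / 2) ((k21 + k22 + k29) * B * η / (coef + 1)), ?_, min_le_left _ _, ?_⟩
      · exact lt_min (by linarith only [hYsuppos])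
          (div_pos (by positivity) (by linarith only [hcoefpos]))
      · have h1 : min (Ysup / 2) ((k21 + k22 + k29) * B * η / (coef + 1))
            ≤ (k21 + k22 + k29) * B * η / (coef + 1) := min_le_right _ _
        have h2 : (k21 + k22 + k29) * B * η / (coef + 1) * coef ≤ (k21 + k22 + k29) * B * η := by
          rw [div_mul_eq_mul_div, div_le_iff₀ (by linarith only [hcoefpos])]
          linarith only [mul_pos (mul_pos (mul_pos hs2 hB) hηpos) hcoefpos,
            mul_pos (mul_pos hs2 hB) hηpos]
        have h3 := mul_le_mul_of_nonneg_right h1 hcoefpos.le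
        linarith only [h2, h3]
    obtain ⟨T, hT⟩ := eventually_atTop.1
      (((hEy1up ε hεpos).and (hEy0up ε hεpos)).and ev0)
    obtain ⟨t, htT, hy0t, hφt⟩ := stmt19_fluct_sup y0
      (fun t => (k17 / (1 + B * (x0 t + y0 t)) - k21 - k22 - k29) * y0 t - k18 * y0 t + k19 * y1 t)
      Ysup ε T hεpos hy0 (by
        have := hfry0up (ε / 2) (by linarith only [hεpos])
        exact this.mono (fun t ht => by linarith only [ht]))
    obtain ⟨⟨hy1le', hy0lt⟩, ht0⟩ := hT t htT
    have hy0pos' : 0 < y0 t := py0 t ht0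
    have hx0pos' : 0 < x0 t := px0 t ht0
    have hy0ge : Ysup / 2 ≤ y0 t := by linarith only [hy0t, hεY]
    obtain ⟨D, hDdef⟩ : ∃ D : ℝ, D = 1 + B * (x0 t + y0 t) := ⟨_, rfl⟩
    have hDpos : 0 < D := by
      rw [hDdef]
      linarith only [mul_pos hB (by linarith only [hx0pos', hy0pos'] : 0 < x0 t + y0 t)]
    have hDle : D ≤ Dbar2 := by
      rw [hDdef, hDbar2def]
      have := mul_le_mul_of_nonneg_left
        (by linarith only [hx0le t ht0, hy0le t ht0] : x0 t + y0 t ≤ Mx + My) hB.le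
      linarith only [this]
    have hφt' : -ε < (k17 / D - k21 - k22 - k29) * y0 t - k18 * y0 t + k19 * y1 t := by
      rw [hDdef]; exact hφt
    -- step 1
    have hstep1 : -(c2 * ε) < (k17 / D - k21 - k22 - k29) * y0 t := by
      have he : k19 * (k18 * Ysup / k19 + ε) = k18 * Ysup + k19 * ε := by field_simp
      have h1 : k19 * y1 t ≤ k18 * Ysup + k19 * ε := by
        have := mul_le_mul_of_nonneg_left hy1le' hk19.le
        linarith only [this, he]
      have h2 : k18 * (Ysup - ε) < k18 * y0 t := mul_lt_mul_of_pos_left hy0t hk18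
      have hc2e : c2 * ε = ε + k18 * ε + k19 * ε := by rw [hc2def]; ring
      linarith only [hφt', h1, h2, hc2e]
    -- step 2
    have hstep2 : (k21 + k22 + k29) * D - 2 * c2 * ε / Ysup * D < k17 := by
      have hε₅pos : 0 < 2 * c2 * ε / Ysup := div_pos (by positivity) hYsuppos
      rcases le_or_gt (k21 + k22 + k29) (k17 / D) with hc | hc
      · have h1 : (k21 + k22 + k29) * D ≤ k17 := by
          have := mul_le_mul_of_nonneg_right hc hDpos.le
          have he : k17 / D * D = k17 := div_mul_cancel₀ _ hDpos.ne'
          linarith only [this, he]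
        linarith only [h1, mul_pos hε₅pos hDpos]
      · have hA : (k17 / D - k21 - k22 - k29) * y0 t ≤ (k17 / D - k21 - k22 - k29) * (Ysup / 2) :=
          mul_le_mul_of_nonpos_left hy0ge (by linarith only [hc])
        have h3 : -(c2 * ε) < (k17 / D - k21 - k22 - k29) * (Ysup / 2) := by
          linarith only [hstep1, hA]
        have h4 := mul_lt_mul_of_pos_right h3 (div_pos two_pos hYsuppos)
        have e1 : (k17 / D - k21 - k22 - k29) * (Ysup / 2) * (2 / Ysup)
            = k17 / D - k21 - k22 - k29 := by
          field_simp
        have e2 : -(c2 * ε) * (2 / Ysup) = -(2 * c2 * ε / Ysup) := by ring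
        have h5 : -(2 * c2 * ε / Ysup) < k17 / D - k21 - k22 - k29 := by
          rw [← e1, ← e2]; exact h4
        have h6 := mul_lt_mul_of_pos_right h5 hDpos
        have e3 : (k17 / D - k21 - k22 - k29) * D = k17 - (k21 + k22 + k29) * D := by
          field_simp
          ring
        linarith only [h6, e3]
    -- step 3
    have hstep3 : (k21 + k22 + k29) * (1 + B * (Ysup - ε))
        < k17 + 2 * c2 * ε / Ysup * Dbar2 := by
      have hε₅pos : (0:ℝ) ≤ 2 * c2 * ε / Ysup := (div_pos (by positivity) hYsuppos).le
      have h5 : 2 * c2 * ε / Ysup * D ≤ 2 * c2 * ε / Ysup * Dbar2 :=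
        mul_le_mul_of_nonneg_left hDle hε₅pos
      have h7 : Ysup - ε < x0 t + y0 t := by linarith only [hy0t, hx0pos']
      have h6 : (k21 + k22 + k29) * (1 + B * (Ysup - ε)) ≤ (k21 + k22 + k29) * D := by
        rw [hDdef]
        exact mul_le_mul_of_nonneg_left
          (by linarith only [mul_le_mul_of_nonneg_left h7.le hB.le]) hs2.le
      linarith only [hstep2, h5, h6]
    -- final contradiction
    have hfin2 : ε * coef = ε * ((k21 + k22 + k29) * B) + ε * (2 * c2 * Dbar2 / Ysup) := by
      rw [hcoefdef]; ring
    have hfin3 : 0 < (k21 + k22 + k29) * B * (Ysup - R) :=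
      mul_pos (mul_pos hs2 hB) (by linarith only [hgt])
    have hfin4 : (k21 + k22 + k29) * B * η * 2 = (k21 + k22 + k29) * B * (Ysup - R) := by
      rw [← hηd2]; ring
    have hfin5 : 2 * c2 * ε / Ysup * Dbar2 = ε * (2 * c2 * Dbar2 / Ysup) := by ring
    linarith only [hstep3, hk17R, hfin2, hfin3, hfin4, hfin5, hεbound]
  have hYloR : R ≤ Ylo := by linarith only [starY, hXzero]
  -- limits of the core variables
  have htx0 : Tendsto x0 atTop (𝓝 0) := by
    rw [tendsto_order]
    constructor
    · intro a ha
      filter_upwards [evx0pos] with t ht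
      linarith only [ha, ht]
    · intro a ha
      have : limsup x0 atTop < a := by rw [← hXdef, hXzero]; exact ha
      exact eventually_lt_of_limsup_lt this bddx0
  have hty0 : Tendsto y0 atTop (𝓝 R) := by
    rw [tendsto_order]
    constructor
    · intro a ha
      have : a < liminf y0 atTop := by rw [← hYlodef]; linarith only [ha, hYloR]
      exact eventually_lt_of_lt_liminf this bddgey0
    · intro a ha
      have : limsup y0 atTop < a := by rw [← hYsupdef]; linarith only [ha, hsupY]
      exact eventually_lt_of_limsup_lt this bddy0
  -- cascades
  have htx1 : Tendsto x1 atTop (𝓝 0) := by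
    have := stmt19_cascade x0 x1 k2 k3 0 hk2 hk3 hx1 htx0
    simpa using this
  have htx2 : Tendsto x2 atTop (𝓝 0) := by
    have hd2 : ∀ t ≥ (0:ℝ), HasDerivAt x2
        ((k4 + k5 + 2 * k6) * x0 t - (k9 + k10 + k14 - k7) * x2 t) t := by
      intro t ht
      have h := hx2 t ht
      convert h using 1
      ring
    have := stmt19_cascade x0 x2 (k4 + k5 + 2 * k6) (k9 + k10 + k14 - k7) 0
      (by linarith only [hk4, hk5, hk6]) (by linarith only [hg3]) hd2 htx0
    simpa using this
  have htx3 : Tendsto x3 atTop (𝓝 0) := by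
    have := stmt19_cascade x2 x3 (k8 + k9 + 2 * k10) (k11 + k12 + k15) 0
      (by linarith only [hk8, hk9, hk10]) (by linarith only [hk11, hk12, hk15]) hx3 htx2
    simpa using this
  have htx4 : Tendsto x4 atTop (𝓝 0) := by
    have := stmt19_cascade x3 x4 (k11 + 2 * k12) k16 0
      (by linarith only [hk11, hk12]) hk16 hx4 htx3
    simpa using this
  have hty1 : Tendsto y1 atTop (𝓝 (R * k18 / k19)) := by
    have h := stmt19_cascade y0 y1 k18 k19 R hk18 hk19 hy1 hty0
    have he : k18 * R / k19 = R * k18 / k19 := by ring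
    rwa [he] at h
  have hd25 : (0:ℝ) < k25 + k26 + k30 - k23 := by linarith only [hg4]
  have hd27 : (0:ℝ) < k27 + k28 + k31 := by linarith only [hk27, hk28, hk31]
  have hty2 : Tendsto y2 atTop
      (𝓝 (R * ((k20 + k21 + 2 * k22) / (k25 + k26 + k30 - k23)))) := by
    have hd2 : ∀ t ≥ (0:ℝ), HasDerivAt y2
        ((k20 + k21 + 2 * k22) * y0 t - (k25 + k26 + k30 - k23) * y2 t) t := by
      intro t ht
      have h := hy2 t ht
      convert h using 1
      ring
    have h := stmt19_cascade y0 y2 (k20 + k21 + 2 * k22) (k25 + k26 + k30 - k23) R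
      (by linarith only [hk20, hk21, hk22]) hd25 hd2 hty0
    have he : (k20 + k21 + 2 * k22) * R / (k25 + k26 + k30 - k23)
        = R * ((k20 + k21 + 2 * k22) / (k25 + k26 + k30 - k23)) := by ring
    rwa [he] at h
  have hty3 : Tendsto y3 atTop
      (𝓝 (R * (((k20 + k21 + 2 * k22) * (k24 + k25 + 2 * k26))
        / ((k25 + k26 + k30 - k23) * (k27 + k28 + k31))))) := by
    have h := stmt19_cascade y2 y3 (k24 + k25 + 2 * k26) (k27 + k28 + k31)
      (R * ((k20 + k21 + 2 * k22) / (k25 + k26 + k30 - k23)))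
      (by linarith only [hk24, hk25, hk26]) hd27 hy3 hty2
    have he : (k24 + k25 + 2 * k26) * (R * ((k20 + k21 + 2 * k22) / (k25 + k26 + k30 - k23)))
        / (k27 + k28 + k31)
        = R * (((k20 + k21 + 2 * k22) * (k24 + k25 + 2 * k26))
          / ((k25 + k26 + k30 - k23) * (k27 + k28 + k31))) := by
      field_simp
    rwa [he] at h
  have hty4 : Tendsto y4 atTop
      (𝓝 (R * (((k20 + k21 + 2 * k22) * (k24 + k25 + 2 * k26) * (k27 + 2 * k28))
        / ((k25 + k26 + k30 - k23) * (k27 + k28 + k31) * k32)))) := by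
    have h := stmt19_cascade y3 y4 (k27 + 2 * k28) k32
      (R * (((k20 + k21 + 2 * k22) * (k24 + k25 + 2 * k26))
        / ((k25 + k26 + k30 - k23) * (k27 + k28 + k31))))
      (by linarith only [hk27, hk28]) hk32 hy4 hty3
    have he : (k27 + 2 * k28) * (R * (((k20 + k21 + 2 * k22) * (k24 + k25 + 2 * k26))
        / ((k25 + k26 + k30 - k23) * (k27 + k28 + k31)))) / k32
        = R * (((k20 + k21 + 2 * k22) * (k24 + k25 + 2 * k26) * (k27 + 2 * k28))
          / ((k25 + k26 + k30 - k23) * (k27 + k28 + k31) * k32)) := by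
      field_simp
    rwa [he] at h
  exact ⟨htx0, htx1, htx2, htx3, htx4, hty0, hty1, hty2, hty3, hty4⟩
end
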